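/- arXiv:2511.01452 — 9 statements merged into one kernel-verified Lean document; each statement's English description precedes it below -/
import Mathlib

section
/- Every row-stochastic matrix on a finite nonempty set that has exactly one recurrent communicating class admits exactly one stationary distribution. -/
open Finset

variable {S : Type*}

/-- A row-stochastic matrix: nonnegative entries, each row sums to `1`. -/
def RowStochastic [Fintype S] (P : Matrix S S ℝ) : Prop :=
  (∀ s s', 0 ≤ P s s') ∧ ∀ s, ∑ s', P s s' = 1

/-- State `s` leads to `s'` if `(P ^ k) s s' > 0` for some `k ≥ 0`. -/
def Leads [Fintype S] [DecidableEq S] (P : Matrix S S ℝ) (s s' : S) : Prop :=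
  ∃ k : ℕ, 0 < (P ^ k) s s'

/-- A state is recurrent if every state it leads to leads back to it. -/
def Recurrent [Fintype S] [DecidableEq S] (P : Matrix S S ℝ) (s : S) : Prop :=
  ∀ s', Leads P s s' → Leads P s' s

/-- `P` has exactly one recurrent communicating class: the set of recurrent states is nonempty
and every two recurrent states lead to each other. -/
def UniqueRecurrentClass [Fintype S] [DecidableEq S] (P : Matrix S S ℝ) : Prop :=
  (∃ s, Recurrent P s) ∧ ∀ s s', Recurrent P s → Recurrent P s' → Leads P s s'

/-- A stationary distribution of `P`. -/
def StationaryDist [Fintype S] (P : Matrix S S ℝ) (η : S → ℝ) : Prop :=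
  (∀ s, 0 ≤ η s) ∧ (∑ s, η s = 1) ∧ ∀ s', ∑ s, η s * P s s' = η s'

section basic
variable [Fintype S] [DecidableEq S] {P : Matrix S S ℝ} (hP : RowStochastic P)
include hP

lemma pow_entry_nonneg (k : ℕ) (s s' : S) : 0 ≤ (P ^ k) s s' := by
  induction k generalizing s s' with
  | zero => simp [Matrix.one_apply]; positivity
  | succ k ih =>
    rw [pow_succ, Matrix.mul_apply]
    exact Finset.sum_nonneg fun x _ => mul_nonneg (ih s x) (hP.1 x s')

lemma pow_row_sum (k : ℕ) (s : S) : ∑ s', (P ^ k) s s' = 1 := by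
  induction k generalizing s with
  | zero => simp [Matrix.one_apply]
  | succ k ih =>
    simp only [pow_succ, Matrix.mul_apply]
    rw [Finset.sum_comm]
    calc ∑ x, ∑ s', (P ^ k) s x * P x s' = ∑ x, (P ^ k) s x := by
          refine Finset.sum_congr rfl fun x _ => ?_
          rw [← Finset.mul_sum, hP.2 x, mul_one]
      _ = 1 := ih s

lemma pow_entry_le_one (k : ℕ) (s s' : S) : (P ^ k) s s' ≤ 1 := by
  calc (P ^ k) s s' ≤ ∑ x, (P ^ k) s x :=
        Finset.single_le_sum (fun x _ => pow_entry_nonneg hP k s x) (Finset.mem_univ s')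
    _ = 1 := pow_row_sum hP k s

omit hP in
lemma leads_refl (s : S) : Leads P s s := ⟨0, by simp [Matrix.one_apply]⟩

lemma leads_trans {a b c : S} (h1 : Leads P a b) (h2 : Leads P b c) : Leads P a c := by
  obtain ⟨k, hk⟩ := h1
  obtain ⟨l, hl⟩ := h2
  refine ⟨k + l, lt_of_lt_of_le (mul_pos hk hl) ?_⟩
  rw [pow_add, Matrix.mul_apply]
  exact Finset.single_le_sum
    (fun x _ => mul_nonneg (pow_entry_nonneg hP k a x) (pow_entry_nonneg hP l x c))
    (Finset.mem_univ b)

/-- every state leads to a recurrent state -/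
lemma exists_recurrent_leads (s : S) : ∃ r, Recurrent P r ∧ Leads P s r := by
  classical
  let R : S → Finset S := fun x => Finset.univ.filter fun y => Leads P x y
  have hmem : ∀ x y, y ∈ R x ↔ Leads P x y := by
    intro x y; simp [R]
  obtain ⟨r, hr, hmin⟩ := (R s).exists_min_image (fun x => (R x).card)
    ⟨s, (hmem s s).2 (leads_refl s)⟩
  rw [hmem] at hr
  refine ⟨r, ?_, hr⟩
  intro y hy
  have hsub : R y ⊆ R r := fun z hz => (hmem r z).2 (leads_trans hP hy ((hmem y z).1 hz))
  have hcard : (R r).card ≤ (R y).card := hmin y ((hmem s y).2 (leads_trans hP hr hy))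
  have : R y = R r := Finset.eq_of_subset_of_card_le hsub hcard
  rw [← hmem, this, hmem]
  exact leads_refl r

end basic

section stat
variable [Fintype S] [DecidableEq S] {P : Matrix S S ℝ} (hP : RowStochastic P)

/-- weak stationarity (no normalization): left fixed vector, nonneg -/
lemma stat_pow {η : S → ℝ} (hη : ∀ s', ∑ s, η s * P s s' = η s') (k : ℕ) (s' : S) :
    ∑ s, η s * (P ^ k) s s' = η s' := by
  induction k generalizing s' with
  | zero => simp [Matrix.one_apply]
  | succ k ih =>
    simp only [pow_succ, Matrix.mul_apply, Finset.mul_sum]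
    rw [Finset.sum_comm]
    calc ∑ x, ∑ s, η s * ((P ^ k) s x * P x s')
        = ∑ x, (∑ s, η s * (P ^ k) s x) * P x s' := by
          refine Finset.sum_congr rfl fun x _ => ?_
          rw [Finset.sum_mul]; exact Finset.sum_congr rfl fun s _ => (mul_assoc _ _ _).symm
      _ = ∑ x, η x * P x s' := by
          refine Finset.sum_congr rfl fun x _ => ?_; rw [ih x]
      _ = η s' := hη s'

include hP in
/-- support of a nonneg left-fixed vector is closed under Leads -/
lemma support_closed {η : S → ℝ} (hnn : ∀ s, 0 ≤ η s)
    (hη : ∀ s', ∑ s, η s * P s s' = η s') {a b : S} (ha : 0 < η a) (hab : Leads P a b) :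
    0 < η b := by
  obtain ⟨k, hk⟩ := hab
  have := stat_pow hη k b
  calc (0:ℝ) < η a * (P ^ k) a b := mul_pos ha hk
    _ ≤ ∑ s, η s * (P ^ k) s b := Finset.single_le_sum
        (fun x _ => mul_nonneg (hnn x) (pow_entry_nonneg hP k x b)) (Finset.mem_univ a)
    _ = η b := this

end stat

section exist
variable [Fintype S] [DecidableEq S] [Nonempty S] {P : Matrix S S ℝ} (hP : RowStochastic P)

include hP in
lemma exists_stationary : ∃ η : S → ℝ, StationaryDist P η := by
  classical
  obtain ⟨s₀⟩ := ‹Nonempty S›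
  set A : ℕ → S → ℝ := fun n s' => (∑ k ∈ Finset.range n, (P ^ k) s₀ s') / n with hA
  have hAnn : ∀ n s', 0 ≤ A n s' := fun n s' =>
    div_nonneg (Finset.sum_nonneg fun k _ => pow_entry_nonneg hP k s₀ s') (Nat.cast_nonneg n)
  have hAle : ∀ n s', A n s' ≤ 1 := by
    intro n s'
    rcases Nat.eq_zero_or_pos n with h | h
    · simp [hA, h]
    · rw [div_le_one (by exact_mod_cast h)]
      calc ∑ k ∈ Finset.range n, (P ^ k) s₀ s' ≤ ∑ k ∈ Finset.range n, 1 :=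
            Finset.sum_le_sum fun k _ => pow_entry_le_one hP k s₀ s'
        _ = n := by simp
  have hAsum : ∀ n : ℕ, 1 ≤ n → ∑ s', A n s' = 1 := by
    intro n hn
    simp only [hA]
    rw [← Finset.sum_div, Finset.sum_comm]
    rw [Finset.sum_congr rfl fun k _ => pow_row_sum hP k s₀]
    simp
    omega
  -- key identity
  have hkey : ∀ n : ℕ, ∀ s', ∑ s, A n s * P s s' =
      A n s' + ((P ^ n) s₀ s' - (P ^ 0) s₀ s') / n := by
    intro n s'
    have h1 : ∀ s, A n s * P s s' = (∑ k ∈ Finset.range n, (P ^ k) s₀ s * P s s') / n := by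
      intro s; rw [hA]; rw [div_mul_eq_mul_div, Finset.sum_mul]
    simp only [h1]
    rw [← Finset.sum_div, Finset.sum_comm]
    have h2 : ∀ k, ∑ s, (P ^ k) s₀ s * P s s' = (P ^ (k+1)) s₀ s' := by
      intro k; rw [pow_succ, Matrix.mul_apply]
    rw [Finset.sum_congr rfl fun k _ => h2 k]
    have h3 : ∑ k ∈ Finset.range n, (P ^ (k+1)) s₀ s'
        = ∑ k ∈ Finset.range n, (P ^ k) s₀ s' + ((P ^ n) s₀ s' - (P ^ 0) s₀ s') := by
      have := Finset.sum_range_succ' (fun k => (P ^ k) s₀ s') n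
      have h4 := Finset.sum_range_succ (fun k => (P ^ k) s₀ s') n
      linarith [this, h4]
    rw [h3, add_div, hA]
  -- subsequence limit
  have hball : ∀ n, A n ∈ Metric.closedBall (0 : S → ℝ) 1 := by
    intro n
    rw [Metric.mem_closedBall, dist_zero_right]
    rw [pi_norm_le_iff_of_nonneg zero_le_one]
    intro s; rw [Real.norm_eq_abs, abs_le]
    exact ⟨le_trans (by norm_num) (hAnn n s), hAle n s⟩
  obtain ⟨η, -, φ, hφ, hlim⟩ := tendsto_subseq_of_bounded Metric.isBounded_closedBall hball
  have hlimc : ∀ s, Filter.Tendsto (fun n => A (φ n) s) Filter.atTop (nhds (η s)) := by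
    intro s
    exact (tendsto_pi_nhds.mp hlim) s
  have hφge : ∀ n, n ≤ φ n := fun n => hφ.le_apply
  refine ⟨η, fun s => ge_of_tendsto (hlimc s) (Filter.Eventually.of_forall fun n => hAnn _ s), ?_, ?_⟩
  · have hs : Filter.Tendsto (fun n => ∑ s, A (φ n) s) Filter.atTop (nhds (∑ s, η s)) :=
      tendsto_finset_sum _ fun s _ => hlimc s
    have hs1 : Filter.Tendsto (fun n : ℕ => ∑ s, A (φ n) s) Filter.atTop (nhds 1) := by
      refine Filter.Tendsto.congr' ?_ tendsto_const_nhds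
      filter_upwards [Filter.eventually_ge_atTop 1] with n hn
      exact (hAsum (φ n) (le_trans hn (hφge n))).symm
    exact tendsto_nhds_unique hs hs1
  · intro s'
    have hL : Filter.Tendsto (fun n => ∑ s, A (φ n) s * P s s') Filter.atTop
        (nhds (∑ s, η s * P s s')) :=
      tendsto_finset_sum _ fun s _ => (hlimc s).mul_const _
    have herr : Filter.Tendsto
        (fun n => ((P ^ (φ n)) s₀ s' - (P ^ 0) s₀ s') / (φ n : ℝ)) Filter.atTop (nhds 0) := by
      have hden : Filter.Tendsto (fun n => ((φ n : ℝ))) Filter.atTop Filter.atTop :=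
        tendsto_natCast_atTop_atTop.comp hφ.tendsto_atTop
      refine squeeze_zero_norm' ?_ (Filter.Tendsto.div_atTop tendsto_const_nhds hden (f := fun _ => (2:ℝ)))
      filter_upwards [Filter.eventually_ge_atTop 1] with n hn
      have hφn : (1:ℝ) ≤ (φ n : ℝ) := by exact_mod_cast le_trans hn (hφge n)
      rw [Real.norm_eq_abs, abs_div, abs_of_nonneg (by linarith : (0:ℝ) ≤ (φ n : ℝ))]
      have hnum : |(P ^ (φ n)) s₀ s' - (P ^ 0) s₀ s'| ≤ 2 := by
        have h1 := pow_entry_nonneg hP (φ n) s₀ s'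
        have h2 := pow_entry_le_one hP (φ n) s₀ s'
        have h3 := pow_entry_nonneg hP 0 s₀ s'
        have h4 := pow_entry_le_one hP 0 s₀ s'
        rw [abs_le]; constructor <;> linarith
      exact (div_le_div_iff_of_pos_right (by linarith)).mpr hnum
    have hR : Filter.Tendsto (fun n => ∑ s, A (φ n) s * P s s') Filter.atTop
        (nhds (η s' + 0)) := by
      refine Filter.Tendsto.congr ?_ ((hlimc s').add herr)
      intro n
      exact (hkey (φ n) s').symm
    have := tendsto_nhds_unique hL hR
    rw [this, add_zero]
end exist

section uniq
variable [Fintype S] [DecidableEq S] {P : Matrix S S ℝ} (hP : RowStochastic P)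

include hP in
lemma stationary_unique
    (hrec : (∃ s, Recurrent P s) ∧ ∀ s s', Recurrent P s → Recurrent P s' → Leads P s s')
    {η ν : S → ℝ} (hη : StationaryDist P η) (hν : StationaryDist P ν) : η = ν := by
  classical
  by_contra hne
  set f : S → ℝ := fun s => η s - ν s with hfdef
  have hf : ∀ s', ∑ s, f s * P s s' = f s' := by
    intro s'
    simp only [hfdef, sub_mul, Finset.sum_sub_distrib, hη.2.2 s', hν.2.2 s']
  have hfsum : ∑ s, f s = 0 := by
    simp only [hfdef, Finset.sum_sub_distrib, hη.2.1, hν.2.1, sub_self]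
  have hfne : ∃ a, f a ≠ 0 := by
    by_contra h
    push_neg at h
    exact hne (funext fun s => by have := h s; simp only [hfdef] at this; linarith)
  -- pointwise |f| ≤ |f| * P, with equality of sums, hence pointwise equality
  have hle : ∀ s', |f s'| ≤ ∑ s, |f s| * P s s' := by
    intro s'
    rw [← hf s']
    refine le_trans (Finset.abs_sum_le_sum_abs _ _) ?_
    refine Finset.sum_le_sum fun s _ => ?_
    rw [abs_mul, abs_of_nonneg (hP.1 s s')]
  have hsums : ∑ s', ∑ s, |f s| * P s s' = ∑ s', |f s'| := by
    rw [Finset.sum_comm]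
    refine Finset.sum_congr rfl fun s _ => ?_
    rw [← Finset.mul_sum, hP.2 s, mul_one]
  have heq : ∀ s', ∑ s, |f s| * P s s' = |f s'| := by
    intro s'
    have := (Finset.sum_eq_sum_iff_of_le fun i _ => hle i).1 hsums.symm s' (Finset.mem_univ s')
    exact this.symm
  -- positive and negative parts are nonneg left-fixed vectors
  set gp : S → ℝ := fun s => (|f s| + f s) / 2 with hgp
  set gm : S → ℝ := fun s => (|f s| - f s) / 2 with hgm
  have hgpnn : ∀ s, 0 ≤ gp s := fun s => by
    have := neg_abs_le (f s)
    exact div_nonneg (by linarith) (by norm_num)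
  have hgmnn : ∀ s, 0 ≤ gm s := fun s => by
    have := le_abs_self (f s)
    exact div_nonneg (by linarith) (by norm_num)
  have hgpfix : ∀ s', ∑ s, gp s * P s s' = gp s' := by
    intro s'
    simp only [hgp, div_mul_eq_mul_div, add_mul, ← Finset.sum_div, Finset.sum_add_distrib,
      heq s', hf s']
  have hgmfix : ∀ s', ∑ s, gm s * P s s' = gm s' := by
    intro s'
    simp only [hgm, div_mul_eq_mul_div, sub_mul, ← Finset.sum_div, Finset.sum_sub_distrib,
      heq s', hf s']
  -- find positive and negative witnesses
  have hexp : ∃ a, 0 < f a := by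
    by_contra h
    push_neg at h
    obtain ⟨a, ha⟩ := hfne
    exact ha ((Finset.sum_eq_zero_iff_of_nonpos fun i _ => h i).1 hfsum a (Finset.mem_univ a))
  have hexm : ∃ b, f b < 0 := by
    by_contra h
    push_neg at h
    obtain ⟨a, ha⟩ := hfne
    exact ha ((Finset.sum_eq_zero_iff_of_nonneg fun i _ => h i).1 hfsum a (Finset.mem_univ a))
  obtain ⟨a, ha⟩ := hexp
  obtain ⟨b, hb⟩ := hexm
  obtain ⟨ra, hra, hlra⟩ := exists_recurrent_leads hP a
  obtain ⟨rb, hrb, hlrb⟩ := exists_recurrent_leads hP b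
  have hab : Leads P ra rb := hrec.2 ra rb hra hrb
  have hgpa : 0 < gp a := by
    have := le_abs_self (f a)
    exact div_pos (by linarith) (by norm_num)
  have hgmb : 0 < gm b := by
    have := neg_abs_le (f b)
    exact div_pos (by linarith) (by norm_num)
  have hgprb : 0 < gp rb :=
    support_closed hP hgpnn hgpfix hgpa (leads_trans hP hlra hab)
  have hgmrb : 0 < gm rb := support_closed hP hgmnn hgmfix hgmb hlrb
  have hpos : 0 < f rb := by
    by_contra h
    push_neg at h
    have : gp rb = 0 := by simp only [hgp]; rw [abs_of_nonpos h]; ring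
    linarith
  have hneg : f rb < 0 := by
    by_contra h
    push_neg at h
    have : gm rb = 0 := by simp only [hgm]; rw [abs_of_nonneg h]; ring
    linarith
  linarith
end uniq

/-- Every row-stochastic matrix on a finite nonempty set with exactly one
recurrent communicating class admits exactly one stationary distribution. -/
theorem stmt1 [Fintype S] [DecidableEq S] [Nonempty S] (P : Matrix S S ℝ)
    (hP : RowStochastic P) (hrec : UniqueRecurrentClass P) :
    ∃! η : S → ℝ, StationaryDist P η := by
  obtain ⟨η, hη⟩ := exists_stationary hP
  exact ⟨η, hη, fun ν hν => stationary_unique hP hrec hν hη⟩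
end

section
/- Let P and Q be row-stochastic matrices on the same finite nonempty set S such that P_{s,s'} > 0 implies Q_{s,s'} > 0 for all s, s' ∈ S. If P has exactly one recurrent communicating class, then Q has exactly one recurrent communicating class. -/
/-!
For a nonnegative matrix, `s` leads to `s'` exactly when `s'` is reachable from `s` along positive
entries, so enlarging the support only adds reachability; on a finite state space every state
leads to a recurrent one (a maximal element of the reachability preorder). Given recurrent states
`s, s'` of `Q`, choose `P`-recurrent states `r, r'` reachable from them. Then `s → r → r'` under `Q`,
and `r' → s'` under `Q` because `s'` is `Q`-recurrent and leads to `r'`.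
-/

open Finset

variable {S : Type*}

open Relation

theorem Relation.exists_reflTransGen_forall_reflTransGen_symm {α : Type*} [Finite α]
    (r : α → α → Prop) (a : α) :
    ∃ b, ReflTransGen r a b ∧ ∀ c, ReflTransGen r b c → ReflTransGen r c b := by
  let : Preorder α :=
    { le := ReflTransGen r
      le_refl := fun _ => .refl
      le_trans := fun _ _ _ => .trans }
  obtain ⟨b, hab, hb⟩ := Finite.exists_le_maximal (p := fun _ : α => True) trivial
  exact ⟨b, hab, fun c hbc => hb.2 trivial hbc⟩

section Leads

variable [Fintype S] [DecidableEq S] {P Q : Matrix S S ℝ}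

theorem Matrix.pow_succ_apply_pos_iff (hP : ∀ s s', 0 ≤ P s s') (k : ℕ) (s u : S) :
    0 < (P ^ (k + 1)) s u ↔ ∃ t, 0 < P s t ∧ 0 < (P ^ k) t u := by
  have hterm (t : S) : 0 ≤ P s t * (P ^ k) t u :=
    mul_nonneg (hP s t) (Matrix.pow_apply_nonneg hP k t u)
  rw [pow_succ', Matrix.mul_apply, Finset.sum_pos_iff_of_nonneg fun t _ => hterm t]
  refine exists_congr fun t => ⟨fun ⟨_, h⟩ => ?_, fun ⟨h₁, h₂⟩ => ⟨mem_univ t, mul_pos h₁ h₂⟩⟩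
  exact ⟨(hP s t).lt_of_ne fun h0 => by simp [← h0] at h,
    (Matrix.pow_apply_nonneg hP k t u).lt_of_ne fun h0 => by simp [← h0] at h⟩

theorem leads_iff_reflTransGen (hP : ∀ s s', 0 ≤ P s s') {s u : S} :
    Leads P s u ↔ ReflTransGen (fun a b => 0 < P a b) s u := by
  constructor
  · rintro ⟨k, hk⟩
    induction k generalizing s with
    | zero =>
      obtain rfl : s = u := by
        by_contra hne
        simp [Matrix.one_apply_ne hne] at hk
      exact .refl
    | succ k ih =>
      obtain ⟨t, hst, htu⟩ := (Matrix.pow_succ_apply_pos_iff hP k s u).1 hk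
      exact .head hst (ih htu)
  · intro h
    induction h using ReflTransGen.head_induction_on with
    | refl => exact ⟨0, by simp⟩
    | head hst _ ih =>
      obtain ⟨k, hk⟩ := ih
      exact ⟨k + 1, (Matrix.pow_succ_apply_pos_iff hP k _ _).2 ⟨_, hst, hk⟩⟩

theorem Leads.trans (hP : ∀ s s', 0 ≤ P s s') {s t u : S}
    (hst : Leads P s t) (htu : Leads P t u) : Leads P s u :=
  (leads_iff_reflTransGen hP).2
    (((leads_iff_reflTransGen hP).1 hst).trans ((leads_iff_reflTransGen hP).1 htu))

theorem Leads.mono (hP : ∀ s s', 0 ≤ P s s') (hQ : ∀ s s', 0 ≤ Q s s')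
    (hsupp : ∀ s s', 0 < P s s' → 0 < Q s s') {s u : S} (h : Leads P s u) : Leads Q s u :=
  (leads_iff_reflTransGen hQ).2 (ReflTransGen.mono hsupp _ _ ((leads_iff_reflTransGen hP).1 h))

theorem exists_leads_recurrent (hP : ∀ s s', 0 ≤ P s s') (s : S) :
    ∃ r, Leads P s r ∧ Recurrent P r := by
  simp only [Recurrent, leads_iff_reflTransGen hP]
  exact exists_reflTransGen_forall_reflTransGen_symm _ s

end Leads

/-- If `P` and `Q` are row-stochastic matrices on the same finite nonempty set
with the support of `P` contained in the support of `Q`, and `P` has exactly one recurrent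
communicating class, then so does `Q`. -/
theorem stmt2 [Fintype S] [DecidableEq S] [Nonempty S] (P Q : Matrix S S ℝ)
    (hP : RowStochastic P) (hQ : RowStochastic Q)
    (hsupp : ∀ s s', 0 < P s s' → 0 < Q s s')
    (hrec : UniqueRecurrentClass P) :
    UniqueRecurrentClass Q := by
  obtain ⟨hP, -⟩ := hP
  obtain ⟨hQ, -⟩ := hQ
  refine ⟨?_, fun s s' hs hs' => ?_⟩
  · obtain ⟨r, -, hr⟩ := exists_leads_recurrent hQ (Classical.arbitrary S)
    exact ⟨r, hr⟩
  · obtain ⟨r, hsr, hr⟩ := exists_leads_recurrent hP s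
    obtain ⟨r', hs'r', hr'⟩ := exists_leads_recurrent hP s'
    have hrr' : Leads Q r r' := (hrec.2 r r' hr hr').mono hP hQ hsupp
    have hr's' : Leads Q r' s' := hs' r' (hs'r'.mono hP hQ hsupp)
    exact ((hsr.mono hP hQ hsupp).trans hQ hrr').trans hQ hr's'
end

section
/- Let P be a row-stochastic matrix on a finite nonempty set S, let k ≥ 1 be an integer, let ε ∈ (0,1], and let q be a probability vector on S such that (P^k)_{s,s'} ≥ ε·q(s') for all s, s' ∈ S (Doeblin minorization). Let η be a stationary distribution of P. Then for every probability vector μ₀ on S and every integer n ≥ 0, the total variation distance satisfies (1/2)·Σ_{s'∈S} |(μ₀·P^{nk})(s') − η(s')| ≤ (1 − ε)^n, where μ₀·P^{nk} denotes the row vector obtained by multiplying μ₀ by the nk-fold matrix power of P. -/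
/-!
Subtracting the common part `ε q` from every row of `Q = P ^ k` leaves nonnegative rows of mass
`1 - ε`. A vector `d` of total mass zero does not see the subtracted part, since
`∑ i, d i * ε * q j = 0`; hence `‖d ᵥ* Q‖₁ ≤ (1 - ε) ‖d‖₁`. Iterate this `n` times on
`d = μ₀ - η`, which has mass zero, satisfies `d ᵥ* Q ^ n = μ₀ ᵥ* P ^ (n k) - η` by stationarity,
and has `‖d‖₁ ≤ 2`.
-/

open Finset

variable {S : Type*}

open Matrix

section Doeblin

variable [Fintype S]

lemma RowStochastic.mem_rowStochastic [DecidableEq S] {P : Matrix S S ℝ}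
    (hP : RowStochastic P) : P ∈ rowStochastic ℝ S :=
  mem_rowStochastic_iff_sum.2 hP

lemma StationaryDist.vecMul_pow [DecidableEq S] {P : Matrix S S ℝ} {η : S → ℝ}
    (hη : StationaryDist P η) (m : ℕ) : η ᵥ* P ^ m = η := by
  have hfix : η ᵥ* P = η := funext fun s' => by simpa [vecMul, dotProduct] using hη.2.2 s'
  induction m with
  | zero => simp
  | succ m ih => rw [pow_succ, ← vecMul_vecMul, ih, hfix]

section Contraction

variable {M : Matrix S S ℝ} (hM : ∀ i, ∑ j, M i j = 1)
include hM

lemma sum_vecMul_of_sum_row_eq_one (d : S → ℝ) : ∑ j, (d ᵥ* M) j = ∑ i, d i := by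
  simp only [vecMul, dotProduct]
  rw [sum_comm]
  simp [← mul_sum, hM]

lemma sum_abs_vecMul_le_of_minorization {ε : ℝ} {q : S → ℝ} (hq : ∑ j, q j = 1)
    (hmin : ∀ i j, ε * q j ≤ M i j) {d : S → ℝ} (hd : ∑ i, d i = 0) :
    ∑ j, |(d ᵥ* M) j| ≤ (1 - ε) * ∑ i, |d i| := by
  have hresidual : ∀ j, (d ᵥ* M) j = ∑ i, d i * (M i j - ε * q j) := fun j => by
    simp only [vecMul, dotProduct, mul_sub, sum_sub_distrib, ← sum_mul, hd, zero_mul, sub_zero]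
  calc ∑ j, |(d ᵥ* M) j|
      ≤ ∑ j, ∑ i, |d i| * (M i j - ε * q j) := by
        refine sum_le_sum fun j _ => ?_
        rw [hresidual]
        refine (abs_sum_le_sum_abs _ _).trans_eq (sum_congr rfl fun i _ => ?_)
        rw [abs_mul, abs_of_nonneg (sub_nonneg.2 (hmin i j))]
    _ = (1 - ε) * ∑ i, |d i| := by
        rw [sum_comm, mul_sum]
        refine sum_congr rfl fun i _ => ?_
        rw [← mul_sum, sum_sub_distrib, hM, ← mul_sum, hq, mul_one, mul_comm]

lemma sum_abs_vecMul_pow_le_of_minorization [DecidableEq S] {ε : ℝ} (hε : ε ≤ 1)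
    {q : S → ℝ} (hq : ∑ j, q j = 1) (hmin : ∀ i j, ε * q j ≤ M i j) (n : ℕ) {d : S → ℝ}
    (hd : ∑ i, d i = 0) :
    ∑ j, |(d ᵥ* M ^ n) j| ≤ (1 - ε) ^ n * ∑ i, |d i| := by
  induction n generalizing d with
  | zero => simp
  | succ n ih =>
    have hdM : ∑ i, (d ᵥ* M) i = 0 := (sum_vecMul_of_sum_row_eq_one hM d).trans hd
    calc ∑ j, |(d ᵥ* M ^ (n + 1)) j|
        = ∑ j, |((d ᵥ* M) ᵥ* M ^ n) j| := by rw [pow_succ', vecMul_vecMul]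
      _ ≤ (1 - ε) ^ n * ((1 - ε) * ∑ i, |d i|) :=
        (ih hdM).trans (mul_le_mul_of_nonneg_left
          (sum_abs_vecMul_le_of_minorization hM hq hmin hd) (pow_nonneg (by linarith) n))
      _ = (1 - ε) ^ (n + 1) * ∑ i, |d i| := by ring

end Contraction

lemma sum_abs_sub_le_two {μ η : S → ℝ} (hμ0 : ∀ s, 0 ≤ μ s) (hμ1 : ∑ s, μ s = 1)
    (hη0 : ∀ s, 0 ≤ η s) (hη1 : ∑ s, η s = 1) : ∑ s, |μ s - η s| ≤ 2 := by
  calc ∑ s, |μ s - η s| ≤ ∑ s, (μ s + η s) :=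
        sum_le_sum fun s _ => (abs_sub _ _).trans_eq <| by
          rw [abs_of_nonneg (hμ0 s), abs_of_nonneg (hη0 s)]
    _ = 2 := by rw [sum_add_distrib, hμ1, hη1]; norm_num

end Doeblin

theorem stmt4_general [Fintype S] [DecidableEq S] (P : Matrix S S ℝ)
    (hP : RowStochastic P) (k : ℕ)
    (ε : ℝ) (hε1 : ε ≤ 1)
    (q : S → ℝ) (hq1 : ∑ s, q s = 1)
    (hDoeblin : ∀ s s', ε * q s' ≤ (P ^ k) s s')
    (η : S → ℝ) (hη : StationaryDist P η)
    (μ₀ : S → ℝ) (hμ₀0 : ∀ s, 0 ≤ μ₀ s) (hμ₀1 : ∑ s, μ₀ s = 1) (n : ℕ) :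
    (1 / 2) * ∑ s', |Matrix.vecMul μ₀ (P ^ (n * k)) s' - η s'| ≤ (1 - ε) ^ n := by
  have hPk : ∀ i, ∑ j, (P ^ k) i j = 1 :=
    sum_row_of_mem_rowStochastic (pow_mem hP.mem_rowStochastic k)
  have hdiff : μ₀ ᵥ* P ^ (n * k) - η = (μ₀ - η) ᵥ* (P ^ k) ^ n := by
    rw [← pow_mul', sub_vecMul, hη.vecMul_pow]
  have hmass : ∑ s, (μ₀ - η) s = 0 := by
    simp only [Pi.sub_apply, sum_sub_distrib, hμ₀1, hη.2.1, sub_self]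
  have hcontract := sum_abs_vecMul_pow_le_of_minorization hPk hε1 hq1 hDoeblin n hmass
  have hinit := sum_abs_sub_le_two hμ₀0 hμ₀1 hη.1 hη.2.1
  rw [← hdiff] at hcontract
  simp only [Pi.sub_apply] at hcontract hinit
  nlinarith [pow_nonneg (sub_nonneg.2 hε1) n]

/-- Under a Doeblin minorization `(P ^ k) s s' ≥ ε · q s'`, the distribution of
the chain after `n·k` steps converges geometrically (in total variation) to a stationary
distribution `η`:  `(1/2) · Σ_{s'} |(μ₀ · P^{nk}) s' − η s'| ≤ (1 − ε)^n`. -/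
theorem stmt4 [Fintype S] [DecidableEq S] [Nonempty S] (P : Matrix S S ℝ)
    (hP : RowStochastic P) (k : ℕ) (hk : 1 ≤ k)
    (ε : ℝ) (hε0 : 0 < ε) (hε1 : ε ≤ 1)
    (q : S → ℝ) (hq0 : ∀ s, 0 ≤ q s) (hq1 : ∑ s, q s = 1)
    (hDoeblin : ∀ s s', ε * q s' ≤ (P ^ k) s s')
    (η : S → ℝ) (hη : StationaryDist P η)
    (μ₀ : S → ℝ) (hμ₀0 : ∀ s, 0 ≤ μ₀ s) (hμ₀1 : ∑ s, μ₀ s = 1) (n : ℕ) :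
    (1 / 2) * ∑ s', |Matrix.vecMul μ₀ (P ^ (n * k)) s' - η s'| ≤ (1 - ε) ^ n :=
  stmt4_general P hP k ε hε1 q hq1 hDoeblin η hη μ₀ hμ₀0 hμ₀1 n
end

section
/- Define U : Π_{c∈C} ℝ^{U^c} → ℝ by U(x) = (1/λ)·Σ_{r∈R} ∫₀^{σ_r(x)} w_r(z) dz, where σ_r is extended to all of Π_{c∈C} ℝ^{U^c} by the same linear formula σ_r(x) = λ·Σ_{c∈C} Σ_{s∈S^c} Σ_{u∈U^c : r∈u(s)} η^{c,u}(s)·x^c[u]. Then U is continuously differentiable and for every x ∈ X_U, every class c ∈ C, and every policy u ∈ U^c, the partial derivative satisfies ∂U/∂x^c[u](x) = 𝓕^c_u(x); that is, the steady-state congestion game 𝓕 is a full potential game with potential U. -/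
open Finset

variable {C : Type*} {S U : C → Type*} {R : Type*}

/-- Steady-state flow on resource `r` induced by the marginal policy distribution `x`. -/
def sigmaX [Fintype C] [∀ c, Fintype (S c)] [∀ c, Fintype (U c)] [Fintype R] [DecidableEq R]
    (lam : ℝ) (use : (c : C) → U c → S c → Finset R) (η : (c : C) → U c → S c → ℝ)
    (x : (c : C) → U c → ℝ) (r : R) : ℝ :=
  lam * ∑ c, ∑ s, ∑ u, if r ∈ use c u s then η c u s * x c u else 0

/-- Steady-state congestion payoff of policy `u` of class `c`. -/
noncomputable def Fcal [Fintype C] [∀ c, Fintype (S c)] [∀ c, Fintype (U c)]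
    [Fintype R] [DecidableEq R]
    (lam : ℝ) (use : (c : C) → U c → S c → Finset R) (η : (c : C) → U c → S c → ℝ)
    (w : R → ℝ → ℝ) (x : (c : C) → U c → ℝ) (c : C) (u : U c) : ℝ :=
  ∑ s, η c u s * ∑ r ∈ use c u s, w r (sigmaX lam use η x r)

/-- The full potential `U(x) = (1/λ)·Σ_r ∫₀^{σ_r(x)} w_r(z) dz`. -/
noncomputable def congPot [Fintype C] [∀ c, Fintype (S c)] [∀ c, Fintype (U c)]
    [Fintype R] [DecidableEq R]
    (lam : ℝ) (use : (c : C) → U c → S c → Finset R) (η : (c : C) → U c → S c → ℝ)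
    (w : R → ℝ → ℝ) (x : (c : C) → U c → ℝ) : ℝ :=
  (1 / lam) * ∑ r, ∫ z in (0:ℝ)..(sigmaX lam use η x r), w r z

noncomputable def Lmap [Fintype C] [∀ c, Fintype (S c)] [∀ c, Fintype (U c)] [Fintype R] [DecidableEq R]
    (lam : ℝ) (use : (c : C) → U c → S c → Finset R) (η : (c : C) → U c → S c → ℝ)
    (r : R) : ((c : C) → U c → ℝ) →L[ℝ] ℝ :=
  lam • ∑ c, ∑ s : S c, ∑ u, (if r ∈ use c u s then η c u s else 0) •
    ((ContinuousLinearMap.proj (R := ℝ) (φ := fun _ : U c => ℝ) u).comp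
      (ContinuousLinearMap.proj (R := ℝ) (φ := fun c : C => U c → ℝ) c))

theorem Lmap_apply [Fintype C] [∀ c, Fintype (S c)] [∀ c, Fintype (U c)] [Fintype R] [DecidableEq R]
    (lam : ℝ) (use : (c : C) → U c → S c → Finset R) (η : (c : C) → U c → S c → ℝ)
    (r : R) (x : (c : C) → U c → ℝ) :
    Lmap lam use η r x = sigmaX lam use η x r := by
  simp only [Lmap, ContinuousLinearMap.smul_apply, ContinuousLinearMap.sum_apply, sigmaX,
    smul_eq_mul, apply_ite (fun L : ((c : C) → U c → ℝ) →L[ℝ] ℝ => L x),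
    ContinuousLinearMap.zero_apply, ContinuousLinearMap.smul_apply,
    ContinuousLinearMap.comp_apply, ContinuousLinearMap.proj_apply]
  congr 1
  refine Finset.sum_congr rfl fun c _ => Finset.sum_congr rfl fun s _ => Finset.sum_congr rfl fun u _ => ?_
  by_cases h : r ∈ use c u s <;> simp [h]

theorem hasDerivAt_primitive (w : ℝ → ℝ) (hw : Continuous w) (t : ℝ) :
    HasDerivAt (fun t => ∫ z in (0:ℝ)..t, w z) (w t) t :=
  intervalIntegral.integral_hasDerivAt_right (hw.intervalIntegrable _ _)
    (hw.stronglyMeasurableAtFilter _ _) hw.continuousAt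

theorem hasFDerivAt_congPot [Fintype C] [∀ c, Fintype (S c)] [∀ c, Fintype (U c)]
    [Fintype R] [DecidableEq R]
    (lam : ℝ) (use : (c : C) → U c → S c → Finset R)
    (η : (c : C) → U c → S c → ℝ)
    (w : R → ℝ → ℝ) (hw : ∀ r, Continuous (w r)) (x : (c : C) → U c → ℝ) :
    HasFDerivAt (congPot lam use η w)
      ((1 / lam) • ∑ r, w r (sigmaX lam use η x r) • Lmap lam use η r) x := by
  have h1 : ∀ r : R, HasFDerivAt (fun y => ∫ z in (0:ℝ)..(sigmaX lam use η y r), w r z)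
      (w r (sigmaX lam use η x r) • Lmap lam use η r) x := by
    intro r
    have h := (hasDerivAt_primitive (w r) (hw r) (Lmap lam use η r x)).comp_hasFDerivAt x
      ((Lmap lam use η r).hasFDerivAt (x := x))
    simp only [Function.comp_def, Lmap_apply] at h
    exact h
  have h2 := (HasFDerivAt.fun_sum (fun r (_ : r ∈ Finset.univ) => h1 r)).const_smul (1 / lam)
  have he : congPot lam use η w = fun y =>
      (1 / lam) • ∑ r, ∫ z in (0:ℝ)..(sigmaX lam use η y r), w r z := by
    funext y; simp [congPot, smul_eq_mul]
  rw [he]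
  exact h2

/-- The steady-state congestion game is a full potential game: the potential
`congPot` is continuously differentiable and its partial derivative in the coordinate `x^c[u]`
at any `x ∈ X_U` equals the steady-state payoff `𝓕^c_u(x)`. -/
theorem stmt7 [Fintype C] [Nonempty C] [DecidableEq C]
    [∀ c, Fintype (S c)] [∀ c, Nonempty (S c)]
    [∀ c, Fintype (U c)] [∀ c, Nonempty (U c)] [∀ c, DecidableEq (U c)]
    [Fintype R] [DecidableEq R]
    (m : C → ℝ) (hm : ∀ c, 0 < m c) (lam : ℝ) (hlam : 0 < lam)
    (η : (c : C) → U c → S c → ℝ)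
    (hη0 : ∀ c (u : U c) s, 0 ≤ η c u s) (hη1 : ∀ c (u : U c), ∑ s, η c u s = 1)
    (use : (c : C) → U c → S c → Finset R)
    (w : R → ℝ → ℝ) (hw : ∀ r, Continuous (w r)) :
    ContDiff ℝ 1 (congPot lam use η w) ∧
    ∀ x : (c : C) → U c → ℝ, (∀ c, (∀ u, 0 ≤ x c u) ∧ (∑ u, x c u) = m c) →
      ∀ c (u : U c),
        fderiv ℝ (congPot lam use η w) x (Pi.single c (Pi.single u 1)) =
          Fcal lam use η w x c u := by
  have hlam' : lam ≠ 0 := hlam.ne'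
  constructor
  · have hg : ∀ r : R, ContDiff ℝ 1 (fun t : ℝ => ∫ z in (0:ℝ)..t, w r z) := by
      intro r
      rw [contDiff_one_iff_deriv]
      have hd : ∀ t, HasDerivAt (fun t => ∫ z in (0:ℝ)..t, w r z) (w r t) t :=
        hasDerivAt_primitive (w r) (hw r)
      refine ⟨fun t => (hd t).differentiableAt, ?_⟩
      have : deriv (fun t => ∫ z in (0:ℝ)..t, w r z) = w r := funext fun t => (hd t).deriv
      rw [this]; exact hw r
    have h : ContDiff ℝ 1 (fun x : (c : C) → U c → ℝ =>
        (1 / lam) * ∑ r, ∫ z in (0:ℝ)..(Lmap lam use η r x), w r z) := by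
      refine contDiff_const.mul (ContDiff.sum fun r _ => ?_)
      exact (hg r).comp (Lmap lam use η r).contDiff
    have he : congPot lam use η w = fun x =>
        (1 / lam) * ∑ r, ∫ z in (0:ℝ)..(Lmap lam use η r x), w r z := by
      funext x; simp [congPot, Lmap_apply]
    rw [he]; exact h
  · intro x _ c u
    rw [(hasFDerivAt_congPot lam use η w hw x).fderiv]
    have hL : ∀ r, Lmap lam use η r (Pi.single c (Pi.single u 1)) =
        lam * ∑ s, if r ∈ use c u s then η c u s else 0 := by
      intro r
      rw [Lmap_apply, sigmaX]
      congr 1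
      rw [Finset.sum_eq_single_of_mem c (Finset.mem_univ c)
        (fun c1 _ hne => by simp [Pi.single_eq_of_ne hne])]
      refine Finset.sum_congr rfl fun s _ => ?_
      rw [Finset.sum_eq_single_of_mem u (Finset.mem_univ u)
        (fun u1 _ hne => by simp [Pi.single_eq_same, Pi.single_eq_of_ne hne])]
      simp [Pi.single_eq_same]
    simp only [ContinuousLinearMap.smul_apply, ContinuousLinearMap.sum_apply, smul_eq_mul, hL]
    rw [Fcal, Finset.mul_sum]
    have hrw : ∀ r : R, 1 / lam * (w r (sigmaX lam use η x r) *
        (lam * ∑ s, if r ∈ use c u s then η c u s else 0)) =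
        ∑ s, if r ∈ use c u s then η c u s * w r (sigmaX lam use η x r) else 0 := by
      intro r
      simp only [Finset.mul_sum]
      refine Finset.sum_congr rfl fun s _ => ?_
      by_cases h : r ∈ use c u s <;> simp [h] <;> field_simp <;> ring
    rw [Finset.sum_congr rfl fun r _ => hrw r, Finset.sum_comm]
    refine Finset.sum_congr rfl fun s _ => ?_
    rw [Finset.mul_sum, ← Finset.sum_filter, Finset.filter_univ_mem]
end

section
/- If, in addition to the congestion game payoff structure, the resource reward function w_r is nonincreasing for every r ∈ R, then the set NE(𝓕) = {x ∈ X_U : for all c ∈ C and u ∈ U^c, x^c[u] > 0 implies 𝓕^c_u(x) ≥ 𝓕^c_v(x) for all v ∈ U^c} of Nash equilibria of the steady-state congestion game is compact and convex. -/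
open Finset

variable {C : Type*} {S U : C → Type*} {R : Type*}

section myaux
variable [Fintype C] [∀ c, Fintype (S c)] [∀ c, Fintype (U c)] [Fintype R] [DecidableEq R]

/-- coefficient of resource usage -/
def myA (use : (c : C) → U c → S c → Finset R) (η : (c : C) → U c → S c → ℝ)
    (c : C) (u : U c) (r : R) : ℝ := ∑ s, if r ∈ use c u s then η c u s else 0

lemma mySigma_eq (lam : ℝ) (use : (c : C) → U c → S c → Finset R)
    (η : (c : C) → U c → S c → ℝ) (x : (c : C) → U c → ℝ) (r : R) :
    sigmaX lam use η x r = lam * ∑ c, ∑ u, myA use η c u r * x c u := by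
  unfold sigmaX myA
  congr 1
  refine Finset.sum_congr rfl fun c _ => ?_
  rw [Finset.sum_comm]
  refine Finset.sum_congr rfl fun u _ => ?_
  rw [Finset.sum_mul]
  refine Finset.sum_congr rfl fun s _ => ?_
  split <;> simp

lemma myFcal_eq (lam : ℝ) (use : (c : C) → U c → S c → Finset R)
    (η : (c : C) → U c → S c → ℝ) (w : R → ℝ → ℝ) (x : (c : C) → U c → ℝ)
    (c : C) (u : U c) :
    Fcal lam use η w x c u = ∑ r, myA use η c u r * w r (sigmaX lam use η x r) := by
  unfold Fcal myA
  have h1 : ∀ s : S c, η c u s * ∑ r ∈ use c u s, w r (sigmaX lam use η x r)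
      = ∑ r, if r ∈ use c u s then η c u s * w r (sigmaX lam use η x r) else 0 := by
    intro s
    rw [Finset.sum_ite_mem, Finset.univ_inter, Finset.mul_sum]
  simp_rw [h1]
  rw [Finset.sum_comm]
  refine Finset.sum_congr rfl fun r _ => ?_
  rw [Finset.sum_mul]
  refine Finset.sum_congr rfl fun s _ => ?_
  split <;> simp

lemma mySigma_cont (lam : ℝ) (use : (c : C) → U c → S c → Finset R)
    (η : (c : C) → U c → S c → ℝ) (r : R) :
    Continuous fun x : (c : C) → U c → ℝ => sigmaX lam use η x r := by
  unfold sigmaX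
  refine continuous_const.mul ?_
  refine continuous_finset_sum _ fun c _ => continuous_finset_sum _ fun s _ =>
    continuous_finset_sum _ fun u _ => ?_
  by_cases h : r ∈ use c u s <;> simp [h]
  · exact continuous_const.mul ((continuous_apply u).comp (continuous_apply c))
  · exact continuous_const

lemma myFcal_cont (lam : ℝ) (use : (c : C) → U c → S c → Finset R)
    (η : (c : C) → U c → S c → ℝ) (w : R → ℝ → ℝ) (hw : ∀ r, Continuous (w r))
    (c : C) (u : U c) :
    Continuous fun x : (c : C) → U c → ℝ => Fcal lam use η w x c u := by
  unfold Fcal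
  exact continuous_finset_sum _ fun s _ => continuous_const.mul
    (continuous_finset_sum _ fun r _ => (hw r).comp (mySigma_cont lam use η r))

-- pure algebra lemma test
lemma myalg {C R : Type*} {U : C → Type*} [Fintype C] [∀ c, Fintype (U c)] [Fintype R]
    (A : (c : C) → U c → R → ℝ) (gx gy : R → ℝ) (x y : (c : C) → U c → ℝ) (lam : ℝ) :
    ∑ r, (gx r - gy r) * ((lam * ∑ c, ∑ u, A c u r * x c u) - lam * ∑ c, ∑ u, A c u r * y c u)
    = lam * ∑ c, ∑ u, ((∑ r, A c u r * gx r) - ∑ r, A c u r * gy r) * (x c u - y c u) := by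
  have hR : lam * ∑ c, ∑ u, ((∑ r, A c u r * gx r) - ∑ r, A c u r * gy r) * (x c u - y c u)
      = ∑ c, ∑ u, ∑ r, lam * A c u r * (gx r - gy r) * (x c u - y c u) := by
    rw [Finset.mul_sum]
    refine Finset.sum_congr rfl fun c _ => ?_
    rw [Finset.mul_sum]
    refine Finset.sum_congr rfl fun u _ => ?_
    rw [← Finset.sum_sub_distrib, Finset.sum_mul, Finset.mul_sum]
    refine Finset.sum_congr rfl fun r _ => ?_
    ring
  have hL : ∑ r, (gx r - gy r) * ((lam * ∑ c, ∑ u, A c u r * x c u) - lam * ∑ c, ∑ u, A c u r * y c u)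
      = ∑ r, ∑ c, ∑ u, lam * A c u r * (gx r - gy r) * (x c u - y c u) := by
    refine Finset.sum_congr rfl fun r _ => ?_
    rw [← mul_sub, ← Finset.sum_sub_distrib]
    simp_rw [← Finset.sum_sub_distrib]
    rw [Finset.mul_sum, Finset.mul_sum]
    refine Finset.sum_congr rfl fun c _ => ?_
    rw [Finset.mul_sum, Finset.mul_sum]
    refine Finset.sum_congr rfl fun u _ => ?_
    ring
  rw [hL, hR, Finset.sum_comm]
  refine Finset.sum_congr rfl fun c _ => Finset.sum_comm

lemma myMono (lam : ℝ) (hlam : 0 < lam) (use : (c : C) → U c → S c → Finset R)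
    (η : (c : C) → U c → S c → ℝ) (w : R → ℝ → ℝ) (hmono : ∀ r, Antitone (w r))
    (x y : (c : C) → U c → ℝ) :
    ∑ c, ∑ u, (Fcal lam use η w x c u - Fcal lam use η w y c u) * (x c u - y c u) ≤ 0 := by
  have hterm : ∀ r : R, (w r (sigmaX lam use η x r) - w r (sigmaX lam use η y r)) *
      (sigmaX lam use η x r - sigmaX lam use η y r) ≤ 0 := by
    intro r
    rcases le_total (sigmaX lam use η x r) (sigmaX lam use η y r) with h | h
    · exact mul_nonpos_of_nonneg_of_nonpos (sub_nonneg.2 (hmono r h)) (sub_nonpos.2 h)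
    · exact mul_nonpos_of_nonpos_of_nonneg (sub_nonpos.2 (hmono r h)) (sub_nonneg.2 h)
  have hsum : ∑ r, (w r (sigmaX lam use η x r) - w r (sigmaX lam use η y r)) *
      (sigmaX lam use η x r - sigmaX lam use η y r) ≤ 0 :=
    Finset.sum_nonpos fun r _ => hterm r
  have hkey : ∑ r, (w r (sigmaX lam use η x r) - w r (sigmaX lam use η y r)) *
      (sigmaX lam use η x r - sigmaX lam use η y r)
      = lam * ∑ c, ∑ u, (Fcal lam use η w x c u - Fcal lam use η w y c u) * (x c u - y c u) := by
    simp_rw [myFcal_eq, mySigma_eq]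
    exact myalg (myA use η) _ _ x y lam
  have h2 : lam * ∑ c, ∑ u,
      (Fcal lam use η w x c u - Fcal lam use η w y c u) * (x c u - y c u) ≤ 0 := by
    rw [← hkey]; exact hsum
  nlinarith [h2, hlam]

lemma myNE_to_VI (m : C → ℝ) (hm : ∀ c, 0 < m c) (lam : ℝ)
    (use : (c : C) → U c → S c → Finset R) (η : (c : C) → U c → S c → ℝ) (w : R → ℝ → ℝ)
    (x : (c : C) → U c → ℝ) (hx : ∀ c, (∀ u, 0 ≤ x c u) ∧ (∑ u, x c u) = m c)
    (hne : ∀ c (u : U c), 0 < x c u → ∀ v, Fcal lam use η w x c v ≤ Fcal lam use η w x c u)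
    (y : (c : C) → U c → ℝ) (hy : ∀ c, (∀ u, 0 ≤ y c u) ∧ (∑ u, y c u) = m c) :
    ∑ c, ∑ u, Fcal lam use η w x c u * (y c u - x c u) ≤ 0 := by
  refine Finset.sum_nonpos fun c _ => ?_
  obtain ⟨u₀, hu₀⟩ : ∃ u₀, 0 < x c u₀ := by
    by_contra h
    push_neg at h
    have hz : ∀ u : U c, x c u = 0 := fun u => le_antisymm (h u) ((hx c).1 u)
    have : (∑ u, x c u) = 0 := Finset.sum_eq_zero fun u _ => hz u
    rw [(hx c).2] at this
    exact absurd this (ne_of_gt (hm c))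
  set M := Fcal lam use η w x c u₀ with hM
  have ha : ∀ v, Fcal lam use η w x c v ≤ M := hne c u₀ hu₀
  have hb : ∀ u, Fcal lam use η w x c u * x c u = M * x c u := by
    intro u
    rcases eq_or_lt_of_le ((hx c).1 u) with h | h
    · rw [← h]; ring
    · rw [le_antisymm (ha u) (hne c u h u₀)]
  have h1 : ∑ u, Fcal lam use η w x c u * y c u ≤ M * m c := by
    calc ∑ u, Fcal lam use η w x c u * y c u ≤ ∑ u, M * y c u :=
          Finset.sum_le_sum fun u _ => mul_le_mul_of_nonneg_right (ha u) ((hy c).1 u)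
      _ = M * m c := by rw [← Finset.mul_sum, (hy c).2]
  have h2 : ∑ u, Fcal lam use η w x c u * x c u = M * m c := by
    calc ∑ u, Fcal lam use η w x c u * x c u = ∑ u, M * x c u :=
          Finset.sum_congr rfl fun u _ => hb u
      _ = M * m c := by rw [← Finset.mul_sum, (hx c).2]
  have : ∑ u, Fcal lam use η w x c u * (y c u - x c u)
      = (∑ u, Fcal lam use η w x c u * y c u) - ∑ u, Fcal lam use η w x c u * x c u := by
    simp [mul_sub, Finset.sum_sub_distrib]
  rw [this]
  linarith

lemma myVI_to_NE (m : C → ℝ) (lam : ℝ)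
    (use : (c : C) → U c → S c → Finset R) (η : (c : C) → U c → S c → ℝ) (w : R → ℝ → ℝ)
    (x : (c : C) → U c → ℝ) (hx : ∀ c, (∀ u, 0 ≤ x c u) ∧ (∑ u, x c u) = m c)
    (hvi : ∀ y : (c : C) → U c → ℝ, (∀ c, (∀ u, 0 ≤ y c u) ∧ (∑ u, y c u) = m c) →
      ∑ c, ∑ u, Fcal lam use η w x c u * (y c u - x c u) ≤ 0) :
    ∀ c (u : U c), 0 < x c u → ∀ v, Fcal lam use η w x c v ≤ Fcal lam use η w x c u := by
  classical
  intro c₀ u₀ hpos v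
  by_cases hv : v = u₀
  · rw [hv]
  · set y : (c : C) → U c → ℝ := Function.update x c₀
      (fun u => x c₀ u + (if u = v then x c₀ u₀ else 0) - (if u = u₀ then x c₀ u₀ else 0))
      with hydef
    have hyc₀ : y c₀ = fun u => x c₀ u + (if u = v then x c₀ u₀ else 0)
        - (if u = u₀ then x c₀ u₀ else 0) := Function.update_self _ _ _
    have hyne : ∀ c, c ≠ c₀ → y c = x c := fun c hc => Function.update_of_ne hc _ _
    have hyXU : ∀ c, (∀ u, 0 ≤ y c u) ∧ (∑ u, y c u) = m c := by
      intro c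
      by_cases hc : c = c₀
      · subst hc
        rw [hyc₀]
        constructor
        · intro u
          by_cases h1 : u = v
          · subst h1; simp [hv]
            have := (hx c).1 u
            have := (hx c).1 u₀
            positivity
          · by_cases h2 : u = u₀
            · subst h2; simp [h1]
            · simp [h1, h2]; exact (hx c).1 u
        · rw [Finset.sum_sub_distrib, Finset.sum_add_distrib]
          rw [Finset.sum_ite_eq' Finset.univ v (fun _ => x c u₀),
              Finset.sum_ite_eq' Finset.univ u₀ (fun _ => x c u₀)]
          simp [(hx c).2]
      · rw [hyne c hc]; exact hx c
    have hG := hvi y hyXU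
    have hcalc : ∑ c, ∑ u, Fcal lam use η w x c u * (y c u - x c u)
        = Fcal lam use η w x c₀ v * x c₀ u₀ - Fcal lam use η w x c₀ u₀ * x c₀ u₀ := by
      rw [Finset.sum_eq_single_of_mem c₀ (Finset.mem_univ c₀)]
      · rw [hyc₀]
        have : ∀ u : U c₀, Fcal lam use η w x c₀ u *
            ((x c₀ u + (if u = v then x c₀ u₀ else 0) - (if u = u₀ then x c₀ u₀ else 0)) - x c₀ u)
            = (if u = v then Fcal lam use η w x c₀ u * x c₀ u₀ else 0)
              - (if u = u₀ then Fcal lam use η w x c₀ u * x c₀ u₀ else 0) := by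
          intro u
          have hv' : ¬u₀ = v := fun h => hv h.symm
          by_cases h1 : u = v <;> by_cases h2 : u = u₀ <;>
            simp [h1, h2, hv, hv'] <;> ring
        rw [Finset.sum_congr rfl fun u _ => this u, Finset.sum_sub_distrib,
            Finset.sum_ite_eq' Finset.univ v, Finset.sum_ite_eq' Finset.univ u₀]
        simp
      · intro c _ hc
        rw [hyne c hc]
        simp
    rw [hcalc] at hG
    have := sub_nonpos.mp hG
    exact (mul_le_mul_iff_of_pos_right hpos).mp this

lemma myVI_to_Minty (lam : ℝ) (hlam : 0 < lam)
    (use : (c : C) → U c → S c → Finset R) (η : (c : C) → U c → S c → ℝ) (w : R → ℝ → ℝ)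
    (hmono : ∀ r, Antitone (w r)) (x y : (c : C) → U c → ℝ)
    (hG : ∑ c, ∑ u, Fcal lam use η w x c u * (y c u - x c u) ≤ 0) :
    ∑ c, ∑ u, Fcal lam use η w y c u * (y c u - x c u) ≤ 0 := by
  have hm := myMono lam hlam use η w hmono y x
  have hd : ∑ c, ∑ u, Fcal lam use η w y c u * (y c u - x c u)
      = (∑ c, ∑ u, (Fcal lam use η w y c u - Fcal lam use η w x c u) * (y c u - x c u))
        + ∑ c, ∑ u, Fcal lam use η w x c u * (y c u - x c u) := by
    rw [← Finset.sum_add_distrib]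
    refine Finset.sum_congr rfl fun c _ => ?_
    rw [← Finset.sum_add_distrib]
    exact Finset.sum_congr rfl fun u _ => by ring
  rw [hd]
  linarith

lemma myMinty_to_VI (m : C → ℝ) (lam : ℝ)
    (use : (c : C) → U c → S c → Finset R) (η : (c : C) → U c → S c → ℝ) (w : R → ℝ → ℝ)
    (hw : ∀ r, Continuous (w r))
    (x : (c : C) → U c → ℝ) (hx : ∀ c, (∀ u, 0 ≤ x c u) ∧ (∑ u, x c u) = m c)
    (hM : ∀ y : (c : C) → U c → ℝ, (∀ c, (∀ u, 0 ≤ y c u) ∧ (∑ u, y c u) = m c) →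
      ∑ c, ∑ u, Fcal lam use η w y c u * (y c u - x c u) ≤ 0)
    (y : (c : C) → U c → ℝ) (hy : ∀ c, (∀ u, 0 ≤ y c u) ∧ (∑ u, y c u) = m c) :
    ∑ c, ∑ u, Fcal lam use η w x c u * (y c u - x c u) ≤ 0 := by
  set z : ℝ → (c : C) → U c → ℝ := fun t c u => x c u + t * (y c u - x c u) with hzdef
  have hzXU : ∀ t ∈ Set.Icc (0:ℝ) 1, ∀ c, (∀ u, 0 ≤ z t c u) ∧ (∑ u, z t c u) = m c := by
    intro t ht c
    constructor
    · intro u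
      have h1 := (hx c).1 u
      have h2 := (hy c).1 u
      have h3 := ht.1
      have h4 := ht.2
      show 0 ≤ x c u + t * (y c u - x c u)
      nlinarith
    · have : ∑ u, z t c u = (∑ u, x c u) + t * ((∑ u, y c u) - ∑ u, x c u) := by
        simp only [hzdef]
        rw [Finset.sum_add_distrib, ← Finset.mul_sum, Finset.sum_sub_distrib]
      rw [this, (hx c).2, (hy c).2]
      ring
  set g : ℝ → ℝ := fun t => ∑ c, ∑ u, Fcal lam use η w (z t) c u * (y c u - x c u) with hgdef
  have hzcont : Continuous z := by
    refine continuous_pi fun c => continuous_pi fun u => ?_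
    exact continuous_const.add (continuous_id.mul continuous_const)
  have hgcont : Continuous g := by
    refine continuous_finset_sum _ fun c _ => continuous_finset_sum _ fun u _ => ?_
    exact ((myFcal_cont lam use η w hw c u).comp hzcont).mul continuous_const
  have hneg : ∀ t ∈ Set.Ioc (0:ℝ) 1, g t ≤ 0 := by
    intro t ht
    have h1 := hM (z t) (hzXU t ⟨le_of_lt ht.1, ht.2⟩)
    have h2 : ∑ c, ∑ u, Fcal lam use η w (z t) c u * (z t c u - x c u) = t * g t := by
      rw [hgdef, Finset.mul_sum]
      refine Finset.sum_congr rfl fun c _ => ?_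
      rw [Finset.mul_sum]
      refine Finset.sum_congr rfl fun u _ => ?_
      show Fcal lam use η w (z t) c u * (x c u + t * (y c u - x c u) - x c u)
        = t * (Fcal lam use η w (z t) c u * (y c u - x c u))
      ring
    rw [h2] at h1
    nlinarith [ht.1]
  have hz0 : z 0 = x := by funext c u; simp [hzdef]
  have hg0 : g 0 = ∑ c, ∑ u, Fcal lam use η w x c u * (y c u - x c u) := by
    rw [hgdef]; simp [hz0]
  rw [← hg0]
  have htend : Filter.Tendsto g (nhdsWithin 0 (Set.Ioi 0)) (nhds (g 0)) :=
    (hgcont.tendsto 0).mono_left nhdsWithin_le_nhds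
  refine le_of_tendsto htend ?_
  filter_upwards [Ioc_mem_nhdsGT_of_mem (Set.mem_Ico.mpr ⟨le_refl 0, one_pos⟩)] with t ht
  exact hneg t ht

end myaux

/-- If every resource reward `w_r` is nonincreasing, then the set of Nash
equilibria of the steady-state congestion game is compact and convex. -/
theorem stmt8 [Fintype C] [Nonempty C]
    [∀ c, Fintype (S c)] [∀ c, Nonempty (S c)]
    [∀ c, Fintype (U c)] [∀ c, Nonempty (U c)]
    [Fintype R] [DecidableEq R]
    (m : C → ℝ) (hm : ∀ c, 0 < m c) (lam : ℝ) (hlam : 0 < lam)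
    (η : (c : C) → U c → S c → ℝ)
    (hη0 : ∀ c (u : U c) s, 0 ≤ η c u s) (hη1 : ∀ c (u : U c), ∑ s, η c u s = 1)
    (use : (c : C) → U c → S c → Finset R)
    (w : R → ℝ → ℝ) (hw : ∀ r, Continuous (w r)) (hmono : ∀ r, Antitone (w r)) :
    IsCompact {x : (c : C) → U c → ℝ |
        (∀ c, (∀ u, 0 ≤ x c u) ∧ (∑ u, x c u) = m c) ∧
        ∀ c (u : U c), 0 < x c u →
          ∀ v, Fcal lam use η w x c v ≤ Fcal lam use η w x c u} ∧
    Convex ℝ {x : (c : C) → U c → ℝ |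
        (∀ c, (∀ u, 0 ≤ x c u) ∧ (∑ u, x c u) = m c) ∧
        ∀ c (u : U c), 0 < x c u →
          ∀ v, Fcal lam use η w x c v ≤ Fcal lam use η w x c u} := by
  classical
  have hchar : {x : (c : C) → U c → ℝ |
        (∀ c, (∀ u, 0 ≤ x c u) ∧ (∑ u, x c u) = m c) ∧
        ∀ c (u : U c), 0 < x c u →
          ∀ v, Fcal lam use η w x c v ≤ Fcal lam use η w x c u}
      = {x : (c : C) → U c → ℝ | ∀ c, (∀ u, 0 ≤ x c u) ∧ (∑ u, x c u) = m c} ∩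
        {x : (c : C) → U c → ℝ |
          ∀ y : (c : C) → U c → ℝ, (∀ c, (∀ u, 0 ≤ y c u) ∧ (∑ u, y c u) = m c) →
            ∑ c, ∑ u, Fcal lam use η w y c u * (y c u - x c u) ≤ 0} := by
    ext x
    simp only [Set.mem_setOf_eq, Set.mem_inter_iff]
    constructor
    · rintro ⟨hx, hne⟩
      exact ⟨hx, fun y hy => myVI_to_Minty lam hlam use η w hmono x y
        (myNE_to_VI m hm lam use η w x hx hne y hy)⟩
    · rintro ⟨hx, hmin⟩
      exact ⟨hx, myVI_to_NE m lam use η w x hx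
        (myMinty_to_VI m lam use η w hw x hx hmin)⟩
  rw [hchar]
  constructor
  · -- compact
    have hbox : IsCompact (Set.univ.pi fun c : C =>
        (Set.univ.pi fun _ : U c => Set.Icc (0:ℝ) (m c))) :=
      isCompact_univ_pi fun c => isCompact_univ_pi fun _ => isCompact_Icc
    refine IsCompact.of_isClosed_subset hbox (IsClosed.inter ?_ ?_) ?_
    · have hXU : {x : (c : C) → U c → ℝ | ∀ c, (∀ u, 0 ≤ x c u) ∧ (∑ u, x c u) = m c}
          = ⋂ c, ((⋂ u, {x : (c' : C) → U c' → ℝ | 0 ≤ x c u}) ∩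
              {x : (c' : C) → U c' → ℝ | (∑ u, x c u) = m c}) := by
        ext x
        simp only [Set.mem_setOf_eq, Set.mem_iInter, Set.mem_inter_iff]
      rw [hXU]
      refine isClosed_iInter fun c => IsClosed.inter ?_ ?_
      · exact isClosed_iInter fun u => isClosed_le continuous_const
          ((continuous_apply u).comp (continuous_apply c))
      · exact isClosed_eq (continuous_finset_sum _ fun u _ =>
          (continuous_apply u).comp (continuous_apply c)) continuous_const
    · have hMS : {x : (c : C) → U c → ℝ |
            ∀ y : (c : C) → U c → ℝ, (∀ c, (∀ u, 0 ≤ y c u) ∧ (∑ u, y c u) = m c) →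
              ∑ c, ∑ u, Fcal lam use η w y c u * (y c u - x c u) ≤ 0}
          = ⋂ (y : (c : C) → U c → ℝ)
              (_ : ∀ c, (∀ u, 0 ≤ y c u) ∧ (∑ u, y c u) = m c),
              {x : (c : C) → U c → ℝ |
                ∑ c, ∑ u, Fcal lam use η w y c u * (y c u - x c u) ≤ 0} := by
        ext x
        simp only [Set.mem_setOf_eq, Set.mem_iInter]
      rw [hMS]
      refine isClosed_iInter fun y => isClosed_iInter fun hy => ?_
      refine isClosed_le ?_ continuous_const
      exact continuous_finset_sum _ fun c _ => continuous_finset_sum _ fun u _ =>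
        continuous_const.mul (continuous_const.sub
          ((continuous_apply u).comp (continuous_apply c)))
    · rintro x ⟨hx, -⟩
      refine Set.mem_univ_pi.mpr fun c => Set.mem_univ_pi.mpr fun u => ?_
      refine ⟨(hx c).1 u, ?_⟩
      rw [← (hx c).2]
      exact Finset.single_le_sum (fun u _ => (hx c).1 u) (Finset.mem_univ u)
  · -- convex
    refine Convex.inter ?_ ?_
    · intro x hx y hy a b ha hb hab
      simp only [Set.mem_setOf_eq] at hx hy ⊢
      intro c
      constructor
      · intro u
        have h1 := (hx c).1 u
        have h2 := (hy c).1 u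
        simp only [Pi.add_apply, Pi.smul_apply, smul_eq_mul]
        exact add_nonneg (mul_nonneg ha h1) (mul_nonneg hb h2)
      · simp only [Pi.add_apply, Pi.smul_apply, smul_eq_mul]
        rw [Finset.sum_add_distrib, ← Finset.mul_sum, ← Finset.mul_sum,
          (hx c).2, (hy c).2]
        linear_combination m c * hab
    · intro x1 h1 x2 h2 a b ha hb hab
      simp only [Set.mem_setOf_eq] at h1 h2 ⊢
      intro y hy
      have e : ∑ c, ∑ u, Fcal lam use η w y c u * (y c u - (a • x1 + b • x2) c u)
          = a * (∑ c, ∑ u, Fcal lam use η w y c u * (y c u - x1 c u))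
            + b * (∑ c, ∑ u, Fcal lam use η w y c u * (y c u - x2 c u)) := by
        rw [Finset.mul_sum, Finset.mul_sum, ← Finset.sum_add_distrib]
        refine Finset.sum_congr rfl fun c _ => ?_
        rw [Finset.mul_sum, Finset.mul_sum, ← Finset.sum_add_distrib]
        refine Finset.sum_congr rfl fun u _ => ?_
        simp only [Pi.add_apply, Pi.smul_apply, smul_eq_mul]
        linear_combination (-(Fcal lam use η w y c u * y c u)) * hab
      rw [e]
      have s1 := h1 y hy
      have s2 := h2 y hy
      have t1 := mul_nonpos_of_nonneg_of_nonpos ha s1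
      have t2 := mul_nonpos_of_nonneg_of_nonpos hb s2
      linarith
end

section
/- If, in addition to the congestion game payoff structure, the resource reward function w_r is strictly decreasing for every r ∈ R, then the equilibrium resource flows are unique: for any two Nash equilibria x, y of the steady-state congestion game 𝓕, one has σ_r(x) = σ_r(y) for every r ∈ R. -/
open Finset

variable {C : Type*} {S U : C → Type*} {R : Type*}

/-!
Each equilibrium satisfies a variational inequality: a class puts its mass only on best
responses, so switching to the other equilibrium's distribution cannot raise its total payoff.
Adding the two inequalities and exchanging the sums over classes, states, policies and resources
turns the payoff pairing into `λ · ∑ r, (σ_r(x) - σ_r(y)) (w_r(σ_r(x)) - w_r(σ_r(y)))`. This is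
nonnegative, while each term is nonpositive, and zero only when `σ_r(x) = σ_r(y)`, because `w_r` is
strictly decreasing.
-/

theorem sum_mul_le_sum_mul_of_isMax_on_support {ι : Type*} [Fintype ι] {x y F : ι → ℝ}
    (hx : ∀ i, 0 ≤ x i) (hy : ∀ i, 0 ≤ y i) (hxy : ∑ i, y i = ∑ i, x i)
    (hF : ∀ i, 0 < x i → ∀ j, F j ≤ F i) :
    ∑ i, y i * F i ≤ ∑ i, x i * F i := by
  by_cases hsupp : ∃ i₀, 0 < x i₀
  · obtain ⟨i₀, hi₀⟩ := hsupp
    have hxF : ∀ i, x i * F i = x i * F i₀ := fun i => by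
      rcases (hx i).eq_or_lt with h | h
      · simp [← h]
      · rw [le_antisymm (hF i₀ hi₀ i) (hF i h i₀)]
    calc ∑ i, y i * F i ≤ ∑ i, y i * F i₀ :=
          sum_le_sum fun i _ => mul_le_mul_of_nonneg_left (hF i₀ hi₀ i) (hy i)
      _ = ∑ i, x i * F i := by simp only [← sum_mul, hxy, hxF]
  · push Not at hsupp
    have hx0 : ∀ i, x i = 0 := fun i => le_antisymm (hsupp i) (hx i)
    have hy0 : ∀ i, y i = 0 := by
      simpa [hx0, sum_eq_zero_iff_of_nonneg fun i _ => hy i] using hxy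
    simp [hx0, hy0]

theorem sum_sigmaX_mul [Fintype C] [∀ c, Fintype (S c)] [∀ c, Fintype (U c)]
    [Fintype R] [DecidableEq R] (lam : ℝ) (use : (c : C) → U c → S c → Finset R)
    (η : (c : C) → U c → S c → ℝ) (z : (c : C) → U c → ℝ) (g : R → ℝ) :
    ∑ r, sigmaX lam use η z r * g r
      = lam * ∑ c, ∑ u, z c u * ∑ s, η c u s * ∑ r ∈ use c u s, g r := by
  have hexpand : ∀ c (u : U c), z c u * ∑ s, η c u s * ∑ r ∈ use c u s, g r
      = ∑ s, ∑ r, if r ∈ use c u s then η c u s * z c u * g r else 0 := fun c u => by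
    simp only [← sum_filter, filter_mem_eq_inter, univ_inter, mul_sum]
    exact sum_congr rfl fun s _ => sum_congr rfl fun r _ => by ring
  simp only [sigmaX, mul_assoc, ← mul_sum]
  simp only [hexpand, sum_mul, ite_mul, zero_mul]
  congr 1
  rw [sum_comm]
  exact sum_congr rfl fun c _ =>
    (sum_comm.trans (sum_congr rfl fun s _ => sum_comm)).trans sum_comm

theorem StrictAnti.sub_mul_sub_neg {f : ℝ → ℝ} (hf : StrictAnti f) {a b : ℝ}
    (hab : a ≠ b) :
    (a - b) * (f a - f b) < 0 := by
  rcases hab.lt_or_gt with h | h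
  · exact mul_neg_of_neg_of_pos (sub_neg.2 h) (sub_pos.2 (hf h))
  · exact mul_neg_of_pos_of_neg (sub_pos.2 h) (sub_neg.2 (hf h))

theorem eq_of_sum_sub_mul_sub_nonneg {ι : Type*} [Fintype ι] {f : ι → ℝ → ℝ}
    (hf : ∀ i, StrictAnti (f i)) {a b : ι → ℝ}
    (h : 0 ≤ ∑ i, (a i - b i) * (f i (a i) - f i (b i))) : a = b := by
  have hle : ∀ i ∈ univ, (a i - b i) * (f i (a i) - f i (b i)) ≤ 0 := fun i _ => by
    rcases eq_or_ne (a i) (b i) with hab | hab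
    · simp [hab]
    · exact ((hf i).sub_mul_sub_neg hab).le
  by_contra hne
  obtain ⟨i, hi⟩ := Function.ne_iff.1 hne
  have hlt : ∑ i, (a i - b i) * (f i (a i) - f i (b i)) < ∑ _i : ι, (0 : ℝ) :=
    sum_lt_sum hle ⟨i, mem_univ i, (hf i).sub_mul_sub_neg hi⟩
  rw [sum_const_zero] at hlt
  exact hlt.not_ge h

theorem stmt9_general [Fintype C]
    [∀ c, Fintype (S c)]
    [∀ c, Fintype (U c)]
    [Fintype R] [DecidableEq R]
    (m : C → ℝ) (lam : ℝ) (hlam : 0 < lam)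
    (η : (c : C) → U c → S c → ℝ)
    (use : (c : C) → U c → S c → Finset R)
    (w : R → ℝ → ℝ) (hanti : ∀ r, StrictAnti (w r))
    (x y : (c : C) → U c → ℝ)
    (hxX : ∀ c, (∀ u, 0 ≤ x c u) ∧ (∑ u, x c u) = m c)
    (hyX : ∀ c, (∀ u, 0 ≤ y c u) ∧ (∑ u, y c u) = m c)
    (hxNE : ∀ c (u : U c), 0 < x c u →
        ∀ v, Fcal lam use η w x c v ≤ Fcal lam use η w x c u)
    (hyNE : ∀ c (u : U c), 0 < y c u →
        ∀ v, Fcal lam use η w y c v ≤ Fcal lam use η w y c u) :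
    ∀ r, sigmaX lam use η x r = sigmaX lam use η y r := by
  set σ := sigmaX lam use η
  have hx : ∑ c, ∑ u, y c u * Fcal lam use η w x c u
      ≤ ∑ c, ∑ u, x c u * Fcal lam use η w x c u :=
    sum_le_sum fun c _ => sum_mul_le_sum_mul_of_isMax_on_support (hxX c).1 (hyX c).1
      ((hyX c).2.trans (hxX c).2.symm) (hxNE c)
  have hy : ∑ c, ∑ u, x c u * Fcal lam use η w y c u
      ≤ ∑ c, ∑ u, y c u * Fcal lam use η w y c u :=
    sum_le_sum fun c _ => sum_mul_le_sum_mul_of_isMax_on_support (hyX c).1 (hxX c).1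
      ((hxX c).2.trans (hyX c).2.symm) (hyNE c)
  have hpairing : ∀ z z' : (c : C) → U c → ℝ,
      lam * ∑ c, ∑ u, z c u * Fcal lam use η w z' c u = ∑ r, σ z r * w r (σ z' r) :=
    fun z z' => (sum_sigmaX_mul lam use η z fun r => w r (σ z' r)).symm
  have hmono : 0 ≤ ∑ r, (σ x r - σ y r) * (w r (σ x r) - w r (σ y r)) := by
    have h := mul_nonneg hlam.le (add_nonneg (sub_nonneg.2 hx) (sub_nonneg.2 hy))
    simp only [mul_add, mul_sub, hpairing] at h
    simp only [sub_mul, mul_sub, sum_sub_distrib]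
    linarith
  exact congrFun (eq_of_sum_sub_mul_sub_nonneg hanti hmono)

/-- If every resource reward `w_r` is strictly decreasing, then the equilibrium
resource flows of the steady-state congestion game are unique: any two Nash equilibria induce
the same flow on every resource. -/
theorem stmt9 [Fintype C] [Nonempty C]
    [∀ c, Fintype (S c)] [∀ c, Nonempty (S c)]
    [∀ c, Fintype (U c)] [∀ c, Nonempty (U c)]
    [Fintype R] [DecidableEq R]
    (m : C → ℝ) (hm : ∀ c, 0 < m c) (lam : ℝ) (hlam : 0 < lam)
    (η : (c : C) → U c → S c → ℝ)
    (hη0 : ∀ c (u : U c) s, 0 ≤ η c u s) (hη1 : ∀ c (u : U c), ∑ s, η c u s = 1)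
    (use : (c : C) → U c → S c → Finset R)
    (w : R → ℝ → ℝ) (hw : ∀ r, Continuous (w r)) (hanti : ∀ r, StrictAnti (w r))
    (x y : (c : C) → U c → ℝ)
    (hxX : ∀ c, (∀ u, 0 ≤ x c u) ∧ (∑ u, x c u) = m c)
    (hyX : ∀ c, (∀ u, 0 ≤ y c u) ∧ (∑ u, y c u) = m c)
    (hxNE : ∀ c (u : U c), 0 < x c u →
        ∀ v, Fcal lam use η w x c v ≤ Fcal lam use η w x c u)
    (hyNE : ∀ c (u : U c), 0 < y c u →
        ∀ v, Fcal lam use η w y c v ≤ Fcal lam use η w y c u) :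
    ∀ r, sigmaX lam use η x r = sigmaX lam use η y r :=
  stmt9_general m lam hlam η use w hanti x y hxX hyX hxNE hyNE
end

section
/- Under the congestion game payoff structure with each w_r nonincreasing, the set of mixed stationary Nash equilibria (MSNE) is compact and convex. Furthermore, if each w_r is strictly decreasing, then for any two MSNE μ and μ̃ one has σ_r(μ) = σ_r(μ̃) for every resource r ∈ R, where σ_r(μ) = λ·Σ_{c∈C} Σ_{s∈S^c} Σ_{u∈U^c : r∈u(s)} μ^c[s,u]. -/
open Finset

variable {C : Type*} {S U : C → Type*} {R : Type*}

/-- Membership in the state-policy distribution space `X`. -/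
def MemX [∀ c, Fintype (S c)] [∀ c, Fintype (U c)]
    (m : C → ℝ) (μ : (c : C) → S c → U c → ℝ) : Prop :=
  ∀ c, (∀ s u, 0 ≤ μ c s u) ∧ (∑ s, ∑ u, μ c s u) = m c

/-- Mixed stationary Nash equilibrium: every policy with positive mass is payoff maximizing,
and the state distribution of each policy is the stationary one. -/
def IsMSNE [∀ c, Fintype (S c)]
    (F : (c : C) → ((c' : C) → S c' → U c' → ℝ) → U c → ℝ)
    (η : (c : C) → U c → S c → ℝ)
    (μ : (c : C) → S c → U c → ℝ) : Prop :=
  ∀ (c : C) (u : U c),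
    ((0 < ∑ s, μ c s u) → ∀ v, F c μ v ≤ F c μ u) ∧
    (∀ s, μ c s u = η c u s * ∑ s', μ c s' u)

/-- Flow on resource `r` induced by the state-policy distribution `μ`. -/
def sigmaMu [Fintype C] [∀ c, Fintype (S c)] [∀ c, Fintype (U c)] [Fintype R] [DecidableEq R]
    (lam : ℝ) (use : (c : C) → U c → S c → Finset R)
    (μ : (c : C) → S c → U c → ℝ) (r : R) : ℝ :=
  lam * ∑ c, ∑ s, ∑ u, if r ∈ use c u s then μ c s u else 0

/-- Congestion payoff map `F^c_u(μ)`. -/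
noncomputable def Fcong [Fintype C] [∀ c, Fintype (S c)] [∀ c, Fintype (U c)]
    [Fintype R] [DecidableEq R]
    (lam : ℝ) (use : (c : C) → U c → S c → Finset R) (η : (c : C) → U c → S c → ℝ)
    (w : R → ℝ → ℝ) (μ : (c : C) → S c → U c → ℝ) (c : C) (u : U c) : ℝ :=
  ∑ s, η c u s * ∑ r ∈ use c u s, w r (sigmaMu lam use μ r)

/-!
The policy masses `x^c_u = μ^c[S^c,u]` of an MSNE satisfy the variational inequality
`∑_u (x_u - y_u) F^c_u(μ) ≥ 0` against any other `y ∈ X`. For two MSNE `μ, μ'`, adding the two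
inequalities gives `∑_{c,u} (x_u - x'_u) (F^c_u(μ) - F^c_u(μ')) ≥ 0`. By stationarity both the
flows and the payoffs are linear in the policy masses through the same coefficients
`A^c_{u,r} = ∑_{s : r ∈ u(s)} η^{c,u}(s)`, so this sum equals
`λ⁻¹ ∑_r (σ_r(μ) - σ_r(μ')) (w_r(σ_r(μ)) - w_r(σ_r(μ')))`, whose terms are `≤ 0` for antitone `w_r`.
Hence every term vanishes: all MSNE see the same rewards `w_r(σ_r)`, and the same flows when the
`w_r` are strictly decreasing. A convex combination of two MSNE has flows between theirs, hence
again the same rewards and payoffs, so it is an MSNE. Compactness holds because `X` is compact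
and the equilibrium conditions are closed.
-/

theorem Antitone.sub_mul_sub_nonpos {f : ℝ → ℝ} (hf : Antitone f) (a b : ℝ) :
    (a - b) * (f a - f b) ≤ 0 := by
  rcases le_total a b with h | h
  · exact mul_nonpos_of_nonpos_of_nonneg (sub_nonpos.2 h) (sub_nonneg.2 (hf h))
  · exact mul_nonpos_of_nonneg_of_nonpos (sub_nonneg.2 h) (sub_nonpos.2 (hf h))

theorem Antitone.apply_eq_of_mem_uIcc {f : ℝ → ℝ} (hf : Antitone f) {a b x : ℝ}
    (hab : f a = f b) (hx : x ∈ Set.uIcc a b) : f x = f a := by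
  rcases le_total a b with h | h
  · rw [Set.uIcc_of_le h] at hx
    exact le_antisymm (hf hx.1) (hab.trans_le (hf hx.2))
  · rw [Set.uIcc_of_ge h] at hx
    exact le_antisymm ((hf hx.1).trans_eq hab.symm) (hf hx.2)

def policyMass [∀ c, Fintype (S c)] (μ : (c : C) → S c → U c → ℝ) (c : C) (u : U c) : ℝ :=
  ∑ s, μ c s u

def useProb [∀ c, Fintype (S c)] [DecidableEq R]
    (η : (c : C) → U c → S c → ℝ) (use : (c : C) → U c → S c → Finset R)
    (c : C) (u : U c) (r : R) : ℝ :=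
  ∑ s, if r ∈ use c u s then η c u s else 0

section Game

variable [∀ c, Fintype (S c)] {m : C → ℝ}
  {F : (c : C) → ((c' : C) → S c' → U c' → ℝ) → U c → ℝ} {η : (c : C) → U c → S c → ℝ}
  {μ ν : (c : C) → S c → U c → ℝ}

theorem IsMSNE.add_smul (hμ : IsMSNE F η μ) (hν : IsMSNE F η ν) {t t' : ℝ}
    (ht' : 0 ≤ t') (hμ0 : ∀ c u, 0 ≤ policyMass μ c u)
    (hμF : ∀ c u, F c (t • μ + t' • ν) u = F c μ u)
    (hνF : ∀ c u, F c (t • μ + t' • ν) u = F c ν u) : IsMSNE F η (t • μ + t' • ν) := by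
  have hmass : ∀ c u, ∑ s, (t • μ + t' • ν) c s u = t * policyMass μ c u + t' * policyMass ν c u :=
    fun c u => by simp [policyMass, Finset.sum_add_distrib, Finset.mul_sum]
  refine fun c u => ⟨fun hpos v => ?_, fun s => ?_⟩
  · rw [hmass] at hpos
    rcases (hμ0 c u).eq_or_lt with h0 | hpos_μ
    · rw [← h0, mul_zero, zero_add] at hpos
      simpa only [hνF] using (hν c u).1 (pos_of_mul_pos_right hpos ht') v
    · simpa only [hμF] using (hμ c u).1 hpos_μ v
  · rw [hmass]
    simp only [Pi.add_apply, Pi.smul_apply, smul_eq_mul, policyMass]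
    rw [(hμ c u).2 s, (hν c u).2 s]
    ring

theorem isClosed_setOf_isMSNE (hF : ∀ c u, Continuous fun μ => F c μ u) :
    IsClosed {μ | IsMSNE F η μ} := by
  simp only [IsMSNE, Set.ofPred_forall, Set.ofPred_and, imp_iff_not_or, not_lt, Set.ofPred_or]
  exact isClosed_iInter fun c => isClosed_iInter fun u =>
    ((isClosed_le (by fun_prop) continuous_const).union
      (isClosed_iInter fun v => isClosed_le (hF c v) (hF c u))).inter
    (isClosed_iInter fun s => isClosed_eq (by fun_prop) (by fun_prop))

variable [∀ c, Fintype (U c)]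

theorem MemX.policyMass_nonneg (hμ : MemX m μ) (c : C) (u : U c) : 0 ≤ policyMass μ c u :=
  Finset.sum_nonneg fun s _ => (hμ c).1 s u

theorem MemX.sum_policyMass (hμ : MemX m μ) (c : C) : ∑ u, policyMass μ c u = m c := by
  unfold policyMass
  rw [Finset.sum_comm]
  exact (hμ c).2

theorem MemX.le_mass (hμ : MemX m μ) (c : C) (s : S c) (u : U c) : μ c s u ≤ m c :=
  calc μ c s u ≤ ∑ u', μ c s u' := Finset.single_le_sum (fun u' _ => (hμ c).1 s u') (mem_univ u)
    _ ≤ ∑ s', ∑ u', μ c s' u' :=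
      Finset.single_le_sum (fun s' _ => Finset.sum_nonneg fun u' _ => (hμ c).1 s' u') (mem_univ s)
    _ = m c := (hμ c).2

theorem IsMSNE.sum_policyMass_mul_le [∀ c, Nonempty (U c)] (hν : MemX m ν) (hN : IsMSNE F η ν)
    (hμ : MemX m μ) (c : C) :
    ∑ u, policyMass μ c u * F c ν u ≤ ∑ u, policyMass ν c u * F c ν u := by
  obtain ⟨u₀, -, hu₀⟩ := Finset.exists_max_image univ (F c ν) univ_nonempty
  have hbest : ∀ u, policyMass ν c u * F c ν u = policyMass ν c u * F c ν u₀ := fun u => by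
    rcases (hν.policyMass_nonneg c u).eq_or_lt with h | h
    · rw [← h, zero_mul, zero_mul]
    · rw [le_antisymm (hu₀ u (mem_univ u)) ((hN c u).1 h u₀)]
  calc ∑ u, policyMass μ c u * F c ν u
      ≤ ∑ u, policyMass μ c u * F c ν u₀ :=
        Finset.sum_le_sum fun u _ =>
          mul_le_mul_of_nonneg_left (hu₀ u (mem_univ u)) (hμ.policyMass_nonneg c u)
    _ = ∑ u, policyMass ν c u * F c ν u := by
        simp only [hbest, ← Finset.sum_mul, hμ.sum_policyMass, hν.sum_policyMass]

theorem IsMSNE.sum_sub_mul_sub_nonneg [∀ c, Nonempty (U c)] (hμ : MemX m μ) (hN : IsMSNE F η μ)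
    (hν : MemX m ν) (hN' : IsMSNE F η ν) (c : C) :
    0 ≤ ∑ u, (policyMass μ c u - policyMass ν c u) * (F c μ u - F c ν u) := by
  have h := hN.sum_policyMass_mul_le hμ hν c
  have h' := hN'.sum_policyMass_mul_le hν hμ c
  simp only [sub_mul, mul_sub, Finset.sum_sub_distrib]
  linarith

theorem convex_setOf_memX : Convex ℝ {μ : (c : C) → S c → U c → ℝ | MemX m μ} := by
  intro μ hμ ν hν t t' ht ht' htt c
  refine ⟨fun s u => ?_, ?_⟩
  · simp only [Pi.add_apply, Pi.smul_apply, smul_eq_mul]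
    exact add_nonneg (mul_nonneg ht ((hμ c).1 s u)) (mul_nonneg ht' ((hν c).1 s u))
  · simp only [Pi.add_apply, Pi.smul_apply, smul_eq_mul, Finset.sum_add_distrib, ← Finset.mul_sum,
      (hμ c).2, (hν c).2, ← add_mul, htt, one_mul]

theorem isCompact_setOf_memX : IsCompact {μ : (c : C) → S c → U c → ℝ | MemX m μ} := by
  have hclosed : IsClosed {μ : (c : C) → S c → U c → ℝ | MemX m μ} := by
    simp only [MemX, Set.ofPred_forall, Set.ofPred_and]
    exact isClosed_iInter fun c =>
      (isClosed_iInter fun s => isClosed_iInter fun u =>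
        isClosed_le continuous_const (by fun_prop)).inter
        (isClosed_eq (by fun_prop) continuous_const)
  refine (isCompact_univ_pi fun c => isCompact_univ_pi fun s => isCompact_univ_pi fun u =>
    isCompact_Icc (a := 0) (b := m c)).of_isClosed_subset hclosed fun μ hμ => ?_
  simp only [Set.mem_pi, Set.mem_univ, true_implies, Set.mem_Icc]
  exact fun c s u => ⟨(hμ c).1 s u, hμ.le_mass c s u⟩

end Game

section Congestion

variable [Fintype C] [∀ c, Fintype (S c)] [∀ c, Fintype (U c)] [Fintype R] [DecidableEq R]
  {lam : ℝ} {use : (c : C) → U c → S c → Finset R} {η : (c : C) → U c → S c → ℝ}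
  {w : R → ℝ → ℝ} {m : C → ℝ} {μ ν : (c : C) → S c → U c → ℝ}

theorem Fcong_eq_sum_useProb (c : C) (u : U c) :
    Fcong lam use η w μ c u = ∑ r, useProb η use c u r * w r (sigmaMu lam use μ r) := by
  simp only [Fcong, useProb, Finset.sum_mul, ite_mul, zero_mul, Finset.mul_sum]
  rw [Finset.sum_comm]
  simp [Finset.sum_ite_mem]

theorem sigmaMu_eq_sum_useProb (hstat : ∀ c u s, μ c s u = η c u s * policyMass μ c u) (r : R) :
    sigmaMu lam use μ r = lam * ∑ c, ∑ u, useProb η use c u r * policyMass μ c u := by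
  unfold sigmaMu useProb
  congr 1
  refine Finset.sum_congr rfl fun c _ => ?_
  rw [Finset.sum_comm]
  refine Finset.sum_congr rfl fun u _ => ?_
  rw [Finset.sum_mul]
  refine Finset.sum_congr rfl fun s _ => ?_
  rw [ite_mul, zero_mul, hstat c u s]

theorem sigmaMu_add (r : R) :
    sigmaMu lam use (μ + ν) r = sigmaMu lam use μ r + sigmaMu lam use ν r := by
  simp only [sigmaMu, Pi.add_apply, ← mul_add, ← Finset.sum_add_distrib, ite_add_zero]

theorem sigmaMu_smul (t : ℝ) (r : R) :
    sigmaMu lam use (t • μ) r = t * sigmaMu lam use μ r := by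
  simp only [sigmaMu, Pi.smul_apply, smul_eq_mul, mul_left_comm t lam, Finset.mul_sum, mul_ite,
    mul_zero]

theorem continuous_sigmaMu (lam : ℝ) (use : (c : C) → U c → S c → Finset R) (r : R) :
    Continuous fun μ : (c : C) → S c → U c → ℝ => sigmaMu lam use μ r := by
  refine continuous_const.mul (continuous_finsetSum _ fun c _ => continuous_finsetSum _ fun s _ =>
    continuous_finsetSum _ fun u _ => ?_)
  split_ifs <;> fun_prop

theorem continuous_Fcong (hw : ∀ r, Continuous (w r)) (c : C) (u : U c) :
    Continuous fun μ : (c : C) → S c → U c → ℝ => Fcong lam use η w μ c u :=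
  continuous_finsetSum _ fun _ _ => continuous_const.mul
    (continuous_finsetSum _ fun r _ => (hw r).comp (continuous_sigmaMu lam use r))

theorem Fcong_eq_of_w_sigmaMu_eq (h : ∀ r, w r (sigmaMu lam use μ r) = w r (sigmaMu lam use ν r))
    (c : C) (u : U c) : Fcong lam use η w μ c u = Fcong lam use η w ν c u := by
  simp only [Fcong, h]

theorem sum_sigmaMu_sub_mul_w_sub (hμ : ∀ c u s, μ c s u = η c u s * policyMass μ c u)
    (hν : ∀ c u s, ν c s u = η c u s * policyMass ν c u) :
    ∑ r, (sigmaMu lam use μ r - sigmaMu lam use ν r) *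
        (w r (sigmaMu lam use μ r) - w r (sigmaMu lam use ν r)) =
      lam * ∑ c, ∑ u, (policyMass μ c u - policyMass ν c u) *
        (Fcong lam use η w μ c u - Fcong lam use η w ν c u) := by
  have hσ : ∀ r, sigmaMu lam use μ r - sigmaMu lam use ν r =
      lam * ∑ c, ∑ u, useProb η use c u r * (policyMass μ c u - policyMass ν c u) := fun r => by
    simp only [sigmaMu_eq_sum_useProb hμ, sigmaMu_eq_sum_useProb hν, mul_sub,
      Finset.sum_sub_distrib]
  have hF : ∀ c u, Fcong lam use η w μ c u - Fcong lam use η w ν c u =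
      ∑ r, useProb η use c u r * (w r (sigmaMu lam use μ r) - w r (sigmaMu lam use ν r)) :=
    fun c u => by simp only [Fcong_eq_sum_useProb, mul_sub, Finset.sum_sub_distrib]
  simp only [hσ, hF, Finset.mul_sum, Finset.sum_mul]
  rw [Finset.sum_comm]
  refine Finset.sum_congr rfl fun c _ => ?_
  rw [Finset.sum_comm]
  exact Finset.sum_congr rfl fun u _ => Finset.sum_congr rfl fun r _ => by ring

variable [∀ c, Nonempty (U c)]

theorem IsMSNE.sigmaMu_sub_mul_w_sub_eq_zero (hlam : 0 < lam) (hmono : ∀ r, Antitone (w r))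
    (hμ : MemX m μ) (hN : IsMSNE (fun c μ' u => Fcong lam use η w μ' c u) η μ)
    (hν : MemX m ν) (hN' : IsMSNE (fun c μ' u => Fcong lam use η w μ' c u) η ν) (r : R) :
    (sigmaMu lam use μ r - sigmaMu lam use ν r) *
      (w r (sigmaMu lam use μ r) - w r (sigmaMu lam use ν r)) = 0 := by
  have hterm : ∀ r ∈ univ, (sigmaMu lam use μ r - sigmaMu lam use ν r) *
      (w r (sigmaMu lam use μ r) - w r (sigmaMu lam use ν r)) ≤ 0 :=
    fun r _ => (hmono r).sub_mul_sub_nonpos _ _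
  have hsum : 0 ≤ ∑ r, (sigmaMu lam use μ r - sigmaMu lam use ν r) *
      (w r (sigmaMu lam use μ r) - w r (sigmaMu lam use ν r)) := by
    rw [sum_sigmaMu_sub_mul_w_sub (fun c u s => (hN c u).2 s) (fun c u s => (hN' c u).2 s)]
    exact mul_nonneg hlam.le
      (Finset.sum_nonneg fun c _ => hN.sum_sub_mul_sub_nonneg hμ hν hN' c)
  exact (Finset.sum_eq_zero_iff_of_nonpos hterm).1 (le_antisymm (Finset.sum_nonpos hterm) hsum) r
    (mem_univ r)

theorem IsMSNE.w_sigmaMu_eq (hlam : 0 < lam) (hmono : ∀ r, Antitone (w r))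
    (hμ : MemX m μ) (hN : IsMSNE (fun c μ' u => Fcong lam use η w μ' c u) η μ)
    (hν : MemX m ν) (hN' : IsMSNE (fun c μ' u => Fcong lam use η w μ' c u) η ν) (r : R) :
    w r (sigmaMu lam use μ r) = w r (sigmaMu lam use ν r) := by
  rcases mul_eq_zero.1 (hN.sigmaMu_sub_mul_w_sub_eq_zero hlam hmono hμ hν hN' r) with h | h
  · rw [sub_eq_zero.1 h]
  · exact sub_eq_zero.1 h

theorem IsMSNE.sigmaMu_eq (hlam : 0 < lam) (hstrict : ∀ r, StrictAnti (w r))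
    (hμ : MemX m μ) (hN : IsMSNE (fun c μ' u => Fcong lam use η w μ' c u) η μ)
    (hν : MemX m ν) (hN' : IsMSNE (fun c μ' u => Fcong lam use η w μ' c u) η ν) (r : R) :
    sigmaMu lam use μ r = sigmaMu lam use ν r :=
  (hstrict r).injective (hN.w_sigmaMu_eq hlam (fun r => (hstrict r).antitone) hμ hν hN' r)

theorem convex_setOf_memX_isMSNE (hlam : 0 < lam) (hmono : ∀ r, Antitone (w r)) :
    Convex ℝ {μ | MemX m μ ∧ IsMSNE (fun c μ' u => Fcong lam use η w μ' c u) η μ} := by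
  rintro μ ⟨hμ, hN⟩ ν ⟨hν, hN'⟩ t t' ht ht' htt
  have hw : ∀ r, w r (sigmaMu lam use (t • μ + t' • ν) r) = w r (sigmaMu lam use μ r) := fun r => by
    refine (hmono r).apply_eq_of_mem_uIcc (hN.w_sigmaMu_eq hlam hmono hμ hν hN' r) ?_
    rw [← segment_eq_uIcc, sigmaMu_add, sigmaMu_smul, sigmaMu_smul]
    exact ⟨t, t', ht, ht', htt, by simp only [smul_eq_mul]⟩
  have hw' : ∀ r, w r (sigmaMu lam use (t • μ + t' • ν) r) = w r (sigmaMu lam use ν r) :=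
    fun r => (hw r).trans (hN.w_sigmaMu_eq hlam hmono hμ hν hN' r)
  exact ⟨convex_setOf_memX hμ hν ht ht' htt, hN.add_smul hN' ht' hμ.policyMass_nonneg
    (Fcong_eq_of_w_sigmaMu_eq hw) (Fcong_eq_of_w_sigmaMu_eq hw')⟩

end Congestion

theorem stmt10_general [Fintype C]
    [∀ c, Fintype (S c)]
    [∀ c, Fintype (U c)] [∀ c, Nonempty (U c)]
    [Fintype R] [DecidableEq R]
    (m : C → ℝ) (lam : ℝ) (hlam : 0 < lam)
    (η : (c : C) → U c → S c → ℝ)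
    (use : (c : C) → U c → S c → Finset R)
    (w : R → ℝ → ℝ) (hw : ∀ r, Continuous (w r)) (hmono : ∀ r, Antitone (w r)) :
    (IsCompact {μ : (c : C) → S c → U c → ℝ |
        MemX m μ ∧ IsMSNE (fun c μ' u => Fcong lam use η w μ' c u) η μ} ∧
      Convex ℝ {μ : (c : C) → S c → U c → ℝ |
        MemX m μ ∧ IsMSNE (fun c μ' u => Fcong lam use η w μ' c u) η μ}) ∧
    ((∀ r, StrictAnti (w r)) →
      ∀ μ μ' : (c : C) → S c → U c → ℝ,
        MemX m μ → IsMSNE (fun c ν u => Fcong lam use η w ν c u) η μ →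
        MemX m μ' → IsMSNE (fun c ν u => Fcong lam use η w ν c u) η μ' →
        ∀ r, sigmaMu lam use μ r = sigmaMu lam use μ' r) :=
  ⟨⟨isCompact_setOf_memX.inter_right (isClosed_setOf_isMSNE (continuous_Fcong hw)),
      convex_setOf_memX_isMSNE hlam hmono⟩,
    fun hstrict _ _ hμ hN hν hN' => hN.sigmaMu_eq hlam hstrict hμ hν hN'⟩

/-- Under the congestion game payoff structure with nonincreasing resource
rewards, the set of MSNE is compact and convex; if moreover the rewards are strictly
decreasing, then any two MSNE induce the same flow on every resource. -/
theorem stmt10 [Fintype C] [Nonempty C]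
    [∀ c, Fintype (S c)] [∀ c, Nonempty (S c)]
    [∀ c, Fintype (U c)] [∀ c, Nonempty (U c)]
    [Fintype R] [DecidableEq R]
    (m : C → ℝ) (hm : ∀ c, 0 < m c) (lam : ℝ) (hlam : 0 < lam)
    (η : (c : C) → U c → S c → ℝ)
    (hη0 : ∀ c (u : U c) s, 0 ≤ η c u s) (hη1 : ∀ c (u : U c), ∑ s, η c u s = 1)
    (use : (c : C) → U c → S c → Finset R)
    (w : R → ℝ → ℝ) (hw : ∀ r, Continuous (w r)) (hmono : ∀ r, Antitone (w r)) :
    (IsCompact {μ : (c : C) → S c → U c → ℝ |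
        MemX m μ ∧ IsMSNE (fun c μ' u => Fcong lam use η w μ' c u) η μ} ∧
      Convex ℝ {μ : (c : C) → S c → U c → ℝ |
        MemX m μ ∧ IsMSNE (fun c μ' u => Fcong lam use η w μ' c u) η μ}) ∧
    ((∀ r, StrictAnti (w r)) →
      ∀ μ μ' : (c : C) → S c → U c → ℝ,
        MemX m μ → IsMSNE (fun c ν u => Fcong lam use η w ν c u) η μ →
        MemX m μ' → IsMSNE (fun c ν u => Fcong lam use η w ν c u) η μ' →
        ∀ r, sigmaMu lam use μ r = sigmaMu lam use μ' r) :=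
  stmt10_general m lam hlam η use w hw hmono
end

section
/- Assume that each payoff component F^c : X → ℝ^{U^c} is Lipschitz continuous and each revision protocol ρ^c is Lipschitz continuous with nonnegative entries. Then for every μ₀ ∈ X there exists a unique differentiable function μ : [0,∞) → X with μ(0) = μ₀ such that d/dt μ^c[s,u](t) = f^{c,d}_{s,u}(μ(t)) + f^{c,r}_{s,u}(μ(t)) for all c ∈ C, s ∈ S^c, u ∈ U^c and all t ≥ 0 (in particular the solution remains in X for all time). Moreover, there exists K ≥ 0 such that for any two such solutions μ, ν with initial conditions μ₀, ν₀ ∈ X and every t ≥ 0, ‖μ(t) − ν(t)‖ ≤ e^{Kt}·‖μ₀ − ν₀‖. -/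
open Finset

variable {C : Type*} {S U : C → Type*}

/-- The simplex `Δ` of policy-mass vectors of total mass `mc`. -/
def simplexSet {V : Type*} [Fintype V] (mc : ℝ) : Set (V → ℝ) :=
  {σ | (∀ v, 0 ≤ σ v) ∧ (∑ v, σ v) = mc}

/-- The dynamic (state-transition) flow `f^{c,d}_{s,u}(μ)`. -/
def fdFlow [∀ c, Fintype (S c)]
    (lam : C → ℝ) (φ : (c : C) → U c → Matrix (S c) (S c) ℝ)
    (μ : (c : C) → S c → U c → ℝ) (c : C) (s : S c) (u : U c) : ℝ :=
  lam c * ((∑ s', φ c u s s' * μ c s' u) - μ c s u)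

/-- The revision flow `f^{c,r}_{s,u}(μ)`. -/
def frFlow [∀ c, Fintype (S c)] [∀ c, Fintype (U c)]
    (F : (c : C) → ((c' : C) → S c' → U c' → ℝ) → U c → ℝ)
    (ρ : (c : C) → (U c → ℝ) → (U c → ℝ) → U c → U c → ℝ)
    (μ : (c : C) → S c → U c → ℝ) (c : C) (s : S c) (u : U c) : ℝ :=
  (∑ u', μ c s u' * ρ c (F c μ) (fun v => ∑ s', μ c s' v) u' u)
    - μ c s u * ∑ u', ρ c (F c μ) (fun v => ∑ s', μ c s' v) u u'

/-- Imitative revision protocol. -/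
def IsImitative {V : Type*} [Fintype V] (mc : ℝ)
    (ρ : (V → ℝ) → (V → ℝ) → V → V → ℝ) : Prop :=
  ∃ r : (V → ℝ) → (V → ℝ) → V → V → ℝ,
    (∃ K, LipschitzOnWith K (fun p : (V → ℝ) × (V → ℝ) => r p.1 p.2)
        (Set.univ ×ˢ simplexSet mc)) ∧
    (∀ F σ, σ ∈ simplexSet (V := V) mc → ∀ u v, 0 ≤ r F σ u v) ∧
    (∀ F σ, σ ∈ simplexSet (V := V) mc → ∀ u v k : V,
        (F u ≤ F v ↔ r F σ k u - r F σ u k ≤ r F σ k v - r F σ v k)) ∧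
    (∀ F σ, σ ∈ simplexSet (V := V) mc → ∀ u v, ρ F σ u v = r F σ u v * σ v / mc)

/-- Imitative-via-comparison revision protocol: imitative with sign-preserving
conditional imitation rates. -/
def IsImitativeViaComparison {V : Type*} [Fintype V] (mc : ℝ)
    (ρ : (V → ℝ) → (V → ℝ) → V → V → ℝ) : Prop :=
  ∃ r : (V → ℝ) → (V → ℝ) → V → V → ℝ,
    (∃ K, LipschitzOnWith K (fun p : (V → ℝ) × (V → ℝ) => r p.1 p.2)
        (Set.univ ×ˢ simplexSet mc)) ∧
    (∀ F σ, σ ∈ simplexSet (V := V) mc → ∀ u v, 0 ≤ r F σ u v) ∧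
    (∀ F σ, σ ∈ simplexSet (V := V) mc → ∀ u v k : V,
        (F u ≤ F v ↔ r F σ k u - r F σ u k ≤ r F σ k v - r F σ v k)) ∧
    (∀ F σ, σ ∈ simplexSet (V := V) mc → ∀ u v,
        Real.sign (r F σ u v) = Real.sign (max 0 (F v - F u))) ∧
    (∀ F σ, σ ∈ simplexSet (V := V) mc → ∀ u v, ρ F σ u v = r F σ u v * σ v / mc)

/-- Excess payoff revision protocol. -/
def IsExcessPayoff {V : Type*} [Fintype V] (mc : ℝ)
    (ρ : (V → ℝ) → (V → ℝ) → V → V → ℝ) : Prop :=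
  ∃ τ : (V → ℝ) → V → ℝ,
    (∃ K, LipschitzWith K τ) ∧
    (∀ F v, 0 ≤ τ F v) ∧
    (∀ Fhat : V → ℝ, (∃ v, 0 < Fhat v) → 0 < ∑ v, τ Fhat v * Fhat v) ∧
    (∀ F σ, σ ∈ simplexSet (V := V) mc → ∀ u v,
        ρ F σ u v = τ (fun w => F w - (∑ w', F w' * σ w') / mc) v)

/-- Pairwise comparison revision protocol. -/
def IsPairwiseComparison {V : Type*} [Fintype V] (mc : ℝ)
    (ρ : (V → ℝ) → (V → ℝ) → V → V → ℝ) : Prop :=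
  ∃ τ : (V → ℝ) → V → V → ℝ,
    (∃ K, LipschitzWith K τ) ∧
    (∀ F u v, 0 ≤ τ F u v) ∧
    (∀ F (u v : V), Real.sign (τ F u v) = Real.sign (max 0 (F v - F u))) ∧
    (∀ F σ, σ ∈ simplexSet (V := V) mc → ∀ u v, ρ F σ u v = τ F u v)

/-- A solution of the mean dynamic (master equation) on `[0,∞)`: it remains in `X` and is
differentiable with derivative given by the sum of the dynamic and revision flows. -/
def IsEvoSolution [Fintype C] [∀ c, Fintype (S c)] [∀ c, Fintype (U c)]
    (m lam : C → ℝ) (φ : (c : C) → U c → Matrix (S c) (S c) ℝ)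
    (F : (c : C) → ((c' : C) → S c' → U c' → ℝ) → U c → ℝ)
    (ρ : (c : C) → (U c → ℝ) → (U c → ℝ) → U c → U c → ℝ)
    (μ : ℝ → (c : C) → S c → U c → ℝ) : Prop :=
  (∀ t : ℝ, 0 ≤ t → MemX m (μ t)) ∧
  ∀ t : ℝ, 0 ≤ t →
    HasDerivWithinAt μ
      (fun c s u => fdFlow lam φ (μ t) c s u + frFlow F ρ (μ t) c s u) (Set.Ici 0) t

section AuxProof
open Metric Set
section LipFrame

variable {α : Type*} [PseudoMetricSpace α] {s : Set α}

/-- Real-constant Lipschitz-on-set predicate for real-valued functions. -/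
def LipOn (K : ℝ) (f : α → ℝ) (s : Set α) : Prop :=
  0 ≤ K ∧ ∀ x ∈ s, ∀ y ∈ s, |f x - f y| ≤ K * dist x y

/-- Lipschitz and bounded on `s`. -/
def GoodOn (f : α → ℝ) (s : Set α) : Prop :=
  ∃ K B, LipOn K f s ∧ 0 ≤ B ∧ ∀ x ∈ s, |f x| ≤ B

theorem LipOn.mono {K K' : ℝ} {f : α → ℝ} (h : LipOn K f s) (hK : K ≤ K') : LipOn K' f s :=
  ⟨h.1.trans hK, fun x hx y hy => (h.2 x hx y hy).trans
    (mul_le_mul_of_nonneg_right hK dist_nonneg)⟩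

theorem lipOn_const (c : ℝ) : LipOn 0 (fun _ => c) s :=
  ⟨le_refl 0, fun x _ y _ => by simp⟩

theorem goodOn_const (c : ℝ) : GoodOn (fun _ => c) s :=
  ⟨0, |c|, lipOn_const c, abs_nonneg c, fun x _ => le_refl _⟩

theorem LipOn.add {K1 K2 : ℝ} {f g : α → ℝ} (hf : LipOn K1 f s) (hg : LipOn K2 g s) :
    LipOn (K1 + K2) (fun x => f x + g x) s := by
  refine ⟨add_nonneg hf.1 hg.1, fun x hx y hy => ?_⟩
  calc |f x + g x - (f y + g y)| ≤ |f x - f y| + |g x - g y| := by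
        rw [show f x + g x - (f y + g y) = (f x - f y) + (g x - g y) by ring]
        exact abs_add_le _ _
    _ ≤ K1 * dist x y + K2 * dist x y := add_le_add (hf.2 x hx y hy) (hg.2 x hx y hy)
    _ = (K1 + K2) * dist x y := by ring

theorem LipOn.neg {K : ℝ} {f : α → ℝ} (hf : LipOn K f s) : LipOn K (fun x => -f x) s := by
  refine ⟨hf.1, fun x hx y hy => ?_⟩
  rw [show -f x - -f y = -(f x - f y) by ring, abs_neg]
  exact hf.2 x hx y hy

theorem GoodOn.add {f g : α → ℝ} (hf : GoodOn f s) (hg : GoodOn g s) :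
    GoodOn (fun x => f x + g x) s := by
  obtain ⟨K1, B1, hL1, hB1, hb1⟩ := hf
  obtain ⟨K2, B2, hL2, hB2, hb2⟩ := hg
  exact ⟨K1 + K2, B1 + B2, hL1.add hL2, add_nonneg hB1 hB2, fun x hx =>
    (abs_add_le _ _).trans (add_le_add (hb1 x hx) (hb2 x hx))⟩

theorem GoodOn.neg {f : α → ℝ} (hf : GoodOn f s) : GoodOn (fun x => -f x) s := by
  obtain ⟨K, B, hL, hB, hb⟩ := hf
  exact ⟨K, B, hL.neg, hB, fun x hx => by rw [abs_neg]; exact hb x hx⟩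

theorem GoodOn.sub {f g : α → ℝ} (hf : GoodOn f s) (hg : GoodOn g s) :
    GoodOn (fun x => f x - g x) s := by
  have := hf.add hg.neg
  simpa [sub_eq_add_neg] using this

theorem GoodOn.mul {f g : α → ℝ} (hf : GoodOn f s) (hg : GoodOn g s) :
    GoodOn (fun x => f x * g x) s := by
  obtain ⟨K1, B1, hL1, hB1, hb1⟩ := hf
  obtain ⟨K2, B2, hL2, hB2, hb2⟩ := hg
  refine ⟨B1 * K2 + B2 * K1, B1 * B2, ⟨add_nonneg (mul_nonneg hB1 hL2.1) (mul_nonneg hB2 hL1.1), fun x hx y hy => ?_⟩, mul_nonneg hB1 hB2,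
    fun x hx => by rw [abs_mul]; exact mul_le_mul (hb1 x hx) (hb2 x hx) (abs_nonneg _) hB1⟩
  have : f x * g x - f y * g y = f x * (g x - g y) + g y * (f x - f y) := by ring
  rw [this]
  calc |f x * (g x - g y) + g y * (f x - f y)|
      ≤ |f x| * |g x - g y| + |g y| * |f x - f y| := by
        refine (abs_add_le _ _).trans (add_le_add ?_ ?_) <;> rw [abs_mul]
    _ ≤ B1 * (K2 * dist x y) + B2 * (K1 * dist x y) := by
        refine add_le_add (mul_le_mul (hb1 x hx) (hL2.2 x hx y hy) (abs_nonneg _) hB1)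
          (mul_le_mul (hb2 y hy) (hL1.2 x hx y hy) (abs_nonneg _) hB2)
    _ = (B1 * K2 + B2 * K1) * dist x y := by ring

theorem GoodOn.const_mul {f : α → ℝ} (c : ℝ) (hf : GoodOn f s) :
    GoodOn (fun x => c * f x) s := (goodOn_const c).mul hf

theorem GoodOn.sum {ι : Type*} {f : ι → α → ℝ} (t : Finset ι)
    (hf : ∀ i ∈ t, GoodOn (f i) s) : GoodOn (fun x => ∑ i ∈ t, f i x) s := by
  classical
  induction t using Finset.induction_on with
  | empty => simpa using goodOn_const 0
  | insert a t' hni ih =>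
    simp only [Finset.sum_insert hni]
    exact (hf a (Finset.mem_insert_self a t')).add
      (ih fun i hi => hf i (Finset.mem_insert_of_mem hi))

theorem GoodOn.lipOn {f : α → ℝ} (hf : GoodOn f s) : ∃ K, LipOn K f s := by
  obtain ⟨K, B, hL, _, _⟩ := hf
  exact ⟨K, hL⟩

theorem LipOn.goodOn_of_bounded {K D : ℝ} {f : α → ℝ}
    (hD : ∀ x ∈ s, ∀ y ∈ s, dist x y ≤ D) (hf : LipOn K f s) : GoodOn f s := by
  rcases s.eq_empty_or_nonempty with h | ⟨x₀, hx₀⟩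
  · exact ⟨K, 0, hf, le_refl 0, by simp [h]⟩
  · have hD0 : (0:ℝ) ≤ D := le_trans dist_nonneg (hD x₀ hx₀ x₀ hx₀)
    refine ⟨K, |f x₀| + K * D, hf, add_nonneg (abs_nonneg _) (mul_nonneg hf.1 hD0),
      fun x hx => ?_⟩
    calc |f x| = |f x₀ + (f x - f x₀)| := by ring_nf
      _ ≤ |f x₀| + |f x - f x₀| := abs_add_le _ _
      _ ≤ |f x₀| + K * D := by
          refine add_le_add le_rfl ((hf.2 x hx x₀ hx₀).trans ?_)
          exact mul_le_mul_of_nonneg_left (hD x hx x₀ hx₀) hf.1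
end LipFrame

variable {C : Type*} {S U : C → Type*}



section Setting
variable [Fintype C] [∀ c, Fintype (S c)] [∀ c, Fintype (U c)]

/-- The state-policy space as a set. -/
def Xset (m : C → ℝ) : Set ((c : C) → S c → U c → ℝ) := {μ | MemX m μ}

/-- The total flow. -/
def totalFlow (lam : C → ℝ) (φ : (c : C) → U c → Matrix (S c) (S c) ℝ)
    (F : (c : C) → ((c' : C) → S c' → U c' → ℝ) → U c → ℝ)
    (ρ : (c : C) → (U c → ℝ) → (U c → ℝ) → U c → U c → ℝ)
    (μ : (c : C) → S c → U c → ℝ) : (c : C) → S c → U c → ℝ :=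
  fun c s u => fdFlow lam φ μ c s u + frFlow F ρ μ c s u

theorem dist_coord_le (μ ν : (c : C) → S c → U c → ℝ) (c : C) (s : S c) (u : U c) :
    |μ c s u - ν c s u| ≤ dist μ ν := by
  rw [← Real.dist_eq]
  exact (dist_le_pi_dist (μ c s) (ν c s) u).trans
    ((dist_le_pi_dist (μ c) (ν c) s).trans (dist_le_pi_dist μ ν c))

theorem memX_le {m : C → ℝ} {μ : (c : C) → S c → U c → ℝ} (hμ : MemX m μ)
    (c : C) (s : S c) (u : U c) : μ c s u ≤ m c := by
  have h1 : μ c s u ≤ ∑ u', μ c s u' :=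
    Finset.single_le_sum (fun u' _ => (hμ c).1 s u') (Finset.mem_univ u)
  have h2 : ∑ u', μ c s u' ≤ ∑ s', ∑ u', μ c s' u' :=
    Finset.single_le_sum (f := fun s' => ∑ u', μ c s' u')
      (fun s' _ => Finset.sum_nonneg fun u' _ => (hμ c).1 s' u') (Finset.mem_univ s)
  exact (h1.trans h2).trans_eq (hμ c).2

theorem Xset_bounded (m : C → ℝ) {μ ν : (c : C) → S c → U c → ℝ}
    (hμ : μ ∈ Xset m) (hν : ν ∈ Xset m) : dist μ ν ≤ ∑ c, m c := by
  have hm0 : ∀ c : C, 0 ≤ m c := fun c => by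
    have := (hμ c).2 ▸ Finset.sum_nonneg fun s _ => Finset.sum_nonneg fun u _ => (hμ c).1 s u
    rw [← (hμ c).2]
    exact Finset.sum_nonneg fun s _ => Finset.sum_nonneg fun u _ => (hμ c).1 s u
  have hD : (0:ℝ) ≤ ∑ c, m c := Finset.sum_nonneg fun c _ => hm0 c
  rw [dist_pi_le_iff hD]
  intro c
  rw [dist_pi_le_iff hD]
  intro s
  rw [dist_pi_le_iff hD]
  intro u
  rw [Real.dist_eq, abs_sub_le_iff]
  have a3 : m c ≤ ∑ c', m c' := Finset.single_le_sum (fun c' _ => hm0 c') (Finset.mem_univ c)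
  have a1 := (hν c).1 s u
  have a2 := memX_le hμ c s u
  have b1 := (hμ c).1 s u
  have b2 := memX_le hν c s u
  constructor <;> linarith

theorem goodOn_coord (m : C → ℝ) (hm : ∀ c, 0 ≤ m c) (c : C) (s : S c) (u : U c) :
    GoodOn (fun μ : (c : C) → S c → U c → ℝ => μ c s u) (Xset m) :=
  ⟨1, m c, ⟨zero_le_one, fun x hx y hy => by
      simpa using dist_coord_le x y c s u⟩, hm c,
    fun x hx => by
      rw [abs_of_nonneg ((hx c).1 s u)]; exact memX_le hx c s u⟩

theorem sigma_mem_simplex {m : C → ℝ} {μ : (c : C) → S c → U c → ℝ}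
    (hμ : MemX m μ) (c : C) : (fun v => ∑ s', μ c s' v) ∈ simplexSet (m c) := by
  refine ⟨fun v => Finset.sum_nonneg fun s' _ => (hμ c).1 s' v, ?_⟩
  rw [Finset.sum_comm]
  exact (hμ c).2

theorem dist_sigma_le {μ ν : (c : C) → S c → U c → ℝ} (c : C) :
    dist (fun v => ∑ s', μ c s' v) (fun v => ∑ s', ν c s' v)
      ≤ (Fintype.card (S c) : ℝ) * dist μ ν := by
  rw [dist_pi_le_iff (by positivity)]
  intro v
  rw [Real.dist_eq]
  calc |∑ s', μ c s' v - ∑ s', ν c s' v| = |∑ s', (μ c s' v - ν c s' v)| := by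
        rw [Finset.sum_sub_distrib]
    _ ≤ ∑ s', |μ c s' v - ν c s' v| := Finset.abs_sum_le_sum_abs _ _
    _ ≤ ∑ _s' : S c, dist μ ν := Finset.sum_le_sum fun s' _ => dist_coord_le μ ν c s' v
    _ = (Fintype.card (S c) : ℝ) * dist μ ν := by
        rw [Finset.sum_const, nsmul_eq_mul, Fintype.card]

end Setting
section Setting2
variable [Fintype C] [∀ c, Fintype (S c)] [∀ c, Fintype (U c)]
variable {m : C → ℝ}
  {F : (c : C) → ((c' : C) → S c' → U c' → ℝ) → U c → ℝ}
  {ρ : (c : C) → (U c → ℝ) → (U c → ℝ) → U c → U c → ℝ}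

/-- Lipschitz+bounded property of `μ ↦ ρ c (F c μ) (σ_c μ) u u'` on `X`. -/
theorem goodOn_rhoComp
    (hFLip : ∀ c, ∃ K, LipschitzOnWith K (F c) {μ | MemX m μ})
    (hρLip : ∀ c, ∃ K, LipschitzOnWith K (fun p : (U c → ℝ) × (U c → ℝ) => ρ c p.1 p.2)
        (Set.univ ×ˢ simplexSet (m c)))
    (c : C) (u u' : U c) :
    GoodOn (fun μ => ρ c (F c μ) (fun v => ∑ s', μ c s' v) u u') (Xset m) := by
  obtain ⟨KF, hKF⟩ := hFLip c
  obtain ⟨Kρ, hKρ⟩ := hρLip c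
  have hLip : LipOn (Kρ * (KF + Fintype.card (S c)))
      (fun μ => ρ c (F c μ) (fun v => ∑ s', μ c s' v) u u') (Xset m) := by
    refine ⟨by positivity, fun x hx y hy => ?_⟩
    have hxp : ((F c x, fun v => ∑ s', x c s' v) : (U c → ℝ) × (U c → ℝ))
        ∈ Set.univ ×ˢ simplexSet (m c) := ⟨Set.mem_univ _, sigma_mem_simplex hx c⟩
    have hyp : ((F c y, fun v => ∑ s', y c s' v) : (U c → ℝ) × (U c → ℝ))
        ∈ Set.univ ×ˢ simplexSet (m c) := ⟨Set.mem_univ _, sigma_mem_simplex hy c⟩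
    have hd := hKρ.dist_le_mul _ hxp _ hyp
    have hcoord : |ρ c (F c x) (fun v => ∑ s', x c s' v) u u'
        - ρ c (F c y) (fun v => ∑ s', y c s' v) u u'|
        ≤ dist (ρ c (F c x) (fun v => ∑ s', x c s' v))
            (ρ c (F c y) (fun v => ∑ s', y c s' v)) := by
      rw [← Real.dist_eq]
      exact (dist_le_pi_dist _ _ u').trans (dist_le_pi_dist _ _ u)
    have hpair : dist ((F c x, fun v => ∑ s', x c s' v) : (U c → ℝ) × (U c → ℝ))
        (F c y, fun v => ∑ s', y c s' v) ≤ (KF + Fintype.card (S c)) * dist x y := by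
      rw [Prod.dist_eq]
      refine max_le ?_ ?_
      · calc dist (F c x) (F c y) ≤ KF * dist x y := hKF.dist_le_mul x hx y hy
          _ ≤ (KF + Fintype.card (S c)) * dist x y := by
            have : (0:ℝ) ≤ (Fintype.card (S c) : ℝ) := by positivity
            nlinarith [dist_nonneg (x := x) (y := y)]
      · calc dist (fun v => ∑ s', x c s' v) (fun v => ∑ s', y c s' v)
            ≤ (Fintype.card (S c) : ℝ) * dist x y := dist_sigma_le c
          _ ≤ (KF + Fintype.card (S c)) * dist x y := by
            have : (0:ℝ) ≤ (KF : ℝ) := KF.2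
            nlinarith [dist_nonneg (x := x) (y := y)]
    calc |ρ c (F c x) (fun v => ∑ s', x c s' v) u u'
        - ρ c (F c y) (fun v => ∑ s', y c s' v) u u'|
        ≤ Kρ * dist ((F c x, fun v => ∑ s', x c s' v) : (U c → ℝ) × (U c → ℝ))
            (F c y, fun v => ∑ s', y c s' v) := hcoord.trans hd
      _ ≤ Kρ * ((KF + Fintype.card (S c)) * dist x y) :=
          mul_le_mul_of_nonneg_left hpair Kρ.2
      _ = Kρ * (KF + Fintype.card (S c)) * dist x y := by ring
  exact hLip.goodOn_of_bounded (D := ∑ c', m c') (fun x hx y hy => Xset_bounded m hx hy)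

/-- Each coordinate of the total flow is Lipschitz and bounded on `X`. -/
theorem goodOn_totalFlow (hm : ∀ c, 0 ≤ m c)
    (lam : C → ℝ) (φ : (c : C) → U c → Matrix (S c) (S c) ℝ)
    (hFLip : ∀ c, ∃ K, LipschitzOnWith K (F c) {μ | MemX m μ})
    (hρLip : ∀ c, ∃ K, LipschitzOnWith K (fun p : (U c → ℝ) × (U c → ℝ) => ρ c p.1 p.2)
        (Set.univ ×ˢ simplexSet (m c)))
    (c : C) (s : S c) (u : U c) :
    GoodOn (fun μ => totalFlow lam φ F ρ μ c s u) (Xset m) := by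
  have hco : ∀ (s' : S c) (u' : U c),
      GoodOn (fun μ : (c : C) → S c → U c → ℝ => μ c s' u') (Xset m) :=
    fun s' u' => goodOn_coord m hm c s' u'
  have hρc : ∀ u₁ u₂ : U c,
      GoodOn (fun μ => ρ c (F c μ) (fun v => ∑ s', μ c s' v) u₁ u₂) (Xset m) :=
    fun u₁ u₂ => goodOn_rhoComp hFLip hρLip c u₁ u₂
  have h1 : GoodOn (fun μ => fdFlow lam φ μ c s u) (Xset m) := by
    unfold fdFlow
    exact GoodOn.const_mul _ ((GoodOn.sum Finset.univ fun s' _ =>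
      GoodOn.const_mul _ (hco s' u)).sub (hco s u))
  have h2 : GoodOn (fun μ => frFlow F ρ μ c s u) (Xset m) := by
    unfold frFlow
    exact (GoodOn.sum Finset.univ fun u' _ => (hco s u').mul (hρc u' u)).sub
      ((hco s u).mul (GoodOn.sum Finset.univ fun u' _ => hρc u u'))
  exact h1.add h2

end Setting2

section Setting3
variable [Fintype C] [∀ c, Fintype (S c)] [∀ c, Fintype (U c)]
variable {m lam : C → ℝ}
  {φ : (c : C) → U c → Matrix (S c) (S c) ℝ}
  {F : (c : C) → ((c' : C) → S c' → U c' → ℝ) → U c → ℝ}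
  {ρ : (c : C) → (U c → ℝ) → (U c → ℝ) → U c → U c → ℝ}

/-- The total flow has zero sum over states and policies, for every argument. -/
theorem totalFlow_sum_zero (hφ1 : ∀ c (u : U c) s', ∑ s, φ c u s s' = 1)
    (μ : (c : C) → S c → U c → ℝ) (c : C) :
    ∑ s, ∑ u, totalFlow lam φ F ρ μ c s u = 0 := by
  have hfd : ∑ s, ∑ u, fdFlow lam φ μ c s u = 0 := by
    rw [Finset.sum_comm]
    apply Finset.sum_eq_zero
    intro u _
    unfold fdFlow
    rw [← Finset.mul_sum, Finset.sum_sub_distrib, Finset.sum_comm]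
    have : ∀ s' ∈ Finset.univ, ∑ s, φ c u s s' * μ c s' u = μ c s' u := by
      intro s' _
      rw [← Finset.sum_mul, hφ1 c u s', one_mul]
    rw [Finset.sum_congr rfl this]
    simp
  have hfr : ∑ s, ∑ u, frFlow F ρ μ c s u = 0 := by
    apply Finset.sum_eq_zero
    intro s _
    unfold frFlow
    rw [Finset.sum_sub_distrib, Finset.sum_comm]
    have : ∀ u ∈ Finset.univ, μ c s u * ∑ u', ρ c (F c μ) (fun v => ∑ s', μ c s' v) u u'
        = ∑ u', μ c s u * ρ c (F c μ) (fun v => ∑ s', μ c s' v) u u' := by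
      intro u _; rw [Finset.mul_sum]
    rw [Finset.sum_congr rfl this, Finset.sum_comm (γ := U c)]
    simp
  calc ∑ s, ∑ u, totalFlow lam φ F ρ μ c s u
      = (∑ s, ∑ u, fdFlow lam φ μ c s u) + ∑ s, ∑ u, frFlow F ρ μ c s u := by
        rw [← Finset.sum_add_distrib]
        exact Finset.sum_congr rfl fun s _ => by rw [← Finset.sum_add_distrib]; rfl
    _ = 0 := by rw [hfd, hfr, add_zero]

/-- A uniform bound on the total outflow rates over `X`. -/
theorem exists_rate_bound (hlam : ∀ c, 0 < lam c)
    (hρ0 : ∀ c F' σ, σ ∈ simplexSet (m c) → ∀ u v, 0 ≤ ρ c F' σ u v)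
    (hFLip : ∀ c, ∃ K, LipschitzOnWith K (F c) {μ | MemX m μ})
    (hρLip : ∀ c, ∃ K, LipschitzOnWith K (fun p : (U c → ℝ) × (U c → ℝ) => ρ c p.1 p.2)
        (Set.univ ×ˢ simplexSet (m c))) :
    ∃ R : ℝ, 0 < R ∧ ∀ μ ∈ Xset m, ∀ (c : C) (u : U c),
      lam c + ∑ u', ρ c (F c μ) (fun v => ∑ s', μ c s' v) u u' ≤ R := by
  classical
  have h : ∀ (c : C) (u : U c), ∃ B, 0 ≤ B ∧ ∀ μ ∈ Xset m,
      |∑ u', ρ c (F c μ) (fun v => ∑ s', μ c s' v) u u'| ≤ B := by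
    intro c u
    obtain ⟨K, B, _, hB, hb⟩ := GoodOn.sum (s := Xset m) Finset.univ
      (f := fun u' μ => ρ c (F c μ) (fun v => ∑ s', μ c s' v) u u')
      (fun u' _ => goodOn_rhoComp hFLip hρLip c u u')
    exact ⟨B, hB, hb⟩
  choose B hB0 hB using h
  refine ⟨(∑ c, lam c) + (∑ c : C, ∑ u : U c, B c u) + 1, by
      have h1 : (0:ℝ) ≤ ∑ c, lam c := Finset.sum_nonneg fun c _ => (hlam c).le
      have h2 : (0:ℝ) ≤ ∑ c : C, ∑ u : U c, B c u :=
        Finset.sum_nonneg fun c _ => Finset.sum_nonneg fun u _ => hB0 c u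
      linarith, fun μ hμ c u => ?_⟩
  have h1 : lam c ≤ ∑ c', lam c' :=
    Finset.single_le_sum (fun c' _ => (hlam c').le) (Finset.mem_univ c)
  have h2 : ∑ u', ρ c (F c μ) (fun v => ∑ s', μ c s' v) u u' ≤ B c u :=
    (le_abs_self _).trans (hB c u μ hμ)
  have h3 : B c u ≤ ∑ c' : C, ∑ u' : U c', B c' u' := by
    calc B c u ≤ ∑ u' : U c, B c u' :=
        Finset.single_le_sum (fun u' _ => hB0 c u') (Finset.mem_univ u)
      _ ≤ ∑ c' : C, ∑ u' : U c', B c' u' :=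
        Finset.single_le_sum (f := fun c' => ∑ u' : U c', B c' u')
          (fun c' _ => Finset.sum_nonneg fun u' _ => hB0 c' u') (Finset.mem_univ c)
  linarith

/-- Euler steps from points of `X` stay in `X` for small times. -/
theorem euler_step_mem (hm : ∀ c, 0 < m c) (hlam : ∀ c, 0 < lam c)
    (hφ0 : ∀ c (u : U c) s s', 0 ≤ φ c u s s')
    (hφ1 : ∀ c (u : U c) s', ∑ s, φ c u s s' = 1)
    (hρ0 : ∀ c F' σ, σ ∈ simplexSet (m c) → ∀ u v, 0 ≤ ρ c F' σ u v)
    {R : ℝ} (hR : ∀ μ ∈ Xset m, ∀ (c : C) (u : U c),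
      lam c + ∑ u', ρ c (F c μ) (fun v => ∑ s', μ c s' v) u u' ≤ R)
    {μ : (c : C) → S c → U c → ℝ} (hμ : μ ∈ Xset m)
    {h : ℝ} (hh0 : 0 ≤ h) (hhR : h * R ≤ 1) :
    (μ + h • totalFlow lam φ F ρ μ) ∈ Xset m := by
  have hσ := sigma_mem_simplex hμ
  intro c
  constructor
  · -- nonnegativity
      intro s u
      have expand : (μ + h • totalFlow lam φ F ρ μ) c s u
          = h * (lam c * ∑ s', φ c u s s' * μ c s' u)
            + h * (∑ u', μ c s u' * ρ c (F c μ) (fun v => ∑ s', μ c s' v) u' u)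
            + μ c s u * (1 - h * (lam c
              + ∑ u', ρ c (F c μ) (fun v => ∑ s', μ c s' v) u u')) := by
        simp only [Pi.add_apply, Pi.smul_apply, smul_eq_mul]
        unfold totalFlow fdFlow frFlow
        ring
      rw [expand]
      have t1 : 0 ≤ lam c * ∑ s', φ c u s s' * μ c s' u :=
        mul_nonneg (hlam c).le (Finset.sum_nonneg fun s' _ =>
          mul_nonneg (hφ0 c u s s') ((hμ c).1 s' u))
      have t2 : 0 ≤ ∑ u', μ c s u' * ρ c (F c μ) (fun v => ∑ s', μ c s' v) u' u :=
        Finset.sum_nonneg fun u' _ => mul_nonneg ((hμ c).1 s u')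
          (hρ0 c _ _ (hσ c) u' u)
      have t3 : h * (lam c + ∑ u', ρ c (F c μ) (fun v => ∑ s', μ c s' v) u u') ≤ 1 := by
        calc h * _ ≤ h * R := mul_le_mul_of_nonneg_left (hR μ hμ c u) hh0
          _ ≤ 1 := hhR
      have t4 : 0 ≤ μ c s u := (hμ c).1 s u
      have := mul_nonneg t4 (by linarith : (0:ℝ) ≤ 1 - h * (lam c
        + ∑ u', ρ c (F c μ) (fun v => ∑ s', μ c s' v) u u'))
      nlinarith [mul_nonneg hh0 t1, mul_nonneg hh0 t2]
  · -- mass conservation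
    have : ∑ s, ∑ u, (μ + h • totalFlow lam φ F ρ μ) c s u
        = (∑ s, ∑ u, μ c s u) + h * ∑ s, ∑ u, totalFlow lam φ F ρ μ c s u := by
      simp only [Pi.add_apply, Pi.smul_apply, smul_eq_mul]
      rw [Finset.mul_sum, ← Finset.sum_add_distrib]
      refine Finset.sum_congr rfl fun s _ => ?_
      rw [Finset.mul_sum, ← Finset.sum_add_distrib]
    rw [this, totalFlow_sum_zero hφ1, mul_zero, add_zero]
    exact (hμ c).2

/-- `X` is closed. -/
theorem Xset_closed (m : C → ℝ) : IsClosed (Xset (S := S) (U := U) m) := by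
  have hc : ∀ (c : C) (s : S c) (u : U c),
      Continuous fun μ : (c : C) → S c → U c → ℝ => μ c s u := fun c s u =>
    (continuous_apply u).comp ((continuous_apply s).comp (continuous_apply c))
  have : Xset (S := S) (U := U) m =
      (⋂ (c : C), ⋂ (s : S c), ⋂ (u : U c), {μ | 0 ≤ μ c s u}) ∩
      ⋂ (c : C), {μ | ∑ s, ∑ u, μ c s u = m c} := by
    ext μ
    simp only [Set.mem_inter_iff, Set.mem_iInter, Set.mem_setOf_eq]
    constructor
    · exact fun h => ⟨fun c s u => (h c).1 s u, fun c => (h c).2⟩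
    · exact fun h c => ⟨fun s u => h.1 c s u, h.2 c⟩
  rw [this]
  refine IsClosed.inter (isClosed_iInter fun c => isClosed_iInter fun s =>
    isClosed_iInter fun u => isClosed_le continuous_const (hc c s u)) ?_
  exact isClosed_iInter fun c => isClosed_eq
    (continuous_finset_sum _ fun s _ => continuous_finset_sum _ fun u _ => hc c s u)
    continuous_const

/-- `X` is nonempty. -/
theorem Xset_nonempty [∀ c, Nonempty (S c)] [∀ c, Nonempty (U c)] (hm : ∀ c, 0 < m c) :
    (Xset (S := S) (U := U) m).Nonempty := by
  refine ⟨fun c _ _ => m c / ((Fintype.card (S c) : ℝ) * (Fintype.card (U c) : ℝ)), fun c => ?_⟩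
  have hS : 0 < (Fintype.card (S c) : ℝ) := by
    have := Fintype.card_pos (α := S c); positivity
  have hU : 0 < (Fintype.card (U c) : ℝ) := by
    have := Fintype.card_pos (α := U c); positivity
  constructor
  · intro s u; exact div_nonneg (hm c).le (by positivity)
  · simp only [Finset.sum_const, Finset.card_univ, nsmul_eq_mul]
    field_simp

end Setting3

section Retract

theorem abs_min_sub_min_le (a b c : ℝ) : |min a c - min b c| ≤ |a - b| := by
  have h1 := le_abs_self (a - b)
  have h2 := neg_abs_le (a - b)
  rcases le_total a c with h3 | h3 <;> rcases le_total b c with h4 | h4 <;>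
    simp only [min_eq_left, min_eq_right, h3, h4] <;> rw [abs_sub_le_iff] <;>
    constructor <;> linarith

theorem aux_inv_lip {mc : ℝ} (hmc : 0 < mc) (s t : ℝ) :
    |mc / max s mc - mc / max t mc| ≤ (1 / mc) * |s - t| := by
  set a := max s mc with ha'
  set b := max t mc with hb'
  have ha : mc ≤ a := le_max_right _ _
  have hb : mc ≤ b := le_max_right _ _
  have hap : 0 < a := lt_of_lt_of_le hmc ha
  have hbp : 0 < b := lt_of_lt_of_le hmc hb
  have hd : |a - b| ≤ |s - t| := abs_max_sub_max_le_abs s t mc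
  have key : |mc / a - mc / b| = mc * |a - b| / (a * b) := by
    rw [div_sub_div _ _ hap.ne' hbp.ne', abs_div, abs_of_pos (mul_pos hap hbp)]
    congr 1
    rw [show mc * b - a * mc = mc * (b - a) by ring, abs_mul, abs_of_pos hmc, abs_sub_comm]
  rw [key, div_le_iff₀ (mul_pos hap hbp)]
  calc mc * |a - b| ≤ mc * |s - t| := mul_le_mul_of_nonneg_left hd hmc.le
    _ = 1 / mc * |s - t| * (mc * mc) := by field_simp
    _ ≤ 1 / mc * |s - t| * (a * b) := by
        have hc : (0:ℝ) ≤ 1 / mc * |s - t| := mul_nonneg (by positivity) (abs_nonneg _)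
        exact mul_le_mul_of_nonneg_left (mul_le_mul ha hb hmc.le hap.le) hc

variable [Fintype C] [∀ c, Fintype (S c)] [∀ c, Fintype (U c)]

/-- Coordinatewise clamp into `[0, m c]`. -/
def clampv (m : C → ℝ) (x : (c : C) → S c → U c → ℝ) : (c : C) → S c → U c → ℝ :=
  fun c s u => min (max (x c s u) 0) (m c)

/-- Total clamped mass of class `c`. -/
def clampS (m : C → ℝ) (x : (c : C) → S c → U c → ℝ) (c : C) : ℝ :=
  ∑ s, ∑ u, clampv m x c s u

/-- An explicit Lipschitz retraction of the whole space onto `X`. -/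
noncomputable def retr (m : C → ℝ) (x : (c : C) → S c → U c → ℝ) : (c : C) → S c → U c → ℝ :=
  fun c s u => (m c / max (clampS m x c) (m c)) * clampv m x c s u
    + (m c - min (clampS m x c) (m c)) / ((Fintype.card (S c) : ℝ) * (Fintype.card (U c) : ℝ))

variable [∀ c, Nonempty (S c)] [∀ c, Nonempty (U c)] {m : C → ℝ}

theorem clampv_nonneg (hm : ∀ c, 0 < m c) (x : (c : C) → S c → U c → ℝ)
    (c : C) (s : S c) (u : U c) : 0 ≤ clampv m x c s u :=
  le_min (le_max_right _ _) (hm c).le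

theorem clampS_nonneg (hm : ∀ c, 0 < m c) (x : (c : C) → S c → U c → ℝ) (c : C) :
    0 ≤ clampS m x c :=
  Finset.sum_nonneg fun s _ => Finset.sum_nonneg fun u _ => clampv_nonneg hm x c s u

theorem retr_sum (x : (c : C) → S c → U c → ℝ) (c : C) :
    ∑ s, ∑ u, retr m x c s u
      = (m c / max (clampS m x c) (m c)) * clampS m x c
        + ((Fintype.card (S c) : ℝ) * (Fintype.card (U c) : ℝ)) *
          ((m c - min (clampS m x c) (m c)) /
            ((Fintype.card (S c) : ℝ) * (Fintype.card (U c) : ℝ))) := by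
  unfold retr
  rw [Finset.sum_congr rfl fun s _ => Finset.sum_add_distrib, Finset.sum_add_distrib]
  congr 1
  · rw [clampS, Finset.mul_sum]
    exact Finset.sum_congr rfl fun s _ => (Finset.mul_sum _ _ _).symm
  · simp only [Finset.sum_const, Finset.card_univ, nsmul_eq_mul]
    ring

theorem retr_mem (hm : ∀ c, 0 < m c) (x : (c : C) → S c → U c → ℝ) : retr m x ∈ Xset m := by
  intro c
  have hSc : 0 < (Fintype.card (S c) : ℝ) := by
    have := Fintype.card_pos (α := S c); positivity
  have hUc : 0 < (Fintype.card (U c) : ℝ) := by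
    have := Fintype.card_pos (α := U c); positivity
  have hA0 : 0 ≤ m c / max (clampS m x c) (m c) :=
    div_nonneg (hm c).le (le_trans (hm c).le (le_max_right _ _))
  have hB0 : 0 ≤ (m c - min (clampS m x c) (m c)) /
      ((Fintype.card (S c) : ℝ) * (Fintype.card (U c) : ℝ)) := by
    apply div_nonneg _ (by positivity)
    have := min_le_right (clampS m x c) (m c)
    linarith
  refine ⟨fun s u => add_nonneg (mul_nonneg hA0 (clampv_nonneg hm x c s u)) hB0, ?_⟩
  rw [retr_sum x c]
  have hn : ((Fintype.card (S c) : ℝ) * (Fintype.card (U c) : ℝ)) *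
      ((m c - min (clampS m x c) (m c)) /
        ((Fintype.card (S c) : ℝ) * (Fintype.card (U c) : ℝ)))
      = m c - min (clampS m x c) (m c) := by
    field_simp
  rw [hn]
  rcases le_total (clampS m x c) (m c) with h | h
  · rw [max_eq_right h, min_eq_left h, div_self (hm c).ne']
    ring
  · rw [max_eq_left h, min_eq_right h]
    have hpos : 0 < clampS m x c := lt_of_lt_of_le (hm c) h
    field_simp
    ring

theorem retr_of_mem (hm : ∀ c, 0 < m c) {x : (c : C) → S c → U c → ℝ}
    (hx : x ∈ Xset m) : retr m x = x := by
  have hcl : clampv m x = x := by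
    funext c s u
    rw [clampv, max_eq_left ((hx c).1 s u), min_eq_left (memX_le hx c s u)]
  funext c s u
  have hSc : clampS m x c = m c := by rw [clampS, hcl]; exact (hx c).2
  rw [retr, hSc, hcl, max_self, min_self, div_self (hm c).ne', sub_self, zero_div]
  ring

theorem retr_lipschitz (hm : ∀ c, 0 < m c) :
    ∃ K : ℝ, 0 ≤ K ∧ ∀ x y : (c : C) → S c → U c → ℝ,
      dist (retr m x) (retr m y) ≤ K * dist x y := by
  have hclamp : ∀ (c : C) (s : S c) (u : U c),
      GoodOn (fun x : (c : C) → S c → U c → ℝ => clampv m x c s u) Set.univ := by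
    intro c s u
    refine ⟨1, m c, ⟨zero_le_one, fun x _ y _ => ?_⟩, (hm c).le, fun x _ => ?_⟩
    · calc |clampv m x c s u - clampv m y c s u|
          ≤ |max (x c s u) 0 - max (y c s u) 0| := abs_min_sub_min_le _ _ _
        _ ≤ |x c s u - y c s u| := abs_max_sub_max_le_abs _ _ _
        _ ≤ dist x y := by simpa using dist_coord_le x y c s u
        _ = 1 * dist x y := (one_mul _).symm
    · rw [abs_of_nonneg (clampv_nonneg hm x c s u)]
      exact min_le_right _ _
  have hS : ∀ c : C, GoodOn (fun x : (c : C) → S c → U c → ℝ => clampS m x c) Set.univ :=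
    fun c => GoodOn.sum Finset.univ fun s _ => GoodOn.sum Finset.univ fun u _ => hclamp c s u
  have hgood : ∀ (c : C) (s : S c) (u : U c),
      GoodOn (fun x : (c : C) → S c → U c → ℝ => retr m x c s u) Set.univ := by
    intro c s u
    obtain ⟨KS, BS, hKS, hBS, hbS⟩ := hS c
    have hA : GoodOn (fun x : (c : C) → S c → U c → ℝ =>
        m c / max (clampS m x c) (m c)) Set.univ := by
      refine ⟨(1 / m c) * KS, 1,
        ⟨mul_nonneg (div_nonneg zero_le_one (hm c).le) hKS.1, fun x _ y _ => ?_⟩,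
        zero_le_one, fun x _ => ?_⟩
      · calc |m c / max (clampS m x c) (m c) - m c / max (clampS m y c) (m c)|
            ≤ (1 / m c) * |clampS m x c - clampS m y c| := aux_inv_lip (hm c) _ _
          _ ≤ (1 / m c) * (KS * dist x y) := by
              refine mul_le_mul_of_nonneg_left ?_ (div_nonneg zero_le_one (hm c).le)
              exact hKS.2 x (Set.mem_univ x) y (Set.mem_univ y)
          _ = (1 / m c) * KS * dist x y := by ring
      · rw [abs_of_nonneg (div_nonneg (hm c).le (le_trans (hm c).le (le_max_right _ _)))]
        rw [div_le_one (lt_of_lt_of_le (hm c) (le_max_right _ _))]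
        exact le_max_right _ _
    have hB : GoodOn (fun x : (c : C) → S c → U c → ℝ =>
        (m c - min (clampS m x c) (m c)) /
          ((Fintype.card (S c) : ℝ) * (Fintype.card (U c) : ℝ))) Set.univ := by
      have hSc : (1:ℝ) ≤ (Fintype.card (S c) : ℝ) := Nat.one_le_cast.mpr Fintype.card_pos
      have hUc : (1:ℝ) ≤ (Fintype.card (U c) : ℝ) := Nat.one_le_cast.mpr Fintype.card_pos
      set n : ℝ := (Fintype.card (S c) : ℝ) * (Fintype.card (U c) : ℝ) with hn
      have h1n : (1:ℝ) ≤ n := by nlinarith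
      have hnp : (0:ℝ) < n := lt_of_lt_of_le zero_lt_one h1n
      refine ⟨(1 / n) * KS, m c,
        ⟨mul_nonneg (div_nonneg zero_le_one hnp.le) hKS.1, fun x _ y _ => ?_⟩,
        (hm c).le, fun x _ => ?_⟩
      · rw [div_sub_div_same, abs_div, abs_of_pos hnp, div_le_iff₀ hnp]
        have h1 : |m c - min (clampS m x c) (m c) - (m c - min (clampS m y c) (m c))|
            = |min (clampS m x c) (m c) - min (clampS m y c) (m c)| := by
          rw [show m c - min (clampS m x c) (m c) - (m c - min (clampS m y c) (m c))
            = -(min (clampS m x c) (m c) - min (clampS m y c) (m c)) by ring, abs_neg]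
        rw [h1]
        calc |min (clampS m x c) (m c) - min (clampS m y c) (m c)|
            ≤ |clampS m x c - clampS m y c| := abs_min_sub_min_le _ _ _
          _ ≤ KS * dist x y := hKS.2 x (Set.mem_univ x) y (Set.mem_univ y)
          _ = 1 / n * KS * dist x y * n := by field_simp
      · have h0 : 0 ≤ m c - min (clampS m x c) (m c) := by
          have := min_le_right (clampS m x c) (m c); linarith
        have h2 : 0 ≤ min (clampS m x c) (m c) :=
          le_min (clampS_nonneg hm x c) (hm c).le
        rw [abs_of_nonneg (div_nonneg h0 hnp.le), div_le_iff₀ hnp]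
        nlinarith [hm c]
    exact (hA.mul (hclamp c s u)).add hB
  have hK : ∀ (c : C) (s : S c) (u : U c), ∃ K : ℝ, 0 ≤ K ∧
      ∀ x y : (c : C) → S c → U c → ℝ,
        |retr m x c s u - retr m y c s u| ≤ K * dist x y := by
    intro c s u
    obtain ⟨K, B, hKL, _, _⟩ := hgood c s u
    exact ⟨K, hKL.1, fun x y => hKL.2 x (Set.mem_univ x) y (Set.mem_univ y)⟩
  choose K hK0 hKb using hK
  refine ⟨∑ c, ∑ s, ∑ u, K c s u, Finset.sum_nonneg fun c _ => Finset.sum_nonneg fun s _ =>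
    Finset.sum_nonneg fun u _ => hK0 c s u, fun x y => ?_⟩
  have hKtot : (0:ℝ) ≤ (∑ c, ∑ s, ∑ u, K c s u) * dist x y :=
    mul_nonneg (Finset.sum_nonneg fun c _ => Finset.sum_nonneg fun s _ =>
      Finset.sum_nonneg fun u _ => hK0 c s u) dist_nonneg
  rw [dist_pi_le_iff hKtot]
  intro c
  rw [dist_pi_le_iff hKtot]
  intro s
  rw [dist_pi_le_iff hKtot]
  intro u
  rw [Real.dist_eq]
  refine (hKb c s u x y).trans (mul_le_mul_of_nonneg_right ?_ dist_nonneg)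
  calc K c s u ≤ ∑ u', K c s u' :=
      Finset.single_le_sum (fun u' _ => hK0 c s u') (Finset.mem_univ u)
    _ ≤ ∑ s', ∑ u', K c s' u' :=
      Finset.single_le_sum (f := fun s' => ∑ u', K c s' u')
        (fun s' _ => Finset.sum_nonneg fun u' _ => hK0 c s' u') (Finset.mem_univ s)
    _ ≤ ∑ c', ∑ s', ∑ u', K c' s' u' :=
      Finset.single_le_sum (f := fun c' => ∑ s', ∑ u', K c' s' u')
        (fun c' _ => Finset.sum_nonneg fun s' _ => Finset.sum_nonneg fun u' _ => hK0 c' s' u')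
        (Finset.mem_univ c)

end Retract

section GlobalSol
open Filter

variable {E : Type*} [NormedAddCommGroup E] [NormedSpace ℝ E] [CompleteSpace E]

theorem icc_deriv_to_ici {α : ℝ → E} {g : E → E} {a : ℝ}
    (hd : ∀ t ∈ Set.Icc (0:ℝ) a, HasDerivWithinAt α (g (α t)) (Set.Icc 0 a) t)
    {t : ℝ} (ht : t ∈ Set.Ico (0:ℝ) a) :
    HasDerivWithinAt α (g (α t)) (Set.Ici t) t := by
  refine (hd t ⟨ht.1, ht.2.le⟩).mono_of_mem_nhdsWithin ?_
  rw [mem_nhdsWithin]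
  exact ⟨Set.Iio a, isOpen_Iio, ht.2, fun z hz => ⟨le_trans ht.1 hz.2, hz.1.le⟩⟩

theorem sols_agree {α β : ℝ → E} {g : E → E} {Kg : NNReal} (hLip : LipschitzWith Kg g) {a : ℝ}
    (ha : 0 ≤ a)
    (hdα : ∀ t ∈ Set.Icc (0:ℝ) a, HasDerivWithinAt α (g (α t)) (Set.Icc 0 a) t)
    (hdβ : ∀ t ∈ Set.Icc (0:ℝ) a, HasDerivWithinAt β (g (β t)) (Set.Icc 0 a) t)
    (h0 : α 0 = β 0) : Set.EqOn α β (Set.Icc 0 a) := by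
  refine ODE_solution_unique_of_mem_Icc_right (v := fun _ => g) (s := fun _ => Set.univ)
    (fun t _ => hLip.lipschitzOnWith) ?_ (fun t ht => icc_deriv_to_ici hdα ht)
    (fun _ _ => Set.mem_univ _) ?_ (fun t ht => icc_deriv_to_ici hdβ ht)
    (fun _ _ => Set.mem_univ _) h0
  · exact fun t ht => ((hdα t ht).continuousWithinAt)
  · exact fun t ht => ((hdβ t ht).continuousWithinAt)

theorem global_sol {g : E → E} {Kg : NNReal} (hLip : LipschitzWith Kg g)
    {Bg : ℝ} (hbd : ∀ x, ‖g x‖ ≤ Bg) (x₀ : E) :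
    ∃ α : ℝ → E, α 0 = x₀ ∧ ∀ t, 0 ≤ t → HasDerivWithinAt α (g (α t)) (Set.Ici 0) t := by
  have hBg : 0 ≤ Bg := le_trans (norm_nonneg _) (hbd x₀)
  have hsol : ∀ n : ℕ, ∃ α : ℝ → E, α 0 = x₀ ∧
      ∀ t ∈ Set.Icc (0:ℝ) (n+1), HasDerivWithinAt α (g (α t)) (Set.Icc 0 (n+1)) t := by
    intro n
    have hpl : IsPicardLindelof (fun _ : ℝ => g) (tmin := 0) (tmax := n+1)
        ⟨0, le_refl 0, by positivity⟩ x₀ (Bg.toNNReal * ((n:NNReal) + 1)) 0 Bg.toNNReal Kg :=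
      { lipschitzOnWith := fun t _ => hLip.lipschitzOnWith
        continuousOn := fun x _ => continuousOn_const
        norm_le := fun t _ x _ => (hbd x).trans (Real.le_coe_toNNReal _)
        mul_max_le := by
          simp only [NNReal.coe_mul, NNReal.coe_add, NNReal.coe_natCast, NNReal.coe_one,
            NNReal.coe_zero, sub_zero]
          rw [max_eq_left (by positivity)] }
    exact hpl.exists_eq_forall_mem_Icc_hasDerivWithinAt₀
  choose sol hsol0 hsold using hsol
  have pair : ∀ n k : ℕ, n ≤ k → ∀ t ∈ Set.Icc (0:ℝ) (n+1), sol n t = sol k t := by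
    intro n k hnk t ht
    have hsub : Set.Icc (0:ℝ) (n+1) ⊆ Set.Icc (0:ℝ) (k+1) := by
      apply Set.Icc_subset_Icc (le_refl 0)
      have : (n:ℝ) ≤ k := Nat.cast_le.mpr hnk
      linarith
    refine sols_agree hLip (by positivity) (hsold n) ?_ ((hsol0 n).trans (hsol0 k).symm) ht
    intro t' ht'
    exact ((hsold k t' (hsub ht')).mono hsub)
  refine ⟨fun t => sol ⌈t⌉₊ t, by simpa using hsol0 0, fun t ht => ?_⟩
  set n := ⌈t⌉₊ with hn
  have htn : t < (n:ℝ) + 1 := lt_of_le_of_lt (Nat.le_ceil t) (lt_add_one _)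
  have hmem : Set.Icc (0:ℝ) (n+1) ∈ nhdsWithin t (Set.Ici 0) := by
    rw [mem_nhdsWithin]
    exact ⟨Set.Iio ((n:ℝ)+1), isOpen_Iio, htn, fun z hz => ⟨hz.2, hz.1.le⟩⟩
  have heq : ∀ z ∈ Set.Icc (0:ℝ) (n+1), sol ⌈z⌉₊ z = sol n z := by
    intro z hz
    rcases le_total (⌈z⌉₊ : ℕ) n with h | h
    · refine pair _ n h z ⟨hz.1, ?_⟩
      have := Nat.le_ceil z
      linarith
    · exact (pair n _ h z hz).symm
  have hd : HasDerivWithinAt (sol n) (g (sol n t)) (Set.Ici 0) t :=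
    (hsold n t ⟨ht, htn.le⟩).mono_of_mem_nhdsWithin hmem
  have heqt : sol ⌈t⌉₊ t = sol n t := by rw [← hn]
  rw [show g (sol ⌈t⌉₊ t) = g (sol n t) by rw [heqt]]
  refine hd.congr_of_eventuallyEq ?_ heqt
  filter_upwards [hmem] with z hz
  exact heq z hz

end GlobalSol

section Collect
variable [Fintype C] [∀ c, Fintype (S c)] [∀ c, Fintype (U c)]

theorem collect_vector {s0 : Set ((c : C) → S c → U c → ℝ)}
    {f : ((c : C) → S c → U c → ℝ) → (c : C) → S c → U c → ℝ}
    (h : ∀ (c : C) (s : S c) (u : U c), GoodOn (fun x => f x c s u) s0) :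
    ∃ K B : ℝ, 0 ≤ K ∧ 0 ≤ B ∧
      (∀ x ∈ s0, ∀ y ∈ s0, dist (f x) (f y) ≤ K * dist x y) ∧
      (∀ x ∈ s0, ‖f x‖ ≤ B) := by
  have h' : ∀ (c : C) (s : S c) (u : U c), ∃ K B : ℝ, (0 ≤ K ∧ 0 ≤ B) ∧
      (∀ x ∈ s0, ∀ y ∈ s0, |f x c s u - f y c s u| ≤ K * dist x y) ∧
      ∀ x ∈ s0, |f x c s u| ≤ B := by
    intro c s u
    obtain ⟨K, B, hKL, hB, hb⟩ := h c s u
    exact ⟨K, B, ⟨hKL.1, hB⟩, fun x hx y hy => hKL.2 x hx y hy, hb⟩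
  choose K B hKB0 hKb hBb using h'
  have hsum : ∀ (g : (c : C) → S c → U c → ℝ), (∀ c s u, 0 ≤ g c s u) →
      ∀ (c : C) (s : S c) (u : U c), g c s u ≤ ∑ c', ∑ s', ∑ u', g c' s' u' := by
    intro g hg c s u
    calc g c s u ≤ ∑ u', g c s u' :=
        Finset.single_le_sum (fun u' _ => hg c s u') (Finset.mem_univ u)
      _ ≤ ∑ s', ∑ u', g c s' u' :=
        Finset.single_le_sum (f := fun s' => ∑ u', g c s' u')
          (fun s' _ => Finset.sum_nonneg fun u' _ => hg c s' u') (Finset.mem_univ s)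
      _ ≤ ∑ c', ∑ s', ∑ u', g c' s' u' :=
        Finset.single_le_sum (f := fun c' => ∑ s', ∑ u', g c' s' u')
          (fun c' _ => Finset.sum_nonneg fun s' _ => Finset.sum_nonneg fun u' _ => hg c' s' u')
          (Finset.mem_univ c)
  have hK0 : (0:ℝ) ≤ ∑ c', ∑ s', ∑ u', K c' s' u' :=
    Finset.sum_nonneg fun c _ => Finset.sum_nonneg fun s _ =>
      Finset.sum_nonneg fun u _ => (hKB0 c s u).1
  have hB0 : (0:ℝ) ≤ ∑ c', ∑ s', ∑ u', B c' s' u' :=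
    Finset.sum_nonneg fun c _ => Finset.sum_nonneg fun s _ =>
      Finset.sum_nonneg fun u _ => (hKB0 c s u).2
  refine ⟨_, _, hK0, hB0, fun x hx y hy => ?_, fun x hx => ?_⟩
  · rw [dist_pi_le_iff (mul_nonneg hK0 dist_nonneg)]
    intro c
    rw [dist_pi_le_iff (mul_nonneg hK0 dist_nonneg)]
    intro s
    rw [dist_pi_le_iff (mul_nonneg hK0 dist_nonneg)]
    intro u
    rw [Real.dist_eq]
    exact (hKb c s u x hx y hy).trans (mul_le_mul_of_nonneg_right
      (hsum K (fun c s u => (hKB0 c s u).1) c s u) dist_nonneg)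
  · rw [pi_norm_le_iff_of_nonneg hB0]
    intro c
    rw [pi_norm_le_iff_of_nonneg hB0]
    intro s
    rw [pi_norm_le_iff_of_nonneg hB0]
    intro u
    rw [Real.norm_eq_abs]
    exact (hBb c s u x hx).trans (hsum B (fun c s u => (hKB0 c s u).2) c s u)

theorem totalFlow_lip_bdd {m lam : C → ℝ} (hm : ∀ c, 0 < m c)
    {φ : (c : C) → U c → Matrix (S c) (S c) ℝ}
    {F : (c : C) → ((c' : C) → S c' → U c' → ℝ) → U c → ℝ}
    {ρ : (c : C) → (U c → ℝ) → (U c → ℝ) → U c → U c → ℝ}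
    (hFLip : ∀ c, ∃ K, LipschitzOnWith K (F c) {μ | MemX m μ})
    (hρLip : ∀ c, ∃ K, LipschitzOnWith K (fun p : (U c → ℝ) × (U c → ℝ) => ρ c p.1 p.2)
        (Set.univ ×ˢ simplexSet (m c))) :
    ∃ Kf Bf : ℝ, 0 ≤ Kf ∧ 0 ≤ Bf ∧
      (∀ x ∈ Xset m, ∀ y ∈ Xset m,
        dist (totalFlow lam φ F ρ x) (totalFlow lam φ F ρ y) ≤ Kf * dist x y) ∧
      (∀ x ∈ Xset m, ‖totalFlow lam φ F ρ x‖ ≤ Bf) :=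
  collect_vector fun c s u => goodOn_totalFlow (fun c => (hm c).le) lam φ hFLip hρLip c s u

end Collect

section Invariance
open Filter

variable [Fintype C] [∀ c, Fintype (S c)] [∀ c, Fintype (U c)]
  [∀ c, Nonempty (S c)] [∀ c, Nonempty (U c)]

theorem invariance {m lam : C → ℝ}
    {φ : (c : C) → U c → Matrix (S c) (S c) ℝ}
    {F : (c : C) → ((c' : C) → S c' → U c' → ℝ) → U c → ℝ}
    {ρ : (c : C) → (U c → ℝ) → (U c → ℝ) → U c → U c → ℝ}
    (hm : ∀ c, 0 < m c) (hlam : ∀ c, 0 < lam c)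
    (hφ0 : ∀ c (u : U c) s s', 0 ≤ φ c u s s')
    (hφ1 : ∀ c (u : U c) s', ∑ s, φ c u s s' = 1)
    (hρ0 : ∀ c F' σ, σ ∈ simplexSet (m c) → ∀ u v, 0 ≤ ρ c F' σ u v)
    (hFLip : ∀ c, ∃ K, LipschitzOnWith K (F c) {μ | MemX m μ})
    (hρLip : ∀ c, ∃ K, LipschitzOnWith K (fun p : (U c → ℝ) × (U c → ℝ) => ρ c p.1 p.2)
        (Set.univ ×ˢ simplexSet (m c)))
    {α : ℝ → (c : C) → S c → U c → ℝ}
    (hα0 : α 0 ∈ Xset m)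
    (hαd : ∀ t, 0 ≤ t →
      HasDerivWithinAt α (totalFlow lam φ F ρ (retr m (α t))) (Set.Ici 0) t) :
    ∀ t, 0 ≤ t → α t ∈ Xset m := by
  classical
  obtain ⟨Kf, Bf, hKf0, hBf0, hKf, hBf⟩ := totalFlow_lip_bdd hm hFLip hρLip (lam := lam) (φ := φ)
  obtain ⟨Kπ, hKπ0, hKπ⟩ := retr_lipschitz (S := S) (U := U) hm
  obtain ⟨R, hR0, hR⟩ := exists_rate_bound hlam hρ0 hFLip hρLip
  have Xne : (Xset (S := S) (U := U) m).Nonempty := Xset_nonempty hm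
  set X := Xset (S := S) (U := U) m with hX
  -- distance from a point to its retraction is controlled by infDist
  have hretr_dist : ∀ p : (c : C) → S c → U c → ℝ,
      dist p (retr m p) ≤ (1 + Kπ) * Metric.infDist p X := by
    intro p
    have base : ∀ q ∈ X, dist p (retr m p) ≤ (1 + Kπ) * dist p q := by
      intro q hq
      calc dist p (retr m p) ≤ dist p q + dist q (retr m p) := dist_triangle _ _ _
        _ = dist p q + dist (retr m q) (retr m p) := by rw [retr_of_mem hm hq]
        _ ≤ dist p q + Kπ * dist q p := add_le_add le_rfl (hKπ q p)
        _ = (1 + Kπ) * dist p q := by rw [dist_comm q p]; ring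
    by_contra hcon
    push_neg at hcon
    have h1Kπ : (0:ℝ) < 1 + Kπ := by linarith
    have : Metric.infDist p X < dist p (retr m p) / (1 + Kπ) := by
      rw [lt_div_iff₀ h1Kπ]
      nlinarith
    obtain ⟨q, hq, hdq⟩ := (Metric.infDist_lt_iff Xne).mp this
    have := base q hq
    rw [lt_div_iff₀ h1Kπ] at hdq
    nlinarith
  set K'' : ℝ := Kf * (2 + Kπ) with hK''
  have hK''0 : 0 ≤ K'' := mul_nonneg hKf0 (by linarith)
  set d : ℝ → ℝ := fun t => Metric.infDist (α t) X with hd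
  have hd0 : ∀ t, 0 ≤ d t := fun t => Metric.infDist_nonneg
  have key : ∀ b : ℝ, 0 ≤ b → ∀ t ∈ Set.Icc (0:ℝ) b, d t ≤ 0 := by
    intro b hb
    have hcont : ContinuousOn d (Set.Icc 0 b) := by
      have hca : ContinuousOn α (Set.Icc 0 b) := fun t ht =>
        ((hαd t ht.1).continuousWithinAt).mono (fun z hz => hz.1)
      exact (Metric.continuous_infDist_pt X).comp_continuousOn hca
    have main := le_gronwallBound_of_liminf_deriv_right_le (f := d)
      (f' := fun t => K'' * d t) (δ := 0) (K := K'') (ε := 0) (a := 0) (b := b)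
      hcont ?_ (by simp [hd, Metric.infDist_zero_of_mem hα0]) ?_
    · intro t ht
      have := main t ht
      rwa [gronwallBound_ε0, zero_mul] at this
    · -- the liminf slope condition
      intro x hx r hr
      set p := α x with hp
      set gp := totalFlow lam φ F ρ (retr m p) with hgp
      set ε₁ : ℝ := (r - K'' * d x) / 4 with hε₁
      have hε₁0 : 0 < ε₁ := by
        have hrr : K'' * d x < r := hr
        have h11 : ε₁ = (r - K'' * d x) / 4 := rfl
        linarith
      set δ' : ℝ := min (1/R) (min 1 (ε₁ / (1 + Kf))) with hδ'
      have hδ'0 : 0 < δ' := by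
        refine lt_min (by positivity) (lt_min zero_lt_one ?_)
        have : (0:ℝ) < 1 + Kf := by linarith
        positivity
      have hder : HasDerivWithinAt α gp (Set.Ici x) x :=
        (hαd x hx.1).mono (Set.Ici_subset_Ici.mpr hx.1)
      have htend := hasDerivWithinAt_iff_tendsto.mp hder
      have htend' := htend.mono_left (nhdsWithin_mono x Set.Ioi_subset_Ici_self)
      have ev1 : ∀ᶠ z in nhdsWithin x (Set.Ioi x),
          ‖z - x‖⁻¹ * ‖α z - α x - (z - x) • gp‖ < ε₁ :=
        htend'.eventually_lt_const hε₁0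
      have ev2 : ∀ᶠ z in nhdsWithin x (Set.Ioi x), z ∈ Set.Ioo x (x + δ') := by
        filter_upwards [Ioo_mem_nhdsGT (by linarith : x < x + δ')] with z hz using hz
      refine ((ev1.and ev2).mono ?_).frequently
      rintro z ⟨h1, h2⟩
      set h : ℝ := z - x with hh
      have hhpos : 0 < h := by simp only [hh]; linarith [h2.1]
      have hhδ : h < δ' := by simp only [hh]; linarith [h2.2]
      have hh1 : h ≤ 1 := le_trans hhδ.le ((min_le_right _ _).trans (min_le_left _ _))
      have hhR : h * R ≤ 1 := by
        have : h ≤ 1 / R := le_trans hhδ.le (min_le_left _ _)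
        rw [← le_div_iff₀ hR0]
        exact this
      have hhε : h * (1 + Kf) ≤ ε₁ := by
        have h3 : h ≤ ε₁ / (1 + Kf) := le_trans hhδ.le ((min_le_right _ _).trans (min_le_right _ _))
        have h4 : (0:ℝ) < 1 + Kf := by linarith
        rw [← le_div_iff₀ h4]
        exact h3
      -- choose an approximate nearest point q ∈ X
      have hq_ex : ∃ q ∈ X, dist p q < d x + h ^ 2 := by
        apply (Metric.infDist_lt_iff Xne).mp
        have h12 : Metric.infDist p X = d x := rfl
        have h13 : (0:ℝ) < h ^ 2 := by positivity
        linarith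
      obtain ⟨q, hqX, hdq⟩ := hq_ex
      set fq := totalFlow lam φ F ρ q with hfq
      have hw : q + h • fq ∈ X := euler_step_mem hm hlam hφ0 hφ1 hρ0 hR hqX hhpos.le hhR
      -- the key bound on d z
      have hnorm1 : ‖α z - α x - h • gp‖ ≤ ε₁ * h := by
        have hz : ‖z - x‖ = h := by rw [Real.norm_eq_abs, abs_of_pos hhpos]
        rw [hz] at h1
        have := (inv_mul_lt_iff₀ hhpos).mp h1
        linarith [this]
      have hgpfq : ‖gp - fq‖ ≤ K'' * d x + Kf * h ^ 2 := by
        have hrq : retr m p ∈ X := retr_mem hm p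
        have h5 : dist gp fq ≤ Kf * dist (retr m p) q := hKf _ hrq _ hqX
        have h6 : dist (retr m p) q ≤ dist (retr m p) p + dist p q := dist_triangle _ _ _
        have h7 : dist (retr m p) p ≤ (1 + Kπ) * d x := by
          rw [dist_comm]
          exact hretr_dist p
        rw [← dist_eq_norm]
        calc dist gp fq ≤ Kf * ((1 + Kπ) * d x + (d x + h ^ 2)) := by
              refine h5.trans (mul_le_mul_of_nonneg_left ?_ hKf0)
              linarith
          _ = K'' * d x + Kf * h ^ 2 := by simp only [hK'']; ring
      have hdz : d z ≤ ε₁ * h + (d x + h ^ 2) + h * (K'' * d x + Kf * h ^ 2) := by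
        have hle : d z ≤ dist (α z) (q + h • fq) := Metric.infDist_le_dist_of_mem hw
        have decomp : α z - (q + h • fq)
            = (α z - α x - h • gp) + ((α x - q) + h • (gp - fq)) := by
          rw [smul_sub]; abel
        calc d z ≤ dist (α z) (q + h • fq) := hle
          _ = ‖(α z - α x - h • gp) + ((α x - q) + h • (gp - fq))‖ := by
              rw [dist_eq_norm, decomp]
          _ ≤ ‖α z - α x - h • gp‖ + (‖α x - q‖ + ‖h • (gp - fq)‖) :=
              (norm_add_le _ _).trans (by gcongr; exact norm_add_le _ _)
          _ ≤ ε₁ * h + (d x + h ^ 2) + h * (K'' * d x + Kf * h ^ 2) := by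
              have e2 : ‖α x - q‖ ≤ d x + h ^ 2 := by
                rw [← dist_eq_norm]
                exact hdq.le
              have e3 : ‖h • (gp - fq)‖ ≤ h * (K'' * d x + Kf * h ^ 2) := by
                rw [norm_smul, Real.norm_eq_abs, abs_of_pos hhpos]
                exact mul_le_mul_of_nonneg_left hgpfq hhpos.le
              linarith [hnorm1]
      -- conclude the slope bound
      have hslope : d z - d x ≤ h * (ε₁ + h + K'' * d x + Kf * h ^ 2) := by nlinarith
      have hA : ε₁ + h + K'' * d x + Kf * h ^ 2 < r := by
        have h9 : Kf * h ^ 2 ≤ Kf * h := by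
          nlinarith [mul_nonneg (mul_nonneg hKf0 hhpos.le) (by linarith : (0:ℝ) ≤ 1 - h)]
        have h10 : h + Kf * h ≤ ε₁ := by nlinarith [hhε]
        have hrr : K'' * d x < r := hr
        have h11 : ε₁ = (r - K'' * d x) / 4 := rfl
        linarith
      have : (z - x)⁻¹ * (d z - d x) < r := by
        rw [← hh, inv_mul_lt_iff₀ hhpos]
        calc d z - d x ≤ h * (ε₁ + h + K'' * d x + Kf * h ^ 2) := hslope
          _ < h * r := by exact mul_lt_mul_of_pos_left hA hhpos
      exact this
    · intro x hx
      simp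
  intro t ht
  have h1 : d t ≤ 0 := key t ht t ⟨ht, le_refl t⟩
  have h2 : d t = 0 := le_antisymm h1 (hd0 t)
  exact ((Xset_closed m).mem_iff_infDist_zero Xne).mpr h2

end Invariance

end AuxProof


/-- If the payoffs `F^c` are Lipschitz continuous and the revision protocols
`ρ^c` are Lipschitz continuous with nonnegative entries, then through every `μ₀ ∈ X` there is a
unique solution of the mean dynamic on `[0,∞)` (remaining in `X`), and solutions depend
Lipschitz-continuously (with a Grönwall factor `e^{Kt}`) on their initial conditions. -/
theorem stmt11 [Fintype C] [Nonempty C]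
    [∀ c, Fintype (S c)] [∀ c, Nonempty (S c)]
    [∀ c, Fintype (U c)] [∀ c, Nonempty (U c)]
    (m lam : C → ℝ) (hm : ∀ c, 0 < m c) (hlam : ∀ c, 0 < lam c)
    (φ : (c : C) → U c → Matrix (S c) (S c) ℝ)
    (hφ0 : ∀ c (u : U c) s s', 0 ≤ φ c u s s')
    (hφ1 : ∀ c (u : U c) s', ∑ s, φ c u s s' = 1)
    (F : (c : C) → ((c' : C) → S c' → U c' → ℝ) → U c → ℝ)
    (hFLip : ∀ c, ∃ K, LipschitzOnWith K (F c) {μ | MemX m μ})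
    (ρ : (c : C) → (U c → ℝ) → (U c → ℝ) → U c → U c → ℝ)
    (hρ0 : ∀ c F' σ, σ ∈ simplexSet (m c) → ∀ u v, 0 ≤ ρ c F' σ u v)
    (hρLip : ∀ c, ∃ K, LipschitzOnWith K (fun p : (U c → ℝ) × (U c → ℝ) => ρ c p.1 p.2)
        (Set.univ ×ˢ simplexSet (m c))) :
    -- existence
    (∀ μ₀ : (c : C) → S c → U c → ℝ, MemX m μ₀ →
      ∃ μ : ℝ → (c : C) → S c → U c → ℝ, μ 0 = μ₀ ∧ IsEvoSolution m lam φ F ρ μ) ∧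
    -- uniqueness
    (∀ μ ν : ℝ → (c : C) → S c → U c → ℝ,
      IsEvoSolution m lam φ F ρ μ → IsEvoSolution m lam φ F ρ ν → μ 0 = ν 0 →
      ∀ t : ℝ, 0 ≤ t → μ t = ν t) ∧
    -- Lipschitz dependence on the initial condition
    (∃ K : ℝ, 0 ≤ K ∧
      ∀ μ ν : ℝ → (c : C) → S c → U c → ℝ,
        IsEvoSolution m lam φ F ρ μ → IsEvoSolution m lam φ F ρ ν →
        ∀ t : ℝ, 0 ≤ t → ‖μ t - ν t‖ ≤ Real.exp (K * t) * ‖μ 0 - ν 0‖) := by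
  classical
  obtain ⟨Kf, Bf, hKf0, hBf0, hKfL, hBfB⟩ :=
    totalFlow_lip_bdd hm hFLip hρLip (lam := lam) (φ := φ)
  obtain ⟨Kπ, hKπ0, hKπ⟩ := retr_lipschitz (S := S) (U := U) hm
  -- the Lipschitz constant for the flow on X, as NNReal
  set Kn : NNReal := Kf.toNNReal with hKn
  have hKnc : (Kn : ℝ) = Kf := Real.coe_toNNReal _ hKf0
  have hvLip : ∀ t : ℝ, LipschitzOnWith Kn (totalFlow lam φ F ρ) (Xset m) := by
    intro t
    apply LipschitzOnWith.of_dist_le_mul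
    intro x hx y hy
    rw [hKnc]
    exact hKfL x hx y hy
  -- derivative of an evo solution, as needed by the Gronwall lemmas
  have hsol_deriv : ∀ (μ : ℝ → (c : C) → S c → U c → ℝ),
      IsEvoSolution m lam φ F ρ μ → ∀ t : ℝ, 0 ≤ t →
        HasDerivWithinAt μ (totalFlow lam φ F ρ (μ t)) (Set.Ici t) t := by
    intro μ hμ t ht
    exact (hμ.2 t ht).mono (Set.Ici_subset_Ici.mpr ht)
  have hsol_cont : ∀ (μ : ℝ → (c : C) → S c → U c → ℝ),
      IsEvoSolution m lam φ F ρ μ → ∀ b : ℝ, ContinuousOn μ (Set.Icc 0 b) := by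
    intro μ hμ b t ht
    exact ((hμ.2 t ht.1).continuousWithinAt).mono (fun z hz => hz.1)
  have hsol_mem : ∀ (μ : ℝ → (c : C) → S c → U c → ℝ),
      IsEvoSolution m lam φ F ρ μ → ∀ t : ℝ, 0 ≤ t → μ t ∈ Xset m := by
    intro μ hμ t ht
    exact hμ.1 t ht
  refine ⟨?_, ?_, ?_⟩
  · -- existence
    intro μ₀ hμ₀
    set g : ((c : C) → S c → U c → ℝ) → (c : C) → S c → U c → ℝ :=
      fun x => totalFlow lam φ F ρ (retr m x) with hg
    have hgLip : LipschitzWith (Kf * Kπ).toNNReal g := by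
      apply LipschitzWith.of_dist_le_mul
      intro x y
      have h1 : dist (g x) (g y) ≤ Kf * (Kπ * dist x y) := by
        refine (hKfL _ (retr_mem hm x) _ (retr_mem hm y)).trans ?_
        exact mul_le_mul_of_nonneg_left (hKπ x y) hKf0
      refine h1.trans ?_
      rw [← mul_assoc]
      exact mul_le_mul_of_nonneg_right (Real.le_coe_toNNReal _) dist_nonneg
    have hgBdd : ∀ x, ‖g x‖ ≤ Bf := fun x => hBfB _ (retr_mem hm x)
    obtain ⟨α, hα0, hαd⟩ := global_sol hgLip hgBdd μ₀
    have hα0X : α 0 ∈ Xset m := by rw [hα0]; exact hμ₀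
    have hmemX : ∀ t, 0 ≤ t → α t ∈ Xset m :=
      invariance hm hlam hφ0 hφ1 hρ0 hFLip hρLip hα0X hαd
    refine ⟨α, hα0, hmemX, fun t ht => ?_⟩
    have hd := hαd t ht
    have : g (α t) = totalFlow lam φ F ρ (α t) := by
      rw [hg]
      simp only
      rw [retr_of_mem hm (hmemX t ht)]
    rw [this] at hd
    exact hd
  · -- uniqueness
    intro μ ν hμ hν h0 t ht
    refine ODE_solution_unique_of_mem_Icc_right (v := fun _ => totalFlow lam φ F ρ)
      (s := fun _ => Xset m) (fun _ _ => hvLip 0) (hsol_cont μ hμ t)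
      (fun z hz => hsol_deriv μ hμ z hz.1) (fun z hz => hsol_mem μ hμ z hz.1)
      (hsol_cont ν hν t) (fun z hz => hsol_deriv ν hν z hz.1)
      (fun z hz => hsol_mem ν hν z hz.1) h0 ⟨ht, le_refl t⟩
  · -- Lipschitz dependence on initial conditions
    refine ⟨(Kn : ℝ), Kn.2, fun μ ν hμ hν t ht => ?_⟩
    have key := dist_le_of_trajectories_ODE_of_mem (v := fun _ => totalFlow lam φ F ρ)
      (s := fun _ => Xset m) (fun _ _ => hvLip 0) (hsol_cont μ hμ t)
      (fun z hz => hsol_deriv μ hμ z hz.1) (fun z hz => hsol_mem μ hμ z hz.1)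
      (hsol_cont ν hν t) (fun z hz => hsol_deriv ν hν z hz.1)
      (fun z hz => hsol_mem ν hν z hz.1) (le_refl (dist (μ 0) (ν 0))) t ⟨ht, le_refl t⟩
    rw [sub_zero] at key
    calc ‖μ t - ν t‖ = dist (μ t) (ν t) := (dist_eq_norm _ _).symm
      _ ≤ dist (μ 0) (ν 0) * Real.exp ((Kn : ℝ) * t) := key
      _ = Real.exp ((Kn : ℝ) * t) * ‖μ 0 - ν 0‖ := by
          rw [dist_eq_norm, mul_comm]
end

section
/- Assume that for every class c ∈ C the revision protocol ρ^c is imitative via comparison, excess payoff, or pairwise comparison. If μ ∈ X is a mixed stationary Nash equilibrium (MSNE), then μ is a rest point of the mean dynamic, i.e. f^{c,d}_{s,u}(μ) + f^{c,r}_{s,u}(μ) = 0 for every c ∈ C, s ∈ S^c, u ∈ U^c. -/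
open Finset

section Aux
variable {V : Type*} [Fintype V]

lemma auxL1 (τ : (V → ℝ) → V → ℝ) (K : NNReal) (hlip : LipschitzWith K τ)
    (hτ0 : ∀ G v, 0 ≤ τ G v)
    (hac : ∀ G : V → ℝ, (∃ v, 0 < G v) → 0 < ∑ v, τ G v * G v)
    (Fh : V → ℝ) (hle : ∀ w, Fh w ≤ 0) (u0 : V) (h0 : Fh u0 = 0)
    (w : V) (hw : Fh w < 0) : τ Fh w = 0 := by
  classical
  have hSle : ∑ v, τ Fh v * Fh v ≤ 0 :=
    Finset.sum_nonpos fun v _ => mul_nonpos_of_nonneg_of_nonpos (hτ0 _ _) (hle v)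
  have hSge : 0 ≤ ∑ v, τ Fh v * Fh v := by
    by_contra hc
    push_neg at hc
    obtain ⟨S, hS⟩ : ∃ x, x = ∑ v, τ Fh v * Fh v := ⟨_, rfl⟩
    obtain ⟨T, hT⟩ : ∃ x, x = ∑ v, τ Fh v := ⟨_, rfl⟩
    obtain ⟨A, hA⟩ : ∃ x, x = ∑ v, |Fh v| := ⟨_, rfl⟩
    obtain ⟨n, hn⟩ : ∃ x : ℝ, x = (Fintype.card V : ℝ) := ⟨_, rfl⟩
    rw [← hS] at hc
    have hT0 : 0 ≤ T := hT ▸ Finset.sum_nonneg fun v _ => hτ0 _ _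
    have hA0 : 0 ≤ A := hA ▸ Finset.sum_nonneg fun v _ => abs_nonneg _
    have hn0 : 0 ≤ n := hn ▸ Nat.cast_nonneg _
    have hK0 : (0:ℝ) ≤ K := K.2
    have hS0 : 0 < -S := by linarith
    have hD0 : (0:ℝ) < 2 * (T + n * K + K * A + 1) := by positivity
    obtain ⟨ε, hεdef⟩ : ∃ x, x = min 1 (-S / (2 * (T + n * K + K * A + 1))) := ⟨_, rfl⟩
    have hε0 : 0 < ε := hεdef ▸ lt_min one_pos (div_pos hS0 hD0)
    have hε1 : ε ≤ 1 := hεdef ▸ min_le_left _ _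
    have hε2 : ε * (2 * (T + n * K + K * A + 1)) ≤ -S := by
      have h := hεdef ▸ min_le_right 1 (-S / (2 * (T + n * K + K * A + 1)))
      calc ε * (2 * (T + n * K + K * A + 1))
          ≤ (-S / (2 * (T + n * K + K * A + 1))) * (2 * (T + n * K + K * A + 1)) :=
            mul_le_mul_of_nonneg_right h hD0.le
        _ = -S := by field_simp
    obtain ⟨G, hG⟩ : ∃ x : V → ℝ, x = fun v => Fh v + ε := ⟨_, rfl⟩
    have hGpos : 0 < ∑ v, τ G v * G v := by
      refine hac G ⟨u0, ?_⟩
      rw [hG]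
      simpa [h0] using hε0
    have hdist : dist G Fh ≤ ε := by
      rw [dist_pi_le_iff hε0.le]
      intro i
      rw [hG, Real.dist_eq]
      simp [abs_of_nonneg hε0.le]
    have hdv : ∀ v, |τ G v - τ Fh v| ≤ K * ε := by
      intro v
      have h1 : dist (τ G v) (τ Fh v) ≤ dist (τ G) (τ Fh) := dist_le_pi_dist _ _ v
      have h2 : dist (τ G) (τ Fh) ≤ K * dist G Fh := hlip.dist_le_mul G Fh
      have h3 : (K:ℝ) * dist G Fh ≤ K * ε := mul_le_mul_of_nonneg_left hdist hK0
      rw [Real.dist_eq] at h1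
      linarith
    have key1 : ∑ v, τ G v * Fh v ≤ S + K * ε * A := by
      have h4 : ∀ v ∈ Finset.univ, τ G v * Fh v ≤ τ Fh v * Fh v + (K * ε) * |Fh v| := by
        intro v _
        have h5 : (τ G v - τ Fh v) * Fh v ≤ |τ G v - τ Fh v| * |Fh v| := by
          calc (τ G v - τ Fh v) * Fh v ≤ |(τ G v - τ Fh v) * Fh v| := le_abs_self _
            _ = |τ G v - τ Fh v| * |Fh v| := abs_mul _ _
        have h6 : |τ G v - τ Fh v| * |Fh v| ≤ (K * ε) * |Fh v| :=
          mul_le_mul_of_nonneg_right (hdv v) (abs_nonneg _)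
        have h7 : τ G v * Fh v = τ Fh v * Fh v + (τ G v - τ Fh v) * Fh v := by ring
        linarith
      calc ∑ v, τ G v * Fh v ≤ ∑ v, (τ Fh v * Fh v + (K * ε) * |Fh v|) :=
            Finset.sum_le_sum h4
        _ = S + K * ε * A := by
            rw [Finset.sum_add_distrib, ← Finset.mul_sum, ← hS, ← hA]
    have key2 : ∑ v, τ G v ≤ T + n * (K * ε) := by
      have h4 : ∀ v ∈ Finset.univ, τ G v ≤ τ Fh v + K * ε := by
        intro v _
        have := (abs_le.mp (hdv v)).2
        linarith
      calc ∑ v, τ G v ≤ ∑ v, (τ Fh v + K * ε) := Finset.sum_le_sum h4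
        _ = T + n * (K * ε) := by
            rw [Finset.sum_add_distrib, Finset.sum_const, ← hT, Finset.card_univ,
              nsmul_eq_mul, ← hn]
    have hexp : ∑ v, τ G v * G v = ∑ v, τ G v * Fh v + (∑ v, τ G v) * ε := by
      rw [Finset.sum_mul, ← Finset.sum_add_distrib]
      refine Finset.sum_congr rfl fun v _ => ?_
      rw [hG]; ring
    have h9 : (∑ v, τ G v) * ε ≤ (T + n * (K * ε)) * ε :=
      mul_le_mul_of_nonneg_right key2 hε0.le
    have h10 : (T + n * (K * ε)) * ε ≤ T * ε + n * K * ε := by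
      have hεsq : ε * ε ≤ ε := by nlinarith
      have h11 : n * K * (ε * ε) ≤ n * K * ε :=
        mul_le_mul_of_nonneg_left hεsq (mul_nonneg hn0 hK0)
      nlinarith
    nlinarith [hGpos, key1, h9, h10, hexp, hε2]
  have hSeq : ∑ v, τ Fh v * Fh v = 0 := le_antisymm hSle hSge
  by_contra hτw
  have hpos : 0 < τ Fh w := lt_of_le_of_ne (hτ0 _ _) (Ne.symm hτw)
  have hterm : τ Fh w * Fh w < 0 := mul_neg_of_pos_of_neg hpos hw
  have hrest : ∑ v ∈ Finset.univ.erase w, τ Fh v * Fh v ≤ 0 :=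
    Finset.sum_nonpos fun v _ => mul_nonpos_of_nonneg_of_nonpos (hτ0 _ _) (hle v)
  have hsplit : τ Fh w * Fh w + ∑ v ∈ Finset.univ.erase w, τ Fh v * Fh v
      = ∑ v, τ Fh v * Fh v :=
    Finset.add_sum_erase _ (fun v => τ Fh v * Fh v) (Finset.mem_univ w)
  rw [hSeq] at hsplit
  linarith

lemma auxL2 (τ : (V → ℝ) → V → ℝ) (K : NNReal) (hlip : LipschitzWith K τ)
    (hτ0 : ∀ G v, 0 ≤ τ G v)
    (hac : ∀ G : V → ℝ, (∃ v, 0 < G v) → 0 < ∑ v, τ G v * G v)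
    (Fh : V → ℝ) (hle : ∀ w, Fh w ≤ 0) (u v : V) (huv : u ≠ v)
    (hu : Fh u = 0) (hv : Fh v = 0) : τ Fh v = 0 := by
  classical
  by_contra ht
  obtain ⟨t, htdef⟩ : ∃ x, x = τ Fh v := ⟨_, rfl⟩
  obtain ⟨a, hadef⟩ : ∃ x, x = τ Fh u := ⟨_, rfl⟩
  have htpos : 0 < t := htdef ▸ lt_of_le_of_ne (hτ0 _ _) (Ne.symm ht)
  have ha0 : 0 ≤ a := hadef ▸ hτ0 _ _
  have hK0 : (0:ℝ) ≤ K := K.2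
  obtain ⟨M, hM⟩ : ∃ x, x = 2 * (a + 1) / t + 1 := ⟨_, rfl⟩
  have hM1 : 1 ≤ M := by
    have h : 0 ≤ 2 * (a + 1) / t := div_nonneg (by linarith) htpos.le
    rw [hM]; linarith
  have hM0 : (0:ℝ) ≤ M := by linarith
  have hd0 : (0:ℝ) < 2 * (K * M + 1) := by positivity
  obtain ⟨δ, hδdef⟩ : ∃ x, x = t / (2 * (K * M + 1)) := ⟨_, rfl⟩
  have hδ : 0 < δ := hδdef ▸ div_pos htpos hd0
  have hKMδ : K * M * δ ≤ t / 2 := by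
    have h1 : (K * M + 1) * δ = t / 2 := by
      rw [hδdef]; field_simp
    nlinarith
  obtain ⟨G, hG⟩ : ∃ x : V → ℝ,
      x = fun w => Fh w + (if w = u then δ else 0) + (if w = v then -(M * δ) else 0) :=
    ⟨_, rfl⟩
  have hGu : G u = δ := by rw [hG]; simp [hu, huv]
  have hGv : G v = -(M * δ) := by rw [hG]; simp [hv, Ne.symm huv]
  have hMδ0 : (0:ℝ) ≤ M * δ := mul_nonneg hM0 hδ.le
  have hdist : dist G Fh ≤ M * δ := by
    rw [dist_pi_le_iff hMδ0]
    intro i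
    simp only [hG, Real.dist_eq]
    by_cases h1 : i = u
    · subst h1
      rw [if_pos rfl, if_neg huv]
      have he : Fh i + δ + 0 - Fh i = δ := by ring
      rw [he, abs_of_nonneg hδ.le]
      nlinarith
    · by_cases h2 : i = v
      · subst h2
        rw [if_neg h1, if_pos rfl]
        have he : Fh i + 0 + -(M * δ) - Fh i = -(M * δ) := by ring
        rw [he, abs_neg, abs_of_nonneg hMδ0]
      · rw [if_neg h1, if_neg h2]
        have he : Fh i + 0 + 0 - Fh i = 0 := by ring
        rw [he, abs_zero]; exact hMδ0
  have hdw : ∀ w, |τ G w - τ Fh w| ≤ K * (M * δ) := by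
    intro w
    have h1 : dist (τ G w) (τ Fh w) ≤ dist (τ G) (τ Fh) := dist_le_pi_dist _ _ w
    have h2 : dist (τ G) (τ Fh) ≤ K * dist G Fh := hlip.dist_le_mul G Fh
    have h3 : (K:ℝ) * dist G Fh ≤ K * (M * δ) := mul_le_mul_of_nonneg_left hdist hK0
    rw [Real.dist_eq] at h1
    linarith
  have hpos : 0 < ∑ w, τ G w * G w := hac G ⟨u, by rw [hGu]; exact hδ⟩
  have hbound : ∑ w, τ G w * G w ≤ τ G u * δ + τ G v * (-(M * δ)) := by
    have hterm : ∀ w ∈ Finset.univ, τ G w * G w ≤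
        (if w = u then τ G u * δ else 0) + (if w = v then τ G v * (-(M * δ)) else 0) := by
      intro w _
      by_cases h1 : w = u
      · subst h1
        rw [if_pos rfl, if_neg huv, hGu]
        linarith
      · by_cases h2 : w = v
        · subst h2
          rw [if_neg h1, if_pos rfl, hGv]
          linarith
        · rw [if_neg h1, if_neg h2]
          have hGw : G w = Fh w := by rw [hG]; simp [h1, h2]
          rw [hGw]
          simpa using mul_nonpos_of_nonneg_of_nonpos (hτ0 _ _) (hle w)
    calc ∑ w, τ G w * G w
        ≤ ∑ w, ((if w = u then τ G u * δ else 0) + (if w = v then τ G v * (-(M * δ)) else 0)) :=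
          Finset.sum_le_sum hterm
      _ = τ G u * δ + τ G v * (-(M * δ)) := by
          rw [Finset.sum_add_distrib, Finset.sum_ite_eq', Finset.sum_ite_eq']
          simp
  obtain ⟨B, hB⟩ : ∃ x : ℝ, x = (K : ℝ) * (M * δ) := ⟨_, rfl⟩
  have hdu : τ G u ≤ a + B := by
    have := (abs_le.mp (hdw u)).2; rw [hB, hadef]; linarith
  have hdv2 : t - B ≤ τ G v := by
    have := (abs_le.mp (hdw v)).1; rw [htdef] at *; rw [hB]; linarith
  have hB2 : 2 * B ≤ t := by rw [hB]; nlinarith [hKMδ]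
  have h6 : M * δ * τ G v < δ * τ G u := by nlinarith [hpos, hbound]
  have h6' : M * τ G v < τ G u :=
    (mul_lt_mul_iff_right₀ hδ).mp (by nlinarith [h6])
  have h7 : M * (t - B) ≤ M * τ G v := mul_le_mul_of_nonneg_left hdv2 hM0
  have h12 : M * (t - B) = M * t - M * B := by ring
  have h10 : M * (2 * B) ≤ M * t := mul_le_mul_of_nonneg_left hB2 hM0
  have h11 : M * (2 * B) = 2 * (M * B) := by ring
  have hMt : M * t = 2 * (a + 1) + t := by
    rw [hM]; field_simp
  linarith

end Aux


variable {C : Type*} {S U : C → Type*}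

/-- If every class uses an imitative-via-comparison, excess payoff, or
pairwise comparison revision protocol, then every MSNE is a rest point of the mean dynamic. -/
theorem stmt12 [Fintype C] [Nonempty C]
    [∀ c, Fintype (S c)] [∀ c, Nonempty (S c)]
    [∀ c, Fintype (U c)] [∀ c, Nonempty (U c)]
    (m lam : C → ℝ) (hm : ∀ c, 0 < m c) (hlam : ∀ c, 0 < lam c)
    (φ : (c : C) → U c → Matrix (S c) (S c) ℝ)
    (hφ0 : ∀ c (u : U c) s s', 0 ≤ φ c u s s')
    (hφ1 : ∀ c (u : U c) s', ∑ s, φ c u s s' = 1)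
    (η : (c : C) → U c → S c → ℝ)
    (hη0 : ∀ c (u : U c) s, 0 ≤ η c u s)
    (hη1 : ∀ c (u : U c), ∑ s, η c u s = 1)
    (hηst : ∀ c (u : U c) s, ∑ s', φ c u s s' * η c u s' = η c u s)
    (F : (c : C) → ((c' : C) → S c' → U c' → ℝ) → U c → ℝ)
    (ρ : (c : C) → (U c → ℝ) → (U c → ℝ) → U c → U c → ℝ)
    (hρ0 : ∀ c F' σ, σ ∈ simplexSet (m c) → ∀ u v, 0 ≤ ρ c F' σ u v)
    (hρ : ∀ c, IsImitativeViaComparison (m c) (ρ c) ∨ IsExcessPayoff (m c) (ρ c) ∨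
        IsPairwiseComparison (m c) (ρ c))
    (μ : (c : C) → S c → U c → ℝ) (hμX : MemX m μ) (hMSNE : IsMSNE F η μ) :
    ∀ c (s : S c) (u : U c), fdFlow lam φ μ c s u + frFlow F ρ μ c s u = 0 := by
  intro c s u
  obtain ⟨hμ0, hμsum⟩ := hμX c
  set σ : U c → ℝ := fun v => ∑ s', μ c s' v with hσdef
  have hσ0 : ∀ v, 0 ≤ σ v := fun v => Finset.sum_nonneg fun s' _ => hμ0 s' v
  have hσsum : ∑ v, σ v = m c := by
    rw [hσdef, ← hμsum]
    exact (Finset.sum_comm).symm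
  have hσmem : σ ∈ simplexSet (m c) := ⟨hσ0, hσsum⟩
  have hμeq : ∀ (s' : S c) (v : U c), μ c s' v = η c v s' * σ v := fun s' v =>
    (hMSNE c v).2 s'
  have hμσpos : ∀ (s' : S c) (v : U c), μ c s' v ≠ 0 → 0 < σ v := by
    intro s' v h
    have h1 : 0 < μ c s' v := lt_of_le_of_ne (hμ0 s' v) (Ne.symm h)
    have h2 : μ c s' v ≤ σ v :=
      Finset.single_le_sum (fun i _ => hμ0 i v) (Finset.mem_univ s')
    linarith
  have hopt : ∀ v, 0 < σ v → ∀ w, F c μ w ≤ F c μ v := fun v hv => (hMSNE c v).1 hv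
  -- Key: off-diagonal revision terms vanish at the MSNE.
  have hkey : ∀ (s' : S c) (v w : U c), v ≠ w →
      μ c s' v * ρ c (F c μ) σ v w = 0 := by
    intro s' v w hvw
    rcases eq_or_ne (μ c s' v) 0 with h | h
    · rw [h, zero_mul]
    have hσv : 0 < σ v := hμσpos s' v h
    have hFv : ∀ x, F c μ x ≤ F c μ v := hopt v hσv
    rcases hρ c with ⟨r, _, hr0, _, hsign, hform⟩ | hEP | ⟨τ, _, hτ0, hsign, hform⟩
    · -- imitative via comparison
      rw [hform _ _ hσmem]
      have hr : r (F c μ) σ v w = 0 := by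
        have hs := hsign (F c μ) σ hσmem v w
        rw [max_eq_left (by linarith [hFv w]), Real.sign_zero] at hs
        exact Real.sign_eq_zero_iff.mp hs
      rw [hr]
      ring
    · -- excess payoff
      obtain ⟨τ, ⟨K, hlip⟩, hτ0, hac, hform⟩ := hEP
      rw [hform _ _ hσmem]
      have hmc : m c ≠ 0 := (hm c).ne'
      have havg : ∑ w'', F c μ w'' * σ w'' = F c μ v * m c := by
        rw [← hσsum, Finset.mul_sum]
        refine Finset.sum_congr rfl fun x _ => ?_
        rcases (hσ0 x).eq_or_lt with h0 | hposx
        · rw [← h0, mul_zero, mul_zero]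
        · rw [le_antisymm (hFv x) (hopt x hposx v)]
      have hFh_le : ∀ w', F c μ w' - (∑ w'', F c μ w'' * σ w'') / m c ≤ 0 := by
        intro w'
        rw [havg, mul_div_assoc, div_self hmc, mul_one]
        linarith [hFv w']
      have hFhv : F c μ v - (∑ w'', F c μ w'' * σ w'') / m c = 0 := by
        rw [havg, mul_div_assoc, div_self hmc, mul_one, sub_self]
      have hτw : τ (fun w' => F c μ w' - (∑ w'', F c μ w'' * σ w'') / m c) w = 0 := by
        rcases (hFh_le w).lt_or_eq with hlt | heq
        · exact auxL1 τ K hlip hτ0 hac _ hFh_le v hFhv w hlt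
        · exact auxL2 τ K hlip hτ0 hac _ hFh_le v w hvw hFhv heq
      rw [hτw, mul_zero]
    · -- pairwise comparison
      rw [hform _ _ hσmem]
      have hτw : τ (F c μ) v w = 0 := by
        have hs := hsign (F c μ) v w
        rw [max_eq_left (by linarith [hFv w]), Real.sign_zero] at hs
        exact Real.sign_eq_zero_iff.mp hs
      rw [hτw, mul_zero]
  have hfd : fdFlow lam φ μ c s u = 0 := by
    unfold fdFlow
    have h1 : ∑ s', φ c u s s' * μ c s' u = η c u s * σ u := by
      calc ∑ s', φ c u s s' * μ c s' u
          = ∑ s', φ c u s s' * (η c u s' * σ u) := by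
            refine Finset.sum_congr rfl fun x _ => ?_
            rw [hμeq x u]
        _ = (∑ s', φ c u s s' * η c u s') * σ u := by
            rw [Finset.sum_mul]
            refine Finset.sum_congr rfl fun x _ => ?_
            ring
        _ = η c u s * σ u := by rw [hηst c u s]
    rw [h1, hμeq s u]
    ring
  have hfr : frFlow F ρ μ c s u = 0 := by
    unfold frFlow
    rw [← hσdef]
    have e1 : ∑ u', μ c s u' * ρ c (F c μ) σ u' u = μ c s u * ρ c (F c μ) σ u u := by
      refine Finset.sum_eq_single u (fun b _ hb => hkey s b u hb) (fun h => ?_)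
      exact absurd (Finset.mem_univ u) h
    have e2 : μ c s u * ∑ u', ρ c (F c μ) σ u u' = μ c s u * ρ c (F c μ) σ u u := by
      rw [Finset.mul_sum]
      refine Finset.sum_eq_single u (fun b _ hb => hkey s u b (Ne.symm hb)) (fun h => ?_)
      exact absurd (Finset.mem_univ u) h
    rw [e1, e2, sub_self]
  rw [hfd, hfr, add_zero]
end
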